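/- arXiv:1812.05310 — 5 statements merged into one kernel-verified Lean document; each statement's English description precedes it below -/
import Mathlib

section
/- Let p₀ be a positive integer and γ₀ ∈ ℝ with p₀ − 2 > γ₀ > 4, let p ≥ 1 be real, s₀ ≥ 0, δ₁ > 0, K ≥ 0, and let v : [s₀, s₀ + δ₁] → Ω → ℝ be a jointly measurable stochastic process on a probability space (Ω, F, P) such that E[|v(t) − v(s)|^{2p₀p}] ≤ K |t − s|^{p₀ p / 2} for all t, s ∈ [s₀, s₀ + δ₁]. For r ∈ [s₀, s₀ + δ₁] define Y_r(ω) := ∫_{s₀}^{r} ∫_{s₀}^{r} (v(t)(ω) − v(s)(ω))^{2p₀} |t − s|^{−γ₀/2} ds dt. Then for all r ∈ [s₀, s₀ + δ₁], E[|Y_r|^p] ≤ K (r − s₀)^{2p} δ₁^{(p₀ − γ₀)p/2}. -/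
/-!
By Hölder on the square `[s₀, r]²`, `Y_r ^ p ≤ (r - s₀) ^ (2 (p - 1)) ∫∫ f(t, s) ^ p`, where `f` is
the integrand. Tonelli moves the expectation inside, and off the diagonal (a null set) the moment
bound gives `E[f(t, s) ^ p] ≤ K |t - s| ^ ((p₀ - γ₀) p / 2) ≤ K δ₁ ^ ((p₀ - γ₀) p / 2)`, since
`γ₀ ≤ p₀`. Integrating this constant over the square supplies the remaining `(r - s₀) ^ 2`.
-/
open MeasureTheory Set Real
open scoped ENNReal

lemma lintegral_rpow_le_measure_univ_rpow_mul {α : Type*} [MeasurableSpace α] {μ : Measure α}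
    {f : α → ℝ≥0∞} (hf : AEMeasurable f μ) {p : ℝ} (hp : 1 ≤ p) :
    (∫⁻ a, f a ∂μ) ^ p ≤ μ univ ^ (p - 1) * ∫⁻ a, f a ^ p ∂μ := by
  have hp0 : 0 < p := one_pos.trans_le hp
  have h := eLpNorm'_le_eLpNorm'_mul_rpow_measure_univ one_pos hp hf.aestronglyMeasurable
  simp only [eLpNorm'_eq_lintegral_enorm, enorm_eq_self, ENNReal.rpow_one, div_one] at h
  calc (∫⁻ a, f a ∂μ) ^ p
      ≤ ((∫⁻ a, f a ^ p ∂μ) ^ (1 / p) * μ univ ^ (1 - 1 / p)) ^ p := by gcongr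
    _ = μ univ ^ (p - 1) * ∫⁻ a, f a ^ p ∂μ := by
      rw [ENNReal.mul_rpow_of_nonneg _ _ hp0.le, ← ENNReal.rpow_mul, ← ENNReal.rpow_mul,
        one_div_mul_cancel hp0.ne', ENNReal.rpow_one, mul_comm, sub_mul,
        one_div_mul_cancel hp0.ne', one_mul]

lemma ae_fst_ne_snd {α : Type*} [MeasurableSpace α] [MeasurableEq α] {μ ν : Measure α}
    [SFinite ν] [NullSingletonClass ν] : ∀ᵐ q ∂μ.prod ν, q.1 ≠ q.2 := by
  rw [Measure.ae_prod_iff_ae_ae (p := fun q : α × α => q.1 ≠ q.2) measurableSet_diagonal.compl]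
  exact Filter.Eventually.of_forall fun t => ν.ae_ne t |>.mono fun s hs => hs.symm

lemma lintegral_rpow_lintegral_le {α Ω : Type*} [MeasurableSpace α] [MeasurableSpace Ω]
    (μ : Measure α) [SFinite μ] (P : Measure Ω) [SFinite P] {F : α → Ω → ℝ≥0∞}
    (hF : Measurable (Function.uncurry F)) {p : ℝ} (hp : 1 ≤ p) {C : ℝ≥0∞}
    (hC : ∀ᵐ a ∂μ, ∫⁻ ω, F a ω ^ p ∂P ≤ C) :
    ∫⁻ ω, (∫⁻ a, F a ω ∂μ) ^ p ∂P ≤ μ univ ^ p * C := by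
  have hFω (ω : Ω) : Measurable (F · ω) := hF.comp (measurable_id.prodMk measurable_const)
  calc ∫⁻ ω, (∫⁻ a, F a ω ∂μ) ^ p ∂P
      ≤ ∫⁻ ω, μ univ ^ (p - 1) * ∫⁻ a, F a ω ^ p ∂μ ∂P :=
        lintegral_mono fun ω => lintegral_rpow_le_measure_univ_rpow_mul (hFω ω).aemeasurable hp
    _ = μ univ ^ (p - 1) * ∫⁻ a, ∫⁻ ω, F a ω ^ p ∂P ∂μ := by
        have hm : Measurable fun ω => ∫⁻ a, F a ω ^ p ∂μ := (hF.pow_const p).lintegral_prod_left'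
        rw [lintegral_const_mul _ hm,
          lintegral_lintegral_swap ((hF.comp measurable_swap).pow_const p).aemeasurable]
    _ ≤ μ univ ^ (p - 1) * ∫⁻ _, C ∂μ := mul_right_mono (lintegral_mono_ae hC)
    _ = μ univ ^ p * C := by
        have hsplit : μ univ ^ p = μ univ ^ (p - 1) * μ univ := by
          simpa using ENNReal.rpow_add_of_nonneg (x := μ univ) (p - 1) 1 (by linarith) zero_le_one
        rw [lintegral_const, hsplit]
        ring

lemma pow_two_mul_div_rpow_rpow {x h : ℝ} (hh : 0 < h) (n : ℕ) {γ p : ℝ} :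
    (x ^ (2 * n) / h ^ (γ / 2)) ^ p = h ^ (-(γ * p / 2)) * |x| ^ (2 * n * p) := by
  rw [← Even.pow_abs (even_two_mul n),
    Real.div_rpow (pow_nonneg (abs_nonneg x) _) (rpow_nonneg hh.le _), ← Real.rpow_natCast,
    ← Real.rpow_mul (abs_nonneg x), ← Real.rpow_mul hh.le, Real.rpow_neg hh.le]
  push_cast
  ring_nf

lemma lintegral_ofReal_pow_div_rpow_rpow_le {Ω : Type*} [MeasurableSpace Ω] {P : Measure Ω}
    {X : Ω → ℝ} {n : ℕ} {γ p h δ K : ℝ} (hp : 0 ≤ p) (hγ : γ ≤ n) (hK : 0 ≤ K)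
    (hh : 0 < h) (hhδ : h ≤ δ)
    (hX : ∫⁻ ω, ENNReal.ofReal (|X ω| ^ (2 * (n : ℝ) * p)) ∂P ≤
      ENNReal.ofReal (K * h ^ ((n : ℝ) * p / 2))) :
    ∫⁻ ω, ENNReal.ofReal (X ω ^ (2 * n) / h ^ (γ / 2)) ^ p ∂P ≤
      ENNReal.ofReal (K * δ ^ (((n : ℝ) - γ) * p / 2)) := by
  have hpt (ω : Ω) : ENNReal.ofReal (X ω ^ (2 * n) / h ^ (γ / 2)) ^ p =
      ENNReal.ofReal (h ^ (-(γ * p / 2))) * ENNReal.ofReal (|X ω| ^ (2 * (n : ℝ) * p)) := by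
    rw [ENNReal.ofReal_rpow_of_nonneg
      (div_nonneg (Even.pow_nonneg (even_two_mul n) _) (rpow_nonneg hh.le _)) hp,
      pow_two_mul_div_rpow_rpow hh, ENNReal.ofReal_mul (by positivity)]
  calc ∫⁻ ω, ENNReal.ofReal (X ω ^ (2 * n) / h ^ (γ / 2)) ^ p ∂P
      = ENNReal.ofReal (h ^ (-(γ * p / 2))) *
          ∫⁻ ω, ENNReal.ofReal (|X ω| ^ (2 * (n : ℝ) * p)) ∂P := by
        simp_rw [hpt]; exact lintegral_const_mul' _ _ ENNReal.ofReal_ne_top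
    _ ≤ ENNReal.ofReal (h ^ (-(γ * p / 2))) * ENNReal.ofReal (K * h ^ ((n : ℝ) * p / 2)) := by
        gcongr
    _ = ENNReal.ofReal (K * h ^ (((n : ℝ) - γ) * p / 2)) := by
        rw [← ENNReal.ofReal_mul (by positivity), mul_left_comm, ← Real.rpow_add hh]
        ring_nf
    _ ≤ ENNReal.ofReal (K * δ ^ (((n : ℝ) - γ) * p / 2)) := by
        gcongr

lemma volume_restrict_Icc_prod_univ (a b : ℝ) :
    ((volume.restrict (Icc a b)).prod (volume.restrict (Icc a b))) univ
      = ENNReal.ofReal (b - a) ^ 2 := by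
  rw [← univ_prod_univ, Measure.prod_prod, Measure.restrict_apply_univ, Real.volume_Icc, sq]

theorem stmt3_general {Ω : Type*} [MeasurableSpace Ω] (P : Measure Ω) [IsProbabilityMeasure P]
    (p₀ : ℕ) (γ₀ : ℝ) (h1 : γ₀ < (p₀ : ℝ) - 2)
    (p : ℝ) (hp : 1 ≤ p) (s₀ : ℝ) (δ₁ : ℝ)
    (K : ℝ) (hK : 0 ≤ K) (v : ℝ → Ω → ℝ)
    (hmeas : Measurable (fun q : ℝ × Ω => v q.1 q.2))
    (hmom : ∀ t ∈ Icc s₀ (s₀ + δ₁), ∀ s ∈ Icc s₀ (s₀ + δ₁),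
      ∫⁻ ω, ENNReal.ofReal (|v t ω - v s ω| ^ (2 * (p₀ : ℝ) * p)) ∂P ≤
        ENNReal.ofReal (K * |t - s| ^ ((p₀ : ℝ) * p / 2))) :
    ∀ r ∈ Icc s₀ (s₀ + δ₁),
      ∫⁻ ω, (∫⁻ t in Icc s₀ r, ∫⁻ s in Icc s₀ r,
          ENNReal.ofReal ((v t ω - v s ω) ^ (2 * p₀) / |t - s| ^ (γ₀ / 2))) ^ p ∂P ≤
        ENNReal.ofReal (K * (r - s₀) ^ (2 * p) * δ₁ ^ (((p₀ : ℝ) - γ₀) * p / 2)) := by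
  intro r ⟨hs₀r, hrδ₁⟩
  set I := Icc s₀ r
  set μ := (volume.restrict I).prod (volume.restrict I)
  set G : ℝ × ℝ → Ω → ℝ≥0∞ := fun q ω =>
    ENNReal.ofReal ((v q.1 ω - v q.2 ω) ^ (2 * p₀) / |q.1 - q.2| ^ (γ₀ / 2))
  have hG : Measurable (Function.uncurry G) := by fun_prop
  have hY (ω : Ω) : ∫⁻ t in I, ∫⁻ s in I,
      ENNReal.ofReal ((v t ω - v s ω) ^ (2 * p₀) / |t - s| ^ (γ₀ / 2)) = ∫⁻ q, G q ω ∂μ :=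
    (lintegral_prod _ (hG.comp (measurable_id.prodMk measurable_const)).aemeasurable).symm
  have hmoment : ∀ᵐ q ∂μ, ∫⁻ ω, G q ω ^ p ∂P ≤
      ENNReal.ofReal (K * δ₁ ^ (((p₀ : ℝ) - γ₀) * p / 2)) := by
    have hI : ∀ᵐ q ∂μ, q ∈ I ×ˢ I := by
      rw [show μ = _ from Measure.prod_restrict I I]
      exact ae_restrict_mem (measurableSet_Icc.prod measurableSet_Icc)
    filter_upwards [hI, ae_fst_ne_snd] with q ⟨ht, hs⟩ hts
    have hsub : I ⊆ Icc s₀ (s₀ + δ₁) := Icc_subset_Icc le_rfl hrδ₁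
    refine lintegral_ofReal_pow_div_rpow_rpow_le (by linarith) (by linarith) hK
      (abs_pos.mpr (sub_ne_zero.mpr hts)) ?_ (hmom _ (hsub ht) _ (hsub hs))
    rw [abs_sub_le_iff]
    constructor <;> linarith [ht.1, ht.2, hs.1, hs.2]
  calc _ = ∫⁻ ω, (∫⁻ q, G q ω ∂μ) ^ p ∂P := by simp_rw [hY]
    _ ≤ μ univ ^ p * ENNReal.ofReal (K * δ₁ ^ (((p₀ : ℝ) - γ₀) * p / 2)) :=
      lintegral_rpow_lintegral_le μ P hG hp hmoment
    _ = _ := by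
      rw [volume_restrict_Icc_prod_univ, ← ENNReal.ofReal_pow (sub_nonneg.mpr hs₀r),
        ENNReal.ofReal_rpow_of_nonneg (by positivity) (by linarith),
        ← ENNReal.ofReal_mul (by positivity), ← Real.rpow_natCast,
        ← Real.rpow_mul (sub_nonneg.mpr hs₀r)]
      ring_nf

/-- Lemma 3.5(a) of the paper: moment bound for
`Y_r = ∫_{[s₀,r]²} (v t - v s)^{2p₀} / |t-s|^{γ₀/2} ds dt`, for any jointly measurable process
`v` on `[s₀, s₀+δ₁]` with `E[|v t - v s|^{2p₀p}] ≤ K |t-s|^{p₀p/2}`. -/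
theorem stmt3 {Ω : Type*} [MeasurableSpace Ω] (P : Measure Ω) [IsProbabilityMeasure P]
    (p₀ : ℕ) (hp₀ : 0 < p₀) (γ₀ : ℝ) (h1 : γ₀ < (p₀ : ℝ) - 2) (h2 : 4 < γ₀)
    (p : ℝ) (hp : 1 ≤ p) (s₀ : ℝ) (hs₀ : 0 ≤ s₀) (δ₁ : ℝ) (hδ₁ : 0 < δ₁)
    (K : ℝ) (hK : 0 ≤ K) (v : ℝ → Ω → ℝ)
    (hmeas : Measurable (fun q : ℝ × Ω => v q.1 q.2))
    (hmom : ∀ t ∈ Icc s₀ (s₀ + δ₁), ∀ s ∈ Icc s₀ (s₀ + δ₁),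
      ∫⁻ ω, ENNReal.ofReal (|v t ω - v s ω| ^ (2 * (p₀ : ℝ) * p)) ∂P ≤
        ENNReal.ofReal (K * |t - s| ^ ((p₀ : ℝ) * p / 2))) :
    ∀ r ∈ Icc s₀ (s₀ + δ₁),
      ∫⁻ ω, (∫⁻ t in Icc s₀ r, ∫⁻ s in Icc s₀ r,
          ENNReal.ofReal ((v t ω - v s ω) ^ (2 * p₀) / |t - s| ^ (γ₀ / 2))) ^ p ∂P ≤
        ENNReal.ofReal (K * (r - s₀) ^ (2 * p) * δ₁ ^ (((p₀ : ℝ) - γ₀) * p / 2)) :=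
  stmt3_general P p₀ γ₀ h1 p hp s₀ δ₁ K hK v hmeas hmom
end

section
/- Let θ ∈ (0, 1/2) and set θ₁ := 1/2 − θ, θ₂ := 2θ. Let p₀ be a positive integer and γ₀, γ₁, γ₂ reals with p₀ − 2 > γ₀ > 4, 1/(2p₀) < γ₁ < θ₁/2 − 1/(2p₀), 1/(2p₀) < γ₂ < θ₂/2 − 1/(2p₀), and 2γ₁ + γ₂ = (γ₀ − 1)/(2p₀). Let y₀ ∈ [0,1] and δ₁, δ₂ > 0 with y₀ + δ₂ ≤ 1, and set δ := δ₁^{1/2} + δ₂, Δ• := δ², Δ* := min(δ, 1 − y₀). Let p ≥ 1 be real and K ≥ 0, and let u : [0, Δ•] × [y₀, y₀ + Δ*] → Ω → ℝ be a jointly measurable random field on a probability space such that E[|u(t, y₀) − u(s, y₀)|^{2p₀p}] ≤ K |t − s|^{p₀p/2} for all t, s, and E[|u(t,x) + u(s,y) − u(t,y) − u(s,x)|^{2p₀p}] ≤ K |t − s|^{p₀pθ₁} |x − y|^{p₀pθ₂} for all (t,s,x,y). For r ∈ [0, Δ•] define Ȳ_r := ∫_{[0,r]²} (u(t,y₀)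 − u(s,y₀))^{2p₀} / |t − s|^{γ₀/2} ds dt + ∫_{[0,r]²} ∫_{[y₀, y₀+Δ*]²} (u(t,x) + u(s,y) − u(t,y) − u(s,x))^{2p₀} / (|t − s|^{1 + 2p₀γ₁} |x − y|^{1 + 2p₀γ₂}) dx dy dt ds. Then there is a constant c, depending only on p, such that for all r ∈ [0, Δ•], E[|Ȳ_r|^p] ≤ c K r^{2p} δ^{p(p₀ − γ₀)}. -/
open MeasureTheory Set Real
open scoped ENNReal

lemma my_jensen {α : Type*} [MeasurableSpace α] (μ : Measure α) {g : α → ℝ≥0∞}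
    (hg : AEMeasurable g μ) {p : ℝ} (hp : 1 ≤ p) :
    (∫⁻ a, g a ∂μ) ^ p ≤ (μ Set.univ) ^ (p - 1) * ∫⁻ a, g a ^ p ∂μ := by
  rcases eq_or_lt_of_le hp with h | h
  · simp [← h]
  have hp0 : (0:ℝ) < p := lt_trans one_pos h
  set q : ℝ := p / (p - 1) with hq
  have hpq : p.HolderConjugate q := Real.HolderConjugate.conjExponent h
  have h1 : ∫⁻ a, g a ∂μ ≤ (∫⁻ a, g a ^ p ∂μ) ^ (1/p) * (μ Set.univ) ^ (1/q) := by
    have := ENNReal.lintegral_mul_le_Lp_mul_Lq μ hpq hg (aemeasurable_const (b := (1:ℝ≥0∞)))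
    simpa using this
  calc (∫⁻ a, g a ∂μ) ^ p
      ≤ ((∫⁻ a, g a ^ p ∂μ) ^ (1/p) * (μ Set.univ) ^ (1/q)) ^ p :=
        ENNReal.rpow_le_rpow h1 hp0.le
    _ = (∫⁻ a, g a ^ p ∂μ) ^ ((1/p) * p) * (μ Set.univ) ^ ((1/q) * p) := by
        rw [ENNReal.mul_rpow_of_nonneg _ _ hp0.le, ← ENNReal.rpow_mul, ← ENNReal.rpow_mul]
    _ = (μ Set.univ) ^ (p - 1) * ∫⁻ a, g a ^ p ∂μ := by
        rw [one_div_mul_cancel hp0.ne', ENNReal.rpow_one, mul_comm]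
        congr 1
        rw [hq]
        field_simp

lemma my_key2 {α Ω : Type*} [MeasurableSpace α] [MeasurableSpace Ω]
    (μ : Measure α) [SFinite μ] (P : Measure Ω) [SFinite P]
    (hμ : μ Set.univ ≠ ⊤)
    {f : α → α → Ω → ℝ≥0∞}
    (hf : Measurable (fun q : α × α × Ω => f q.1 q.2.1 q.2.2))
    {p : ℝ} (hp : 1 ≤ p) :
    ∫⁻ ω, (∫⁻ t, ∫⁻ s, f t s ω ∂μ ∂μ) ^ p ∂P ≤
      ((μ Set.univ) ^ (p - 1) * (μ Set.univ) ^ (p - 1)) *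
        ∫⁻ t, ∫⁻ s, (∫⁻ ω, (f t s ω) ^ p ∂P) ∂μ ∂μ := by
  have hp1 : (0:ℝ) ≤ p - 1 := by linarith
  set m : ℝ≥0∞ := (μ Set.univ) ^ (p - 1) with hm
  have hmt : m ≠ ⊤ := ENNReal.rpow_ne_top_of_nonneg hp1 hμ
  have step : ∀ ω, (∫⁻ t, ∫⁻ s, f t s ω ∂μ ∂μ) ^ p ≤
      (m * m) * ∫⁻ t, ∫⁻ s, (f t s ω) ^ p ∂μ ∂μ := by
    intro ω
    have hsec : Measurable (fun q : α × α => f q.1 q.2 ω) := by fun_prop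
    have hG : Measurable (fun t => ∫⁻ s, f t s ω ∂μ) := hsec.lintegral_prod_right'
    calc (∫⁻ t, ∫⁻ s, f t s ω ∂μ ∂μ) ^ p
        ≤ m * ∫⁻ t, (∫⁻ s, f t s ω ∂μ) ^ p ∂μ := my_jensen μ hG.aemeasurable hp
      _ ≤ m * ∫⁻ t, m * ∫⁻ s, (f t s ω) ^ p ∂μ ∂μ := by
          refine mul_le_mul_right (lintegral_mono fun t => ?_) m
          have hsec2 : Measurable (fun s => f t s ω) := by fun_prop
          exact my_jensen μ hsec2.aemeasurable hp
      _ = (m * m) * ∫⁻ t, ∫⁻ s, (f t s ω) ^ p ∂μ ∂μ := by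
          rw [lintegral_const_mul' _ _ hmt, mul_assoc]
  calc ∫⁻ ω, (∫⁻ t, ∫⁻ s, f t s ω ∂μ ∂μ) ^ p ∂P
      ≤ ∫⁻ ω, (m * m) * ∫⁻ t, ∫⁻ s, (f t s ω) ^ p ∂μ ∂μ ∂P := lintegral_mono step
    _ = (m * m) * ∫⁻ ω, ∫⁻ t, ∫⁻ s, (f t s ω) ^ p ∂μ ∂μ ∂P :=
        lintegral_const_mul' _ _ (ENNReal.mul_ne_top hmt hmt)
    _ = (m * m) * ∫⁻ t, ∫⁻ s, (∫⁻ ω, (f t s ω) ^ p ∂P) ∂μ ∂μ := by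
        congr 1
        rw [lintegral_lintegral_swap (f := fun (ω : Ω) (t : α) => ∫⁻ s, (f t s ω) ^ p ∂μ)
          (Measurable.lintegral_prod_right'
            (f := fun w : (Ω × α) × α => (f w.1.2 w.2 w.1.1) ^ p) (by fun_prop)).aemeasurable]
        refine lintegral_congr fun t => ?_
        exact lintegral_lintegral_swap (f := fun (ω : Ω) (s : α) => (f t s ω) ^ p)
          (by fun_prop : Measurable (fun w : Ω × α => (f t w.2 w.1) ^ p)).aemeasurable

lemma my_addpow (a b : ℝ≥0∞) {p : ℝ} (hp : 0 ≤ p) :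
    (a + b) ^ p ≤ (2:ℝ≥0∞) ^ p * (a ^ p + b ^ p) := by
  have key : ∀ x y : ℝ≥0∞, x ≤ y → (x + y) ^ p ≤ 2 ^ p * (x ^ p + y ^ p) := by
    intro x y h
    have h1 : (x + y) ^ p ≤ (2 * y) ^ p := by
      refine ENNReal.rpow_le_rpow ?_ hp
      rw [two_mul]
      exact add_le_add_left h y
    have h2 : (2 * y : ℝ≥0∞) ^ p = 2 ^ p * y ^ p := ENNReal.mul_rpow_of_nonneg _ _ hp
    calc (x + y) ^ p ≤ 2 ^ p * y ^ p := h2 ▸ h1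
      _ ≤ 2 ^ p * (x ^ p + y ^ p) := mul_le_mul_right le_add_self _
  rcases le_total a b with h | h
  · exact key a b h
  · have := key b a h
    rwa [add_comm, add_comm (b ^ p)] at this

set_option maxHeartbeats 2000000 in
/-- Lemma 3.5(b) of the paper: moment bound `E[|Ȳ_r|^p] ≤ c K r^{2p} δ^{p(p₀-γ₀)}`, with a
constant `c` depending only on `p`, for the random variables
`Ȳ_r = Y₀(r) + Y₁(r)` built from temporal increments at `y₀` and rectangular increments,
for any jointly measurable random field satisfying the corresponding moment bounds. -/
theorem stmt4 (p : ℝ) (hp : 1 ≤ p) :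
    ∃ c : ℝ, 0 < c ∧
    ∀ (θ : ℝ), 0 < θ → θ < 1/2 →
    ∀ (p₀ : ℕ) (γ₀ γ₁ γ₂ : ℝ), 0 < p₀ → 4 < γ₀ → γ₀ < (p₀ : ℝ) - 2 →
      1 / (2 * (p₀ : ℝ)) < γ₁ → γ₁ < (1/2 - θ) / 2 - 1 / (2 * (p₀ : ℝ)) →
      1 / (2 * (p₀ : ℝ)) < γ₂ → γ₂ < (2 * θ) / 2 - 1 / (2 * (p₀ : ℝ)) →
      2 * γ₁ + γ₂ = (γ₀ - 1) / (2 * (p₀ : ℝ)) →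
    ∀ (y₀ δ₁ δ₂ : ℝ), y₀ ∈ Icc (0:ℝ) 1 → 0 < δ₁ → 0 < δ₂ → y₀ + δ₂ ≤ 1 →
    let δ : ℝ := δ₁ ^ (1/2 : ℝ) + δ₂
    let Δb : ℝ := δ ^ 2
    let Δs : ℝ := min δ (1 - y₀)
    ∀ (K : ℝ), 0 ≤ K →
    ∀ (Ω : Type) (_ : MeasurableSpace Ω) (P : Measure Ω), IsProbabilityMeasure P →
    ∀ (u : ℝ → ℝ → Ω → ℝ),
      Measurable (fun q : ℝ × ℝ × Ω => u q.1 q.2.1 q.2.2) →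
      (∀ t ∈ Icc (0:ℝ) Δb, ∀ s ∈ Icc (0:ℝ) Δb,
        ∫⁻ ω, ENNReal.ofReal (|u t y₀ ω - u s y₀ ω| ^ (2 * (p₀ : ℝ) * p)) ∂P ≤
          ENNReal.ofReal (K * |t - s| ^ ((p₀ : ℝ) * p / 2))) →
      (∀ t ∈ Icc (0:ℝ) Δb, ∀ s ∈ Icc (0:ℝ) Δb,
        ∀ x ∈ Icc y₀ (y₀ + Δs), ∀ y ∈ Icc y₀ (y₀ + Δs),
        ∫⁻ ω, ENNReal.ofReal
            (|u t x ω + u s y ω - u t y ω - u s x ω| ^ (2 * (p₀ : ℝ) * p)) ∂P ≤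
          ENNReal.ofReal (K * |t - s| ^ ((p₀ : ℝ) * p * (1/2 - θ)) *
            |x - y| ^ ((p₀ : ℝ) * p * (2 * θ)))) →
    ∀ r ∈ Icc (0:ℝ) Δb,
      ∫⁻ ω, ((∫⁻ t in Icc (0:ℝ) r, ∫⁻ s in Icc (0:ℝ) r,
            ENNReal.ofReal ((u t y₀ ω - u s y₀ ω) ^ (2 * p₀) / |t - s| ^ (γ₀ / 2))) +
          (∫⁻ t in Icc (0:ℝ) r, ∫⁻ s in Icc (0:ℝ) r,
            ∫⁻ x in Icc y₀ (y₀ + Δs), ∫⁻ y in Icc y₀ (y₀ + Δs),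
            ENNReal.ofReal ((u t x ω + u s y ω - u t y ω - u s x ω) ^ (2 * p₀) /
              (|t - s| ^ (1 + 2 * (p₀ : ℝ) * γ₁) * |x - y| ^ (1 + 2 * (p₀ : ℝ) * γ₂))))) ^ p
          ∂P ≤
        ENNReal.ofReal (c * K * r ^ (2 * p) * δ ^ (p * ((p₀ : ℝ) - γ₀))) := by
  have hp0 : (0:ℝ) < p := lt_of_lt_of_le one_pos hp
  refine ⟨2 ^ p * 2, by positivity, ?_⟩
  intro θ hθ0 hθh p₀ γ₀ γ₁ γ₂ hp₀ hγ₀4 hγ₀p hγ₁l hγ₁u hγ₂l hγ₂u hsum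
  intro y₀ δ₁ δ₂ hy₀ hδ₁ hδ₂ hyδ δ Δb Δs K hK Ω mΩ P hP u hu h1 h2 r hr
  haveI := hP
  have hδ : 0 < δ := add_pos (Real.rpow_pos_of_pos hδ₁ _) hδ₂
  have h1y : 0 < 1 - y₀ := lt_of_lt_of_le hδ₂ (by linarith)
  have hΔs : 0 < Δs := lt_min hδ h1y
  have hΔsδ : Δs ≤ δ := min_le_left _ _
  have hr0 : (0:ℝ) ≤ r := hr.1
  have hrΔb : r ≤ δ ^ 2 := hr.2
  have hp₀R : (0:ℝ) < (p₀:ℝ) := by exact_mod_cast hp₀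
  have h2p₀ : (0:ℝ) < 2 * (p₀:ℝ) := by linarith
  have h2p₀ne : 2 * p₀ ≠ 0 := by omega
  have hγ : (0:ℝ) < (p₀:ℝ) - γ₀ := by linarith
  have hsum2 : 2*(p₀:ℝ)*(2*γ₁+γ₂) = γ₀ - 1 := by rw [hsum]; field_simp
  have hsub : Icc (0:ℝ) r ⊆ Icc (0:ℝ) Δb := Icc_subset_Icc le_rfl hr.2
  rcases eq_or_lt_of_le hr0 with hh | hrpos
  · obtain rfl : r = 0 := hh.symm
    have hA0 : (volume.restrict (Icc (0:ℝ) 0)) = 0 := by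
      rw [Measure.restrict_eq_zero, Icc_self]
      exact Real.volume_singleton
    simp only [hA0, lintegral_zero_measure]
    simp [ENNReal.zero_rpow_of_pos hp0]
  -- exponent bookkeeping
  have hinvp : 2*(p₀:ℝ) * (1/(2*(p₀:ℝ))) = 1 := by field_simp
  have hb₁ : 2*(p₀:ℝ)*γ₁ < (p₀:ℝ)*(1/2-θ) - 1 := by
    have h := mul_lt_mul_of_pos_left hγ₁u h2p₀
    have hre : 2*(p₀:ℝ)*((1/2-θ)/2 - 1/(2*(p₀:ℝ))) = (p₀:ℝ)*(1/2-θ) - 1 := by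
      field_simp
    linarith [hre ▸ h]
  have hb₂ : 2*(p₀:ℝ)*γ₂ < (p₀:ℝ)*(2*θ) - 1 := by
    have h := mul_lt_mul_of_pos_left hγ₂u h2p₀
    have hre : 2*(p₀:ℝ)*((2*θ)/2 - 1/(2*(p₀:ℝ))) = (p₀:ℝ)*(2*θ) - 1 := by
      field_simp
    linarith [hre ▸ h]
  set e₁ : ℝ := (p₀:ℝ)*p*(1/2-θ) - (1+2*(p₀:ℝ)*γ₁)*p with he₁def
  set e₂ : ℝ := (p₀:ℝ)*p*(2*θ) - (1+2*(p₀:ℝ)*γ₂)*p with he₂def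
  have he₁pos : 0 < e₁ := by
    rw [he₁def, show (p₀:ℝ)*p*(1/2-θ) - (1+2*(p₀:ℝ)*γ₁)*p
      = p*((p₀:ℝ)*(1/2-θ) - 1 - 2*(p₀:ℝ)*γ₁) from by ring]
    exact mul_pos hp0 (by linarith)
  have he₂pos : 0 < e₂ := by
    rw [he₂def, show (p₀:ℝ)*p*(2*θ) - (1+2*(p₀:ℝ)*γ₂)*p
      = p*((p₀:ℝ)*(2*θ) - 1 - 2*(p₀:ℝ)*γ₂) from by ring]
    exact mul_pos hp0 (by linarith)
  have hEkey : 2*p + e₂ + 2*e₁ = p*((p₀:ℝ) - γ₀) := by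
    rw [he₁def, he₂def]
    linear_combination (-p) * hsum2
  -- misc ENNReal facts
  have hofrne : (ENNReal.ofReal r) ≠ 0 := (ENNReal.ofReal_pos.2 hrpos).ne'
  have hofrt : (ENNReal.ofReal r) ≠ ⊤ := ENNReal.ofReal_ne_top
  have hofsne : (ENNReal.ofReal Δs) ≠ 0 := (ENNReal.ofReal_pos.2 hΔs).ne'
  have hofst : (ENNReal.ofReal Δs) ≠ ⊤ := ENNReal.ofReal_ne_top
  have h2pnn : (0:ℝ) ≤ 2*p := by linarith
  have hμne : (volume.restrict (Icc (0:ℝ) r)) Set.univ ≠ ⊤ := by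
    rw [Measure.restrict_apply_univ, Real.volume_Icc]; exact ENNReal.ofReal_ne_top
  have hνne : (volume.restrict (Icc y₀ (y₀+Δs))) Set.univ ≠ ⊤ := by
    rw [Measure.restrict_apply_univ, Real.volume_Icc]; exact ENNReal.ofReal_ne_top
  -- pointwise moment bound, temporal term
  have hC₀ : ∀ t ∈ Icc (0:ℝ) r, ∀ s ∈ Icc (0:ℝ) r,
      (∫⁻ ω, (ENNReal.ofReal ((u t y₀ ω - u s y₀ ω) ^ (2 * p₀) / |t - s| ^ (γ₀ / 2))) ^ p ∂P)
        ≤ ENNReal.ofReal (K * δ ^ (p * ((p₀:ℝ) - γ₀))) := by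
    intro t ht s hs
    by_cases hts : t = s
    · subst hts
      simp [sub_self, zero_pow h2p₀ne, ENNReal.zero_rpow_of_pos hp0]
    · have hd : (0:ℝ) < |t - s| := abs_pos.mpr (sub_ne_zero.mpr hts)
      have htsr : |t - s| ≤ r :=
        abs_sub_le_iff.mpr ⟨by linarith [ht.2, hs.1], by linarith [hs.2, ht.1]⟩
      have hrw : ∀ ω : Ω,
          (ENNReal.ofReal ((u t y₀ ω - u s y₀ ω) ^ (2 * p₀) / |t - s| ^ (γ₀ / 2))) ^ p
          = ENNReal.ofReal (|u t y₀ ω - u s y₀ ω| ^ (2 * (p₀:ℝ) * p)) *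
            (ENNReal.ofReal (|t - s| ^ (γ₀ / 2 * p)))⁻¹ := by
        intro ω
        have hDnn : (0:ℝ) ≤ (u t y₀ ω - u s y₀ ω) ^ (2 * p₀) :=
          Even.pow_nonneg (even_two_mul p₀) _
        rw [ENNReal.ofReal_div_of_pos (Real.rpow_pos_of_pos hd _),
            ENNReal.div_rpow_of_nonneg _ _ hp0.le, div_eq_mul_inv]
        congr 1
        · rw [ENNReal.ofReal_rpow_of_nonneg hDnn hp0.le]
          congr 1
          have habs : |u t y₀ ω - u s y₀ ω| ^ (2*p₀) = (u t y₀ ω - u s y₀ ω) ^ (2*p₀) := by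
            rw [pow_abs, abs_of_nonneg hDnn]
          rw [← habs, ← Real.rpow_natCast (|u t y₀ ω - u s y₀ ω|) (2*p₀),
              ← Real.rpow_mul (abs_nonneg _)]
          congr 1
          push_cast
          ring
        · rw [ENNReal.ofReal_rpow_of_nonneg (Real.rpow_nonneg (abs_nonneg _) _) hp0.le,
              ← Real.rpow_mul (abs_nonneg _)]
      calc (∫⁻ ω, (ENNReal.ofReal ((u t y₀ ω - u s y₀ ω) ^ (2 * p₀) / |t - s| ^ (γ₀ / 2))) ^ p ∂P)
          = ∫⁻ ω, ENNReal.ofReal (|u t y₀ ω - u s y₀ ω| ^ (2 * (p₀:ℝ) * p)) *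
              (ENNReal.ofReal (|t - s| ^ (γ₀ / 2 * p)))⁻¹ ∂P := lintegral_congr hrw
        _ = (∫⁻ ω, ENNReal.ofReal (|u t y₀ ω - u s y₀ ω| ^ (2 * (p₀:ℝ) * p)) ∂P) *
              (ENNReal.ofReal (|t - s| ^ (γ₀ / 2 * p)))⁻¹ :=
            lintegral_mul_const' _ _
              (ENNReal.inv_ne_top.mpr (ENNReal.ofReal_pos.2 (Real.rpow_pos_of_pos hd _)).ne')
        _ ≤ ENNReal.ofReal (K * |t - s| ^ ((p₀:ℝ) * p / 2)) *
              (ENNReal.ofReal (|t - s| ^ (γ₀ / 2 * p)))⁻¹ :=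
            mul_le_mul_left (h1 t (hsub ht) s (hsub hs)) _
        _ = ENNReal.ofReal (K * |t - s| ^ ((p₀:ℝ) * p / 2) / |t - s| ^ (γ₀ / 2 * p)) := by
            rw [← div_eq_mul_inv, ← ENNReal.ofReal_div_of_pos (Real.rpow_pos_of_pos hd _)]
        _ ≤ ENNReal.ofReal (K * δ ^ (p * ((p₀:ℝ) - γ₀))) := by
            apply ENNReal.ofReal_le_ofReal
            rw [mul_div_assoc, ← Real.rpow_sub hd]
            refine mul_le_mul_of_nonneg_left ?_ hK
            have hexp : (0:ℝ) ≤ (p₀:ℝ) * p / 2 - γ₀ / 2 * p := by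
              have := mul_pos hγ hp0
              nlinarith
            calc |t - s| ^ ((p₀:ℝ) * p / 2 - γ₀ / 2 * p)
                ≤ (δ^2) ^ ((p₀:ℝ) * p / 2 - γ₀ / 2 * p) :=
                  Real.rpow_le_rpow (abs_nonneg _) (htsr.trans hrΔb) hexp
              _ = δ ^ (p * ((p₀:ℝ) - γ₀)) := by
                  rw [← Real.rpow_natCast δ 2, ← Real.rpow_mul hδ.le]
                  congr 1
                  push_cast
                  ring
  -- pointwise moment bound, rectangular term
  have hC₁ : ∀ t ∈ Icc (0:ℝ) r, ∀ s ∈ Icc (0:ℝ) r, ∀ x ∈ Icc y₀ (y₀+Δs), ∀ y ∈ Icc y₀ (y₀+Δs),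
      (∫⁻ ω, (ENNReal.ofReal ((u t x ω + u s y ω - u t y ω - u s x ω) ^ (2 * p₀) /
          (|t - s| ^ (1 + 2 * (p₀:ℝ) * γ₁) * |x - y| ^ (1 + 2 * (p₀:ℝ) * γ₂)))) ^ p ∂P)
        ≤ ENNReal.ofReal (K * r ^ e₁ * Δs ^ e₂) := by
    intro t ht s hs x hx y hy
    by_cases hts : t = s
    · subst hts
      simp [add_sub_cancel_right, sub_self, zero_pow h2p₀ne, ENNReal.zero_rpow_of_pos hp0]
    by_cases hxy : x = y
    · subst hxy
      simp [add_sub_cancel_left, sub_self, zero_pow h2p₀ne, ENNReal.zero_rpow_of_pos hp0]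
    have hdt : (0:ℝ) < |t - s| := abs_pos.mpr (sub_ne_zero.mpr hts)
    have hdx : (0:ℝ) < |x - y| := abs_pos.mpr (sub_ne_zero.mpr hxy)
    have htsr : |t - s| ≤ r :=
      abs_sub_le_iff.mpr ⟨by linarith [ht.2, hs.1], by linarith [hs.2, ht.1]⟩
    have hxys : |x - y| ≤ Δs :=
      abs_sub_le_iff.mpr ⟨by linarith [hx.2, hy.1], by linarith [hy.2, hx.1]⟩
    have hdpos : (0:ℝ) < |t - s| ^ (1 + 2 * (p₀:ℝ) * γ₁) * |x - y| ^ (1 + 2 * (p₀:ℝ) * γ₂) :=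
      mul_pos (Real.rpow_pos_of_pos hdt _) (Real.rpow_pos_of_pos hdx _)
    have hdp2 : (0:ℝ) < |t - s| ^ ((1 + 2 * (p₀:ℝ) * γ₁) * p) *
        |x - y| ^ ((1 + 2 * (p₀:ℝ) * γ₂) * p) :=
      mul_pos (Real.rpow_pos_of_pos hdt _) (Real.rpow_pos_of_pos hdx _)
    have hrw : ∀ ω : Ω,
        (ENNReal.ofReal ((u t x ω + u s y ω - u t y ω - u s x ω) ^ (2 * p₀) /
          (|t - s| ^ (1 + 2 * (p₀:ℝ) * γ₁) * |x - y| ^ (1 + 2 * (p₀:ℝ) * γ₂)))) ^ p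
        = ENNReal.ofReal (|u t x ω + u s y ω - u t y ω - u s x ω| ^ (2 * (p₀:ℝ) * p)) *
          (ENNReal.ofReal (|t - s| ^ ((1 + 2 * (p₀:ℝ) * γ₁) * p) *
            |x - y| ^ ((1 + 2 * (p₀:ℝ) * γ₂) * p)))⁻¹ := by
      intro ω
      have hDnn : (0:ℝ) ≤ (u t x ω + u s y ω - u t y ω - u s x ω) ^ (2 * p₀) :=
        Even.pow_nonneg (even_two_mul p₀) _
      rw [ENNReal.ofReal_div_of_pos hdpos, ENNReal.div_rpow_of_nonneg _ _ hp0.le, div_eq_mul_inv]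
      congr 1
      · rw [ENNReal.ofReal_rpow_of_nonneg hDnn hp0.le]
        congr 1
        have habs : |u t x ω + u s y ω - u t y ω - u s x ω| ^ (2*p₀)
            = (u t x ω + u s y ω - u t y ω - u s x ω) ^ (2*p₀) := by
          rw [pow_abs, abs_of_nonneg hDnn]
        rw [← habs, ← Real.rpow_natCast (|u t x ω + u s y ω - u t y ω - u s x ω|) (2*p₀),
            ← Real.rpow_mul (abs_nonneg _)]
        congr 1
        push_cast
        ring
      · rw [ENNReal.ofReal_rpow_of_nonneg hdpos.le hp0.le]
        congr 1
        rw [Real.mul_rpow (Real.rpow_nonneg (abs_nonneg _) _) (Real.rpow_nonneg (abs_nonneg _) _),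
            ← Real.rpow_mul (abs_nonneg _), ← Real.rpow_mul (abs_nonneg _)]
    calc (∫⁻ ω, (ENNReal.ofReal ((u t x ω + u s y ω - u t y ω - u s x ω) ^ (2 * p₀) /
            (|t - s| ^ (1 + 2 * (p₀:ℝ) * γ₁) * |x - y| ^ (1 + 2 * (p₀:ℝ) * γ₂)))) ^ p ∂P)
        = ∫⁻ ω, ENNReal.ofReal (|u t x ω + u s y ω - u t y ω - u s x ω| ^ (2 * (p₀:ℝ) * p)) *
            (ENNReal.ofReal (|t - s| ^ ((1 + 2 * (p₀:ℝ) * γ₁) * p) *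
              |x - y| ^ ((1 + 2 * (p₀:ℝ) * γ₂) * p)))⁻¹ ∂P := lintegral_congr hrw
      _ = (∫⁻ ω, ENNReal.ofReal (|u t x ω + u s y ω - u t y ω - u s x ω| ^ (2 * (p₀:ℝ) * p)) ∂P) *
            (ENNReal.ofReal (|t - s| ^ ((1 + 2 * (p₀:ℝ) * γ₁) * p) *
              |x - y| ^ ((1 + 2 * (p₀:ℝ) * γ₂) * p)))⁻¹ :=
          lintegral_mul_const' _ _
            (ENNReal.inv_ne_top.mpr (ENNReal.ofReal_pos.2 hdp2).ne')
      _ ≤ ENNReal.ofReal (K * |t - s| ^ ((p₀:ℝ) * p * (1/2 - θ)) *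
            |x - y| ^ ((p₀:ℝ) * p * (2 * θ))) *
            (ENNReal.ofReal (|t - s| ^ ((1 + 2 * (p₀:ℝ) * γ₁) * p) *
              |x - y| ^ ((1 + 2 * (p₀:ℝ) * γ₂) * p)))⁻¹ :=
          mul_le_mul_left (h2 t (hsub ht) s (hsub hs) x hx y hy) _
      _ = ENNReal.ofReal ((K * |t - s| ^ ((p₀:ℝ) * p * (1/2 - θ)) *
            |x - y| ^ ((p₀:ℝ) * p * (2 * θ))) /
            (|t - s| ^ ((1 + 2 * (p₀:ℝ) * γ₁) * p) * |x - y| ^ ((1 + 2 * (p₀:ℝ) * γ₂) * p))) := by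
          rw [← div_eq_mul_inv, ← ENNReal.ofReal_div_of_pos hdp2]
      _ ≤ ENNReal.ofReal (K * r ^ e₁ * Δs ^ e₂) := by
          apply ENNReal.ofReal_le_ofReal
          have heq : (K * |t - s| ^ ((p₀:ℝ) * p * (1/2 - θ)) *
                |x - y| ^ ((p₀:ℝ) * p * (2 * θ))) /
                (|t - s| ^ ((1 + 2 * (p₀:ℝ) * γ₁) * p) * |x - y| ^ ((1 + 2 * (p₀:ℝ) * γ₂) * p))
              = K * (|t - s| ^ e₁ * |x - y| ^ e₂) := by
            rw [he₁def, he₂def, Real.rpow_sub hdt, Real.rpow_sub hdx]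
            field_simp
          rw [heq, mul_assoc]
          refine mul_le_mul_of_nonneg_left ?_ hK
          exact mul_le_mul (Real.rpow_le_rpow (abs_nonneg _) htsr he₁pos.le)
            (Real.rpow_le_rpow (abs_nonneg _) hxys he₂pos.le)
            (Real.rpow_nonneg (abs_nonneg _) _) (Real.rpow_nonneg hr0 _)
  -- the temporal term
  have hT₀ : (∫⁻ ω, (∫⁻ t in Icc (0:ℝ) r, ∫⁻ s in Icc (0:ℝ) r,
        ENNReal.ofReal ((u t y₀ ω - u s y₀ ω) ^ (2 * p₀) / |t - s| ^ (γ₀ / 2))) ^ p ∂P)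
      ≤ ENNReal.ofReal (K * r ^ (2*p) * δ ^ (p * ((p₀:ℝ) - γ₀))) := by
    have hkey := my_key2 (volume.restrict (Icc (0:ℝ) r)) P hμne
      (f := fun t s ω => ENNReal.ofReal ((u t y₀ ω - u s y₀ ω) ^ (2 * p₀) / |t - s| ^ (γ₀ / 2)))
      (by fun_prop) hp
    rw [Measure.restrict_apply_univ, Real.volume_Icc, sub_zero] at hkey
    refine hkey.trans ?_
    have hin : ∀ t ∈ Icc (0:ℝ) r,
        (∫⁻ s in Icc (0:ℝ) r, ∫⁻ ω,
          (ENNReal.ofReal ((u t y₀ ω - u s y₀ ω) ^ (2 * p₀) / |t - s| ^ (γ₀ / 2))) ^ p ∂P)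
        ≤ ENNReal.ofReal (K * δ ^ (p * ((p₀:ℝ) - γ₀))) * ENNReal.ofReal r := by
      intro t ht
      calc _ ≤ ∫⁻ _ in Icc (0:ℝ) r, ENNReal.ofReal (K * δ ^ (p * ((p₀:ℝ) - γ₀))) :=
            setLIntegral_mono measurable_const (fun s hs => hC₀ t ht s hs)
        _ = ENNReal.ofReal (K * δ ^ (p * ((p₀:ℝ) - γ₀))) * ENNReal.ofReal r := by
            rw [setLIntegral_const, Real.volume_Icc, sub_zero]
    calc ((ENNReal.ofReal r) ^ (p-1) * (ENNReal.ofReal r) ^ (p-1)) *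
          ∫⁻ t in Icc (0:ℝ) r, ∫⁻ s in Icc (0:ℝ) r, (∫⁻ ω,
            (ENNReal.ofReal ((u t y₀ ω - u s y₀ ω) ^ (2 * p₀) / |t - s| ^ (γ₀ / 2))) ^ p ∂P)
        ≤ ((ENNReal.ofReal r) ^ (p-1) * (ENNReal.ofReal r) ^ (p-1)) *
            ((ENNReal.ofReal (K * δ ^ (p * ((p₀:ℝ) - γ₀))) * ENNReal.ofReal r) *
              ENNReal.ofReal r) := by
          refine mul_le_mul_right ?_ _
          calc _ ≤ ∫⁻ _ in Icc (0:ℝ) r,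
                ENNReal.ofReal (K * δ ^ (p * ((p₀:ℝ) - γ₀))) * ENNReal.ofReal r :=
              setLIntegral_mono measurable_const hin
            _ = _ := by rw [setLIntegral_const, Real.volume_Icc, sub_zero]
      _ = (ENNReal.ofReal r) ^ (2*p) * ENNReal.ofReal (K * δ ^ (p * ((p₀:ℝ) - γ₀))) := by
          rw [show (2*p : ℝ) = (p-1)+((p-1)+(1+1)) by ring,
            ENNReal.rpow_add _ _ hofrne hofrt, ENNReal.rpow_add _ _ hofrne hofrt,
            ENNReal.rpow_add _ _ hofrne hofrt]
          simp only [ENNReal.rpow_one]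
          ring
      _ = ENNReal.ofReal (K * r ^ (2*p) * δ ^ (p * ((p₀:ℝ) - γ₀))) := by
          rw [ENNReal.ofReal_rpow_of_nonneg hr0 h2pnn,
            ← ENNReal.ofReal_mul (Real.rpow_nonneg hr0 _)]
          congr 1
          ring
  -- measurability of the inner double integral of the rectangular term
  have hGmeas : Measurable (fun q : ℝ × ℝ × Ω => ∫⁻ x in Icc y₀ (y₀+Δs), ∫⁻ y in Icc y₀ (y₀+Δs),
      ENNReal.ofReal ((u q.1 x q.2.2 + u q.2.1 y q.2.2 - u q.1 y q.2.2 - u q.2.1 x q.2.2) ^ (2*p₀) /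
        (|q.1 - q.2.1| ^ (1 + 2 * (p₀:ℝ) * γ₁) * |x - y| ^ (1 + 2 * (p₀:ℝ) * γ₂)))) :=
    Measurable.lintegral_prod_right'
      (f := fun w : (ℝ × ℝ × Ω) × ℝ => ∫⁻ y in Icc y₀ (y₀+Δs),
        ENNReal.ofReal ((u w.1.1 w.2 w.1.2.2 + u w.1.2.1 y w.1.2.2 - u w.1.1 y w.1.2.2 -
            u w.1.2.1 w.2 w.1.2.2) ^ (2*p₀) /
          (|w.1.1 - w.1.2.1| ^ (1 + 2 * (p₀:ℝ) * γ₁) * |w.2 - y| ^ (1 + 2 * (p₀:ℝ) * γ₂))))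
      (Measurable.lintegral_prod_right'
        (f := fun v : ((ℝ × ℝ × Ω) × ℝ) × ℝ =>
          ENNReal.ofReal ((u v.1.1.1 v.1.2 v.1.1.2.2 + u v.1.1.2.1 v.2 v.1.1.2.2 -
              u v.1.1.1 v.2 v.1.1.2.2 - u v.1.1.2.1 v.1.2 v.1.1.2.2) ^ (2*p₀) /
            (|v.1.1.1 - v.1.1.2.1| ^ (1 + 2 * (p₀:ℝ) * γ₁) *
              |v.1.2 - v.2| ^ (1 + 2 * (p₀:ℝ) * γ₂))))
        (by fun_prop))
  -- middle layer bound for the rectangular term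
  have hmid : ∀ t ∈ Icc (0:ℝ) r, ∀ s ∈ Icc (0:ℝ) r,
      (∫⁻ ω, (∫⁻ x in Icc y₀ (y₀+Δs), ∫⁻ y in Icc y₀ (y₀+Δs),
          ENNReal.ofReal ((u t x ω + u s y ω - u t y ω - u s x ω) ^ (2 * p₀) /
            (|t - s| ^ (1 + 2 * (p₀:ℝ) * γ₁) * |x - y| ^ (1 + 2 * (p₀:ℝ) * γ₂)))) ^ p ∂P)
        ≤ ((ENNReal.ofReal Δs) ^ (p-1) * (ENNReal.ofReal Δs) ^ (p-1)) *
            ((ENNReal.ofReal (K * r ^ e₁ * Δs ^ e₂) * ENNReal.ofReal Δs) *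
              ENNReal.ofReal Δs) := by
    intro t ht s hs
    have hkey := my_key2 (volume.restrict (Icc y₀ (y₀+Δs))) P hνne
      (f := fun x y ω => ENNReal.ofReal ((u t x ω + u s y ω - u t y ω - u s x ω) ^ (2 * p₀) /
        (|t - s| ^ (1 + 2 * (p₀:ℝ) * γ₁) * |x - y| ^ (1 + 2 * (p₀:ℝ) * γ₂))))
      (by fun_prop) hp
    rw [Measure.restrict_apply_univ, Real.volume_Icc, add_sub_cancel_left] at hkey
    refine hkey.trans (mul_le_mul_right ?_ _)
    have hin : ∀ x' ∈ Icc y₀ (y₀+Δs),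
        (∫⁻ y in Icc y₀ (y₀+Δs), ∫⁻ ω,
          (ENNReal.ofReal ((u t x' ω + u s y ω - u t y ω - u s x' ω) ^ (2 * p₀) /
            (|t - s| ^ (1 + 2 * (p₀:ℝ) * γ₁) * |x' - y| ^ (1 + 2 * (p₀:ℝ) * γ₂)))) ^ p ∂P)
        ≤ ENNReal.ofReal (K * r ^ e₁ * Δs ^ e₂) * ENNReal.ofReal Δs := by
      intro x' hx'
      calc _ ≤ ∫⁻ _ in Icc y₀ (y₀+Δs), ENNReal.ofReal (K * r ^ e₁ * Δs ^ e₂) :=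
            setLIntegral_mono measurable_const (fun y hy => hC₁ t ht s hs x' hx' y hy)
        _ = _ := by rw [setLIntegral_const, Real.volume_Icc, add_sub_cancel_left]
    calc _ ≤ ∫⁻ _ in Icc y₀ (y₀+Δs),
          ENNReal.ofReal (K * r ^ e₁ * Δs ^ e₂) * ENNReal.ofReal Δs :=
        setLIntegral_mono measurable_const hin
      _ = _ := by rw [setLIntegral_const, Real.volume_Icc, add_sub_cancel_left]
  -- the rectangular term
  have hT₁ : (∫⁻ ω, (∫⁻ t in Icc (0:ℝ) r, ∫⁻ s in Icc (0:ℝ) r,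
        ∫⁻ x in Icc y₀ (y₀+Δs), ∫⁻ y in Icc y₀ (y₀+Δs),
          ENNReal.ofReal ((u t x ω + u s y ω - u t y ω - u s x ω) ^ (2 * p₀) /
            (|t - s| ^ (1 + 2 * (p₀:ℝ) * γ₁) * |x - y| ^ (1 + 2 * (p₀:ℝ) * γ₂)))) ^ p ∂P)
      ≤ ENNReal.ofReal (K * r ^ (2*p) * δ ^ (p * ((p₀:ℝ) - γ₀))) := by
    have hkey := my_key2 (volume.restrict (Icc (0:ℝ) r)) P hμne
      (f := fun t s ω => ∫⁻ x in Icc y₀ (y₀+Δs), ∫⁻ y in Icc y₀ (y₀+Δs),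
        ENNReal.ofReal ((u t x ω + u s y ω - u t y ω - u s x ω) ^ (2 * p₀) /
          (|t - s| ^ (1 + 2 * (p₀:ℝ) * γ₁) * |x - y| ^ (1 + 2 * (p₀:ℝ) * γ₂))))
      hGmeas hp
    rw [Measure.restrict_apply_univ, Real.volume_Icc, sub_zero] at hkey
    refine hkey.trans ?_
    set C₂ : ℝ≥0∞ := ((ENNReal.ofReal Δs) ^ (p-1) * (ENNReal.ofReal Δs) ^ (p-1)) *
        ((ENNReal.ofReal (K * r ^ e₁ * Δs ^ e₂) * ENNReal.ofReal Δs) * ENNReal.ofReal Δs)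
      with hC₂def
    have hin : ∀ t ∈ Icc (0:ℝ) r,
        (∫⁻ s in Icc (0:ℝ) r, ∫⁻ ω, (∫⁻ x in Icc y₀ (y₀+Δs), ∫⁻ y in Icc y₀ (y₀+Δs),
          ENNReal.ofReal ((u t x ω + u s y ω - u t y ω - u s x ω) ^ (2 * p₀) /
            (|t - s| ^ (1 + 2 * (p₀:ℝ) * γ₁) * |x - y| ^ (1 + 2 * (p₀:ℝ) * γ₂)))) ^ p ∂P)
        ≤ C₂ * ENNReal.ofReal r := by
      intro t ht
      calc _ ≤ ∫⁻ _ in Icc (0:ℝ) r, C₂ :=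
            setLIntegral_mono measurable_const (fun s hs => hmid t ht s hs)
        _ = C₂ * ENNReal.ofReal r := by rw [setLIntegral_const, Real.volume_Icc, sub_zero]
    calc ((ENNReal.ofReal r) ^ (p-1) * (ENNReal.ofReal r) ^ (p-1)) *
          ∫⁻ t in Icc (0:ℝ) r, ∫⁻ s in Icc (0:ℝ) r, (∫⁻ ω,
            (∫⁻ x in Icc y₀ (y₀+Δs), ∫⁻ y in Icc y₀ (y₀+Δs),
              ENNReal.ofReal ((u t x ω + u s y ω - u t y ω - u s x ω) ^ (2 * p₀) /
                (|t - s| ^ (1 + 2 * (p₀:ℝ) * γ₁) * |x - y| ^ (1 + 2 * (p₀:ℝ) * γ₂)))) ^ p ∂P)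
        ≤ ((ENNReal.ofReal r) ^ (p-1) * (ENNReal.ofReal r) ^ (p-1)) *
            ((C₂ * ENNReal.ofReal r) * ENNReal.ofReal r) := by
          refine mul_le_mul_right ?_ _
          calc _ ≤ ∫⁻ _ in Icc (0:ℝ) r, C₂ * ENNReal.ofReal r :=
              setLIntegral_mono measurable_const hin
            _ = _ := by rw [setLIntegral_const, Real.volume_Icc, sub_zero]
      _ = ((ENNReal.ofReal r) ^ (2*p) * (ENNReal.ofReal Δs) ^ (2*p)) *
            ENNReal.ofReal (K * r ^ e₁ * Δs ^ e₂) := by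
          rw [hC₂def, show (2*p : ℝ) = (p-1)+((p-1)+(1+1)) by ring,
            ENNReal.rpow_add _ _ hofrne hofrt, ENNReal.rpow_add _ _ hofrne hofrt,
            ENNReal.rpow_add _ _ hofrne hofrt,
            ENNReal.rpow_add _ _ hofsne hofst, ENNReal.rpow_add _ _ hofsne hofst,
            ENNReal.rpow_add _ _ hofsne hofst]
          simp only [ENNReal.rpow_one]
          ring
      _ = ENNReal.ofReal ((r ^ (2*p) * Δs ^ (2*p)) * (K * r ^ e₁ * Δs ^ e₂)) := by
          rw [ENNReal.ofReal_rpow_of_nonneg hr0 h2pnn,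
            ENNReal.ofReal_rpow_of_nonneg hΔs.le h2pnn,
            ← ENNReal.ofReal_mul (Real.rpow_nonneg hr0 _),
            ← ENNReal.ofReal_mul (mul_nonneg (Real.rpow_nonneg hr0 _) (Real.rpow_nonneg hΔs.le _))]
      _ ≤ ENNReal.ofReal (K * r ^ (2*p) * δ ^ (p * ((p₀:ℝ) - γ₀))) := by
          apply ENNReal.ofReal_le_ofReal
          have key : Δs ^ (2*p+e₂) * r ^ e₁ ≤ δ ^ (p*((p₀:ℝ)-γ₀)) := by
            have ha : Δs ^ (2*p+e₂) ≤ δ ^ (2*p+e₂) :=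
              Real.rpow_le_rpow hΔs.le hΔsδ (by linarith)
            have hb : r ^ e₁ ≤ δ ^ (2*e₁) := by
              calc r ^ e₁ ≤ (δ^2) ^ e₁ := Real.rpow_le_rpow hr0 hrΔb he₁pos.le
                _ = δ ^ (2*e₁) := by
                    rw [← Real.rpow_natCast δ 2, ← Real.rpow_mul hδ.le]
                    norm_num
            calc Δs ^ (2*p+e₂) * r ^ e₁ ≤ δ ^ (2*p+e₂) * δ ^ (2*e₁) :=
                mul_le_mul ha hb (Real.rpow_nonneg hr0 _) (Real.rpow_nonneg hδ.le _)
              _ = δ ^ (2*p+e₂+2*e₁) := (Real.rpow_add hδ _ _).symm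
              _ = δ ^ (p*((p₀:ℝ)-γ₀)) := by rw [hEkey]
          calc (r ^ (2*p) * Δs ^ (2*p)) * (K * r ^ e₁ * Δs ^ e₂)
              = (K * r ^ (2*p)) * (Δs ^ (2*p+e₂) * r ^ e₁) := by
                rw [Real.rpow_add hΔs]
                ring
            _ ≤ (K * r ^ (2*p)) * δ ^ (p*((p₀:ℝ)-γ₀)) :=
                mul_le_mul_of_nonneg_left key (mul_nonneg hK (Real.rpow_nonneg hr0 _))
            _ = K * r ^ (2*p) * δ ^ (p*((p₀:ℝ)-γ₀)) := by ring
  -- measurability of the first term as a function of ω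
  have hrpowm : Measurable (fun z : ℝ≥0∞ => z ^ p) := by fun_prop
  have hF₀ : Measurable (fun ω : Ω => ∫⁻ t in Icc (0:ℝ) r, ∫⁻ s in Icc (0:ℝ) r,
      ENNReal.ofReal ((u t y₀ ω - u s y₀ ω) ^ (2 * p₀) / |t - s| ^ (γ₀ / 2))) :=
    Measurable.lintegral_prod_right'
      (f := fun w : Ω × ℝ => ∫⁻ s in Icc (0:ℝ) r,
        ENNReal.ofReal ((u w.2 y₀ w.1 - u s y₀ w.1) ^ (2 * p₀) / |w.2 - s| ^ (γ₀ / 2)))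
      (Measurable.lintegral_prod_right'
        (f := fun v : (Ω × ℝ) × ℝ =>
          ENNReal.ofReal ((u v.1.2 y₀ v.1.1 - u v.2 y₀ v.1.1) ^ (2 * p₀) /
            |v.1.2 - v.2| ^ (γ₀ / 2)))
        (by fun_prop))
  have hF₀p : Measurable (fun ω : Ω => (∫⁻ t in Icc (0:ℝ) r, ∫⁻ s in Icc (0:ℝ) r,
      ENNReal.ofReal ((u t y₀ ω - u s y₀ ω) ^ (2 * p₀) / |t - s| ^ (γ₀ / 2))) ^ p) :=
    hrpowm.comp hF₀
  have hXnn : (0:ℝ) ≤ K * r ^ (2*p) * δ ^ (p * ((p₀:ℝ) - γ₀)) :=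
    mul_nonneg (mul_nonneg hK (Real.rpow_nonneg hr0 _)) (Real.rpow_nonneg hδ.le _)
  -- final assembly
  calc ∫⁻ ω, ((∫⁻ t in Icc (0:ℝ) r, ∫⁻ s in Icc (0:ℝ) r,
          ENNReal.ofReal ((u t y₀ ω - u s y₀ ω) ^ (2 * p₀) / |t - s| ^ (γ₀ / 2))) +
        (∫⁻ t in Icc (0:ℝ) r, ∫⁻ s in Icc (0:ℝ) r,
          ∫⁻ x in Icc y₀ (y₀ + Δs), ∫⁻ y in Icc y₀ (y₀ + Δs),
          ENNReal.ofReal ((u t x ω + u s y ω - u t y ω - u s x ω) ^ (2 * p₀) /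
            (|t - s| ^ (1 + 2 * (p₀:ℝ) * γ₁) * |x - y| ^ (1 + 2 * (p₀:ℝ) * γ₂))))) ^ p ∂P
      ≤ ∫⁻ ω, (2:ℝ≥0∞) ^ p * (((∫⁻ t in Icc (0:ℝ) r, ∫⁻ s in Icc (0:ℝ) r,
          ENNReal.ofReal ((u t y₀ ω - u s y₀ ω) ^ (2 * p₀) / |t - s| ^ (γ₀ / 2))) ^ p) +
        ((∫⁻ t in Icc (0:ℝ) r, ∫⁻ s in Icc (0:ℝ) r,
          ∫⁻ x in Icc y₀ (y₀ + Δs), ∫⁻ y in Icc y₀ (y₀ + Δs),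
          ENNReal.ofReal ((u t x ω + u s y ω - u t y ω - u s x ω) ^ (2 * p₀) /
            (|t - s| ^ (1 + 2 * (p₀:ℝ) * γ₁) * |x - y| ^ (1 + 2 * (p₀:ℝ) * γ₂)))) ^ p)) ∂P :=
        lintegral_mono fun ω => my_addpow _ _ hp0.le
    _ = (2:ℝ≥0∞) ^ p * ∫⁻ ω, (((∫⁻ t in Icc (0:ℝ) r, ∫⁻ s in Icc (0:ℝ) r,
          ENNReal.ofReal ((u t y₀ ω - u s y₀ ω) ^ (2 * p₀) / |t - s| ^ (γ₀ / 2))) ^ p) +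
        ((∫⁻ t in Icc (0:ℝ) r, ∫⁻ s in Icc (0:ℝ) r,
          ∫⁻ x in Icc y₀ (y₀ + Δs), ∫⁻ y in Icc y₀ (y₀ + Δs),
          ENNReal.ofReal ((u t x ω + u s y ω - u t y ω - u s x ω) ^ (2 * p₀) /
            (|t - s| ^ (1 + 2 * (p₀:ℝ) * γ₁) * |x - y| ^ (1 + 2 * (p₀:ℝ) * γ₂)))) ^ p)) ∂P :=
        lintegral_const_mul' _ _ (ENNReal.rpow_ne_top_of_nonneg hp0.le ENNReal.ofNat_ne_top)
    _ = (2:ℝ≥0∞) ^ p * ((∫⁻ ω, (∫⁻ t in Icc (0:ℝ) r, ∫⁻ s in Icc (0:ℝ) r,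
          ENNReal.ofReal ((u t y₀ ω - u s y₀ ω) ^ (2 * p₀) / |t - s| ^ (γ₀ / 2))) ^ p ∂P) +
        (∫⁻ ω, (∫⁻ t in Icc (0:ℝ) r, ∫⁻ s in Icc (0:ℝ) r,
          ∫⁻ x in Icc y₀ (y₀ + Δs), ∫⁻ y in Icc y₀ (y₀ + Δs),
          ENNReal.ofReal ((u t x ω + u s y ω - u t y ω - u s x ω) ^ (2 * p₀) /
            (|t - s| ^ (1 + 2 * (p₀:ℝ) * γ₁) * |x - y| ^ (1 + 2 * (p₀:ℝ) * γ₂)))) ^ p ∂P)) := by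
        rw [lintegral_add_left hF₀p]
    _ ≤ (2:ℝ≥0∞) ^ p * (ENNReal.ofReal (K * r ^ (2*p) * δ ^ (p * ((p₀:ℝ) - γ₀))) +
          ENNReal.ofReal (K * r ^ (2*p) * δ ^ (p * ((p₀:ℝ) - γ₀)))) :=
        mul_le_mul_right (add_le_add hT₀ hT₁) _
    _ ≤ ENNReal.ofReal (2 ^ p * 2 * K * r ^ (2 * p) * δ ^ (p * ((p₀ : ℝ) - γ₀))) := by
        rw [← ENNReal.ofReal_add hXnn hXnn,
          show ((2:ℝ≥0∞)) = ENNReal.ofReal (2:ℝ) by simp,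
          ENNReal.ofReal_rpow_of_nonneg (by norm_num) hp0.le,
          ← ENNReal.ofReal_mul (by positivity)]
        exact ENNReal.ofReal_le_ofReal (le_of_eq (by ring))
end

section
/- Let p₀ be a positive integer and γ₀ > 4. There exists a constant c = c(p₀, γ₀) > 0 such that for all reals α < β, every continuous function f : [α, β] → ℝ, and all t, s ∈ [α, β]: |f(t) − f(s)| ≤ c |t − s|^{(γ₀ − 4)/(4p₀)} (∫_{α}^{β} ∫_{α}^{β} |f(u) − f(v)|^{2p₀} / |u − v|^{γ₀/2} du dv)^{1/(2p₀)} (the inequality being trivially true when the double integral is infinite). -/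
set_option maxHeartbeats 1000000

open MeasureTheory Set Real ENNReal

noncomputable def grrAvg (f : ℝ → ℝ) (a b : ℝ) : ℝ := (b - a)⁻¹ * ∫ x in Icc a b, f x

/-- the weight in the GRR double integral -/
noncomputable def grrW (f : ℝ → ℝ) (p₀ : ℕ) (γ₀ : ℝ) : ℝ × ℝ → ℝ≥0∞ :=
  fun z => ENNReal.ofReal (|f z.1 - f z.2| ^ (2 * p₀) / |z.1 - z.2| ^ (γ₀ / 2))

lemma grrW_meas {f : ℝ → ℝ} {α β : ℝ} (hf : ContinuousOn f (Icc α β)) (p₀ : ℕ) {γ₀ : ℝ} (hγ : 0 ≤ γ₀) :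
    AEMeasurable (grrW f p₀ γ₀) ((volume.prod volume).restrict (Icc α β ×ˢ Icc α β)) := by
  have hS : MeasurableSet (Icc α β ×ˢ Icc α β : Set (ℝ × ℝ)) :=
    measurableSet_Icc.prod measurableSet_Icc
  have h1 : ContinuousOn (fun z : ℝ × ℝ => f z.1 - f z.2) (Icc α β ×ˢ Icc α β) :=
    (hf.comp continuous_fst.continuousOn fun z hz => hz.1).sub
      (hf.comp continuous_snd.continuousOn fun z hz => hz.2)
  have h2 : AEMeasurable (fun z : ℝ × ℝ => |f z.1 - f z.2| ^ (2 * p₀))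
      ((volume.prod volume).restrict (Icc α β ×ˢ Icc α β)) :=
    ((continuous_pow (2 * p₀)).comp continuous_abs).measurable.comp_aemeasurable
      (h1.aemeasurable hS)
  have h3 : Measurable (fun z : ℝ × ℝ => |z.1 - z.2| ^ (γ₀ / 2)) :=
    ((Real.continuous_rpow_const (by linarith)).comp
      ((continuous_fst.sub continuous_snd).abs)).measurable
  exact ENNReal.measurable_ofReal.comp_aemeasurable (h2.div h3.aemeasurable)

lemma grrW_meas' {f : ℝ → ℝ} {α β : ℝ} (hf : ContinuousOn f (Icc α β)) (p₀ : ℕ) {γ₀ : ℝ} (hγ : 0 ≤ γ₀)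
    {s t : Set ℝ} (hs : s ⊆ Icc α β) (ht : t ⊆ Icc α β) :
    AEMeasurable (grrW f p₀ γ₀) ((volume.prod volume).restrict (s ×ˢ t)) :=
  (grrW_meas hf p₀ hγ).mono_measure
    (Measure.restrict_mono (prod_mono hs ht) le_rfl)

lemma grrB_eq {f : ℝ → ℝ} {α β : ℝ} (hf : ContinuousOn f (Icc α β)) (p₀ : ℕ) {γ₀ : ℝ} (hγ : 0 ≤ γ₀) :
    (∫⁻ u in Icc α β, ∫⁻ v in Icc α β,
        ENNReal.ofReal (|f u - f v| ^ (2 * p₀) / |u - v| ^ (γ₀ / 2)))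
      = ∫⁻ z in Icc α β ×ˢ Icc α β, grrW f p₀ γ₀ z ∂(volume.prod volume) := by
  rw [← Measure.prod_restrict, lintegral_prod _ (by rw [Measure.prod_restrict]; exact grrW_meas hf p₀ hγ)]
  rfl

lemma grrG_meas {f : ℝ → ℝ} {α β : ℝ} (hf : ContinuousOn f (Icc α β))
    {s t : Set ℝ} (hs : s ⊆ Icc α β) (ht : t ⊆ Icc α β) :
    AEMeasurable (fun z : ℝ × ℝ => ENNReal.ofReal |f z.1 - f z.2|)
      ((volume.prod volume).restrict (s ×ˢ t)) := by
  have hS : MeasurableSet (Icc α β ×ˢ Icc α β : Set (ℝ × ℝ)) :=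
    measurableSet_Icc.prod measurableSet_Icc
  have h1 : ContinuousOn (fun z : ℝ × ℝ => f z.1 - f z.2) (Icc α β ×ˢ Icc α β) :=
    (hf.comp continuous_fst.continuousOn fun z hz => hz.1).sub
      (hf.comp continuous_snd.continuousOn fun z hz => hz.2)
  exact ((ENNReal.measurable_ofReal.comp measurable_abs).comp_aemeasurable
      (h1.aemeasurable hS)).mono_measure
    (Measure.restrict_mono (prod_mono hs ht) le_rfl)

lemma grr_step {p₀ : ℕ} (hp₀ : 1 ≤ p₀) {γ₀ : ℝ} (hγ₀ : 4 < γ₀)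
    {α β : ℝ} {f : ℝ → ℝ} (hf : ContinuousOn f (Icc α β))
    {B : ℝ≥0∞}
    (hBle : (∫⁻ z in Icc α β ×ˢ Icc α β, grrW f p₀ γ₀ z ∂(volume.prod volume)) ≤ B)
    (hB : B ≠ ⊤)
    {a b a' b' : ℝ} (hab : a < b) (hS : Icc a b ⊆ Icc α β)
    (hsub : Icc a' b' ⊆ Icc a b) (hlen : b' - a' = (b - a) / 2) :
    |grrAvg f a' b' - grrAvg f a b| ≤
      2 * B.toReal ^ (1 / (2 * (p₀ : ℝ))) * (b - a) ^ ((γ₀ - 4) / (4 * (p₀ : ℝ))) := by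
  -- notation
  set L : ℝ := b - a with hLdef
  have hL : 0 < L := by simp only [hLdef]; linarith
  have ha'b' : a' < b' := by have : 0 < b' - a' := by rw [hlen]; positivity
                             linarith
  have hJS : Icc a' b' ⊆ Icc α β := hsub.trans hS
  have hfI : IntegrableOn f (Icc a b) := (hf.mono hS).integrableOn_Icc
  have hfJ : IntegrableOn f (Icc a' b') := (hf.mono hJS).integrableOn_Icc
  set p : ℝ := 2 * (p₀ : ℝ) with hpdef
  have hp₀R : (1:ℝ) ≤ (p₀:ℝ) := by exact_mod_cast hp₀
  have hp1 : 1 < p := by simp only [hpdef]; linarith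
  set q : ℝ := p / (p - 1) with hqdef
  have hpq : p.HolderConjugate q := (Real.holderConjugate_iff_eq_conjExponent hp1).2 (by
    rw [hqdef])
  have hq0 : 0 < q := hpq.symm.pos
  set E : ℝ := γ₀ / 2 with hEdef
  have hE : 0 < E := by simp only [hEdef]; linarith
  set θ : ℝ := (γ₀ - 4) / (4 * (p₀ : ℝ)) with hθdef
  -- the product measure on J × I
  set ν : Measure (ℝ × ℝ) := (volume.prod volume).restrict (Icc a' b' ×ˢ Icc a b) with hνdef
  set g : ℝ × ℝ → ℝ≥0∞ := fun z => ENNReal.ofReal |f z.1 - f z.2| with hgdef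
  have hgmeas : AEMeasurable g ν := grrG_meas hf hJS hS
  have hWmeas : AEMeasurable (grrW f p₀ γ₀) ν := grrW_meas' hf p₀ (by linarith) hJS hS
  -- Step A: the averages difference as an integral
  have hIconst : ∀ c : ℝ, (∫ _ in Icc a b, c) = L * c := by
    intro c
    rw [setIntegral_const, measureReal_def, Real.volume_Icc, smul_eq_mul,
      ENNReal.toReal_ofReal (by linarith)]
  have hJconst : ∀ c : ℝ, (∫ _ in Icc a' b', c) = (L / 2) * c := by
    intro c
    rw [setIntegral_const, measureReal_def, Real.volume_Icc, smul_eq_mul,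
      ENNReal.toReal_ofReal (by linarith), ← hlen]
  -- difference of averages
  have hconst_int : ∀ (s : Set ℝ) (c : ℝ), s ⊆ Icc α β → IntegrableOn (fun _ => c) s := by
    intro s c hs
    exact (integrableOn_const ((measure_mono hs).trans_lt
      (by rw [Real.volume_Icc]; exact ENNReal.ofReal_lt_top)).ne).mono_set (subset_refl _)
  have hG : ∀ u : ℝ, (∫ v in Icc a b, (f u - f v)) = L * f u - ∫ v in Icc a b, f v := by
    intro u
    rw [integral_sub (hconst_int _ _ hS) hfI, hIconst]
  have hdiff : grrAvg f a' b' - grrAvg f a b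
      = (L / 2)⁻¹ * L⁻¹ * ∫ u in Icc a' b', (∫ v in Icc a b, (f u - f v)) := by
    have : (∫ u in Icc a' b', (∫ v in Icc a b, (f u - f v)))
        = L * (∫ u in Icc a' b', f u) - (L / 2) * ∫ v in Icc a b, f v := by
      calc (∫ u in Icc a' b', (∫ v in Icc a b, (f u - f v)))
          = ∫ u in Icc a' b', (L * f u - ∫ v in Icc a b, f v) :=
            integral_congr_ae (Filter.Eventually.of_forall fun u => hG u)
        _ = (∫ u in Icc a' b', L * f u) - ∫ _ in Icc a' b', (∫ v in Icc a b, f v) :=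
            integral_sub (hfJ.const_mul L) (hconst_int _ _ hJS)
        _ = L * (∫ u in Icc a' b', f u) - (L / 2) * ∫ v in Icc a b, f v := by
            rw [integral_const_mul, hJconst]
    rw [this, grrAvg, grrAvg, ← hlen, hLdef]
    have h1 : b' - a' ≠ 0 := by linarith
    have h2 : b - a ≠ 0 := by linarith
    field_simp
  -- the function F u = ∫_I |f u - f v| dv and its continuity
  set Φ : ℝ → ℝ := fun c => ∫ v in Icc a b, |c - f v| with hΦdef
  have hΦint : ∀ c : ℝ, IntegrableOn (fun v => |c - f v|) (Icc a b) :=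
    fun c => ((continuousOn_const.sub (hf.mono hS)).abs).integrableOn_Icc
  have hΦlip : LipschitzWith (Real.toNNReal L) Φ := by
    apply LipschitzWith.of_dist_le_mul
    intro c c'
    rw [Real.dist_eq, Real.dist_eq]
    have h1 : Φ c - Φ c' = ∫ v in Icc a b, (|c - f v| - |c' - f v|) :=
      (integral_sub (hΦint c) (hΦint c')).symm
    rw [h1]
    calc |∫ v in Icc a b, (|c - f v| - |c' - f v|)|
        ≤ ∫ v in Icc a b, |(|c - f v| - |c' - f v|)| := by
          simpa [Real.norm_eq_abs] using
            norm_integral_le_integral_norm (μ := volume.restrict (Icc a b))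
              (fun v => |c - f v| - |c' - f v|)
      _ ≤ ∫ _ in Icc a b, |c - c'| := by
          apply integral_mono_of_nonneg
            (Filter.Eventually.of_forall fun v => abs_nonneg _)
            (hconst_int _ _ hS)
          refine Filter.Eventually.of_forall fun v => ?_
          have := abs_abs_sub_abs_le_abs_sub (c - f v) (c' - f v)
          simpa using this
      _ = Real.toNNReal L * |c - c'| := by
          rw [hIconst, Real.coe_toNNReal _ hL.le]
  have hF : ContinuousOn (fun u => Φ (f u)) (Icc α β) :=
    hΦlip.continuous.comp_continuousOn hf
  -- |inner integral| ≤ F u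
  have hinner : ∀ u : ℝ, |∫ v in Icc a b, (f u - f v)| ≤ Φ (f u) := by
    intro u
    simpa [Real.norm_eq_abs, hΦdef] using
      norm_integral_le_integral_norm (μ := volume.restrict (Icc a b))
        (fun v => f u - f v)
  -- bound the outer integral by ∫_J F
  have houter : |∫ u in Icc a' b', (∫ v in Icc a b, (f u - f v))|
      ≤ ∫ u in Icc a' b', Φ (f u) := by
    calc |∫ u in Icc a' b', (∫ v in Icc a b, (f u - f v))|
        ≤ ∫ u in Icc a' b', |∫ v in Icc a b, (f u - f v)| := by
          simpa [Real.norm_eq_abs] using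
            norm_integral_le_integral_norm (μ := volume.restrict (Icc a' b'))
              (fun u => ∫ v in Icc a b, (f u - f v))
      _ ≤ ∫ u in Icc a' b', Φ (f u) := by
          apply integral_mono_of_nonneg
            (Filter.Eventually.of_forall fun u => abs_nonneg _)
            ((hF.mono hJS).integrableOn_Icc)
          exact Filter.Eventually.of_forall fun u => hinner u
  -- boundedness of f
  obtain ⟨M, hM⟩ := isCompact_Icc.exists_bound_of_continuousOn hf
  -- inner lintegral is finite
  have hhfin : ∀ u ∈ Icc α β,
      (∫⁻ v in Icc a b, ENNReal.ofReal |f u - f v|) < ⊤ := by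
    intro u hu
    have hb : (∫⁻ v in Icc a b, ENNReal.ofReal |f u - f v|)
        ≤ ∫⁻ _ in Icc a b, ENNReal.ofReal (M + M) := by
      apply lintegral_mono_ae
      rw [ae_restrict_iff' measurableSet_Icc]
      refine Filter.Eventually.of_forall fun v hv => ?_
      apply ENNReal.ofReal_le_ofReal
      calc |f u - f v| ≤ |f u| + |f v| := abs_sub _ _
        _ ≤ M + M := by
            have h1 := hM u hu
            have h2 := hM v (hS hv)
            rw [Real.norm_eq_abs] at h1 h2
            linarith
    refine hb.trans_lt ?_
    rw [setLIntegral_const]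
    exact ENNReal.mul_lt_top ENNReal.ofReal_lt_top measure_Icc_lt_top
  have hΦeq : ∀ u : ℝ, Φ (f u) = (∫⁻ v in Icc a b, ENNReal.ofReal |f u - f v|).toReal := by
    intro u
    exact integral_eq_lintegral_of_nonneg_ae
      (Filter.Eventually.of_forall fun v => abs_nonneg _)
      (((continuousOn_const.sub (hf.mono hS)).abs).aestronglyMeasurable measurableSet_Icc)
  have hΦlint : ∫ u in Icc a' b', Φ (f u)
      = (∫⁻ u in Icc a' b', ∫⁻ v in Icc a b, ENNReal.ofReal |f u - f v|).toReal := by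
    rw [integral_eq_lintegral_of_nonneg_ae
      (Filter.Eventually.of_forall fun u => integral_nonneg fun v => abs_nonneg _)
      ((hF.mono hJS).aestronglyMeasurable measurableSet_Icc)]
    congr 1
    apply lintegral_congr_ae
    filter_upwards [ae_restrict_mem measurableSet_Icc] with u hu
    show ENNReal.ofReal (Φ (f u)) = _
    rw [hΦeq u, ENNReal.ofReal_toReal (hhfin u (hJS hu)).ne]
  have hprod : (∫⁻ u in Icc a' b', ∫⁻ v in Icc a b, ENNReal.ofReal |f u - f v|)
      = ∫⁻ z, g z ∂ν := by
    have hgmeas' : AEMeasurable g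
        ((volume.restrict (Icc a' b')).prod (volume.restrict (Icc a b))) := by
      rw [Measure.prod_restrict]; exact hgmeas
    rw [hνdef, ← Measure.prod_restrict]
    exact (lintegral_prod _ hgmeas').symm
  -- total mass of ν
  have hν_univ : ν univ = ENNReal.ofReal (L / 2) * ENNReal.ofReal L := by
    rw [hνdef, Measure.restrict_apply_univ, Measure.prod_prod, Real.volume_Icc,
      Real.volume_Icc, ← hlen, hLdef]
  -- Hölder's inequality
  have hHolder : (∫⁻ z, g z ∂ν) ≤ (∫⁻ z, g z ^ p ∂ν) ^ (1/p) * (ν univ) ^ (1/q) := by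
    have h := ENNReal.lintegral_mul_le_Lp_mul_Lq ν hpq hgmeas
      (aemeasurable_const (b := (1:ℝ≥0∞)))
    simpa [ENNReal.one_rpow, lintegral_one] using h
  -- pointwise bound for g^p
  have hWbound : ∀ z ∈ Icc a' b' ×ˢ Icc a b,
      g z ^ p ≤ grrW f p₀ γ₀ z * ENNReal.ofReal (L ^ E) := by
    rintro ⟨u, v⟩ ⟨hu, hv⟩
    show (ENNReal.ofReal |f u - f v|) ^ p ≤ _
    simp only [grrW]
    rw [ENNReal.ofReal_rpow_of_nonneg (abs_nonneg _) (by positivity),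
      ← ENNReal.ofReal_mul (by positivity)]
    apply ENNReal.ofReal_le_ofReal
    have hxp : |f u - f v| ^ p = |f u - f v| ^ (2 * p₀ : ℕ) := by
      rw [hpdef, ← Real.rpow_natCast |f u - f v| (2 * p₀)]
      norm_num
    rw [hxp]
    rcases eq_or_ne u v with h | h
    · subst h
      have : |f u - f u| ^ (2 * p₀ : ℕ) = 0 := by
        simp [pow_eq_zero_iff, Nat.mul_ne_zero two_ne_zero (by omega : p₀ ≠ 0)]
      rw [this]
      have h2 : (0:ℝ) ≤ |u - u| ^ (γ₀ / 2) := by positivity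
      positivity
    · have huv : 0 < |u - v| := abs_pos.2 (sub_ne_zero.2 h)
      have hu' := hsub hu
      have hle : |u - v| ≤ L := by
        rw [abs_sub_le_iff, hLdef]
        constructor <;> [linarith [hu'.1, hu'.2, hv.1, hv.2];
          linarith [hu'.1, hu'.2, hv.1, hv.2]]
      have hDpos : 0 < |u - v| ^ (γ₀ / 2) := Real.rpow_pos_of_pos huv _
      have hEe : |u - v| ^ (γ₀ / 2) ≤ L ^ E := by
        rw [hEdef]
        exact Real.rpow_le_rpow (abs_nonneg _) hle (by linarith)
      calc |f u - f v| ^ (2 * p₀ : ℕ)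
          = (|f u - f v| ^ (2 * p₀ : ℕ) / |u - v| ^ (γ₀ / 2)) * (|u - v| ^ (γ₀ / 2)) :=
            (div_mul_cancel₀ _ hDpos.ne').symm
        _ ≤ (|f u - f v| ^ (2 * p₀ : ℕ) / |u - v| ^ (γ₀ / 2)) * L ^ E :=
            mul_le_mul_of_nonneg_left hEe (by positivity)
  -- bound ∫⁻ g^p
  have hgp : (∫⁻ z, g z ^ p ∂ν) ≤ B * ENNReal.ofReal (L ^ E) := by
    calc (∫⁻ z, g z ^ p ∂ν)
        ≤ ∫⁻ z, grrW f p₀ γ₀ z * ENNReal.ofReal (L ^ E) ∂ν := by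
          apply lintegral_mono_ae
          rw [hνdef, ae_restrict_iff' (measurableSet_Icc.prod measurableSet_Icc)]
          exact Filter.Eventually.of_forall hWbound
      _ = (∫⁻ z, grrW f p₀ γ₀ z ∂ν) * ENNReal.ofReal (L ^ E) :=
          lintegral_mul_const'' _ hWmeas
      _ ≤ B * ENNReal.ofReal (L ^ E) := by
          apply mul_le_mul_left
          refine le_trans ?_ hBle
          exact lintegral_mono' (Measure.restrict_mono (prod_mono hJS hS) le_rfl) le_rfl
  -- combine, staying finite
  have hνfin : ν univ ≠ ⊤ := by
    rw [hν_univ]; exact (ENNReal.mul_lt_top ENNReal.ofReal_lt_top ENNReal.ofReal_lt_top).ne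
  have hfin : (B * ENNReal.ofReal (L ^ E)) ^ (1/p) * (ν univ) ^ (1/q) ≠ ⊤ := by
    apply ENNReal.mul_ne_top
    · exact ENNReal.rpow_ne_top_of_nonneg (by positivity)
        (ENNReal.mul_ne_top hB ENNReal.ofReal_ne_top)
    · exact ENNReal.rpow_ne_top_of_nonneg (by positivity) hνfin
  have hmain : (∫⁻ z, g z ∂ν) ≤ (B * ENNReal.ofReal (L ^ E)) ^ (1/p) * (ν univ) ^ (1/q) :=
    hHolder.trans (mul_le_mul' (ENNReal.rpow_le_rpow hgp (by positivity)) le_rfl)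
  set Br : ℝ := B.toReal with hBrdef
  have hBr : 0 ≤ Br := ENNReal.toReal_nonneg
  have hreal : ∫ u in Icc a' b', Φ (f u)
      ≤ (L ^ E * Br) ^ (1/p) * ((L / 2) * L) ^ (1/q) := by
    rw [hΦlint, hprod]
    refine le_trans (ENNReal.toReal_mono hfin hmain) ?_
    rw [ENNReal.toReal_mul, ← ENNReal.toReal_rpow, ← ENNReal.toReal_rpow,
      ENNReal.toReal_mul, ENNReal.toReal_ofReal (by positivity), hν_univ,
      ENNReal.toReal_mul, ENNReal.toReal_ofReal (by positivity),
      ENNReal.toReal_ofReal hL.le, mul_comm Br (L ^ E)]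
  -- final real computation
  have hp₀ne : (p₀:ℝ) ≠ 0 := by positivity
  have hpne : p ≠ 0 := by positivity
  have hp1ne : p - 1 ≠ 0 := by intro h; rw [sub_eq_zero] at h; exact absurd h.symm hp1.ne
  have hhalf : (L / 2)⁻¹ = 2 * L⁻¹ := by
    field_simp
  have hq1 : ((L / 2) * L) ^ (1/q) ≤ L ^ (1/q) * L ^ (1/q) := by
    rw [Real.mul_rpow (by positivity) hL.le]
    apply mul_le_mul_of_nonneg_right _ (by positivity)
    exact Real.rpow_le_rpow (by positivity) (by linarith) (by positivity)
  have h1 : (L ^ E * Br) ^ (1/p) = L ^ (E / p) * Br ^ (1/p) := by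
    rw [Real.mul_rpow (by positivity) hBr, ← Real.rpow_mul hL.le, mul_one_div]
  have key : L ^ (E / p) * L ^ (1/q) * L ^ (1/q) * (L⁻¹ * L⁻¹) = L ^ θ := by
    rw [← Real.rpow_neg_one L, ← Real.rpow_add hL, ← Real.rpow_add hL,
      ← Real.rpow_add hL, ← Real.rpow_add hL]
    congr 1
    rw [hqdef, hEdef, hpdef, hθdef]
    rw [hpdef] at hpne hp1ne
    field_simp
    ring
  have hpure : (L / 2)⁻¹ * L⁻¹ * ((L ^ E * Br) ^ (1/p) * ((L / 2) * L) ^ (1/q))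
      ≤ 2 * Br ^ (1/p) * L ^ θ := by
    calc (L / 2)⁻¹ * L⁻¹ * ((L ^ E * Br) ^ (1/p) * ((L / 2) * L) ^ (1/q))
        ≤ (L / 2)⁻¹ * L⁻¹ * ((L ^ E * Br) ^ (1/p) * (L ^ (1/q) * L ^ (1/q))) := by
          apply mul_le_mul_of_nonneg_left _ (by positivity)
          exact mul_le_mul_of_nonneg_left hq1 (by positivity)
      _ = 2 * Br ^ (1/p) * (L ^ (E / p) * L ^ (1/q) * L ^ (1/q) * (L⁻¹ * L⁻¹)) := by
          rw [h1, hhalf]; ring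
      _ = 2 * Br ^ (1/p) * L ^ θ := by rw [key]
  -- assemble
  rw [hdiff, abs_mul, abs_mul, abs_of_pos (by positivity : (0:ℝ) < (L/2)⁻¹),
    abs_of_pos (by positivity : (0:ℝ) < L⁻¹)]
  calc (L / 2)⁻¹ * L⁻¹ * |∫ u in Icc a' b', ∫ v in Icc a b, (f u - f v)|
      ≤ (L / 2)⁻¹ * L⁻¹ * ((L ^ E * Br) ^ (1/p) * ((L / 2) * L) ^ (1/q)) := by
        apply mul_le_mul_of_nonneg_left (houter.trans hreal) (by positivity)
    _ ≤ 2 * Br ^ (1/p) * L ^ θ := hpure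
    _ = 2 * B.toReal ^ (1 / (2 * (p₀ : ℝ))) * (b - a) ^ ((γ₀ - 4) / (4 * (p₀ : ℝ))) := by
        rw [hBrdef, hpdef, hθdef, hLdef]


noncomputable def grrSeq (t a b : ℝ) : ℕ → ℝ × ℝ
  | 0 => (a, b)
  | n + 1 =>
    let c := grrSeq t a b n
    if t ≤ (c.1 + c.2) / 2 then (c.1, (c.1 + c.2) / 2) else ((c.1 + c.2) / 2, c.2)

lemma grrSeq_prop {t a b : ℝ} (ht : t ∈ Icc a b) (n : ℕ) :
    (grrSeq t a b n).1 ≤ t ∧ t ≤ (grrSeq t a b n).2 ∧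
      (grrSeq t a b n).2 - (grrSeq t a b n).1 = (b - a) / 2 ^ n ∧
      a ≤ (grrSeq t a b n).1 ∧ (grrSeq t a b n).2 ≤ b := by
  induction n with
  | zero => exact ⟨ht.1, ht.2, by simp [grrSeq], le_refl a, le_refl b⟩
  | succ n ih =>
    obtain ⟨h1, h2, h3, h4, h5⟩ := ih
    have hX : (b - a) / 2 ^ (n + 1) = ((b - a) / 2 ^ n) / 2 := by
      rw [pow_succ]; ring
    simp only [grrSeq]
    by_cases hc : t ≤ ((grrSeq t a b n).1 + (grrSeq t a b n).2) / 2
    · rw [if_pos hc]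
      exact ⟨h1, hc, by rw [hX]; linarith, h4, by linarith⟩
    · rw [if_neg hc]
      push_neg at hc
      exact ⟨hc.le, h2, by rw [hX]; linarith, by linarith, h5⟩

lemma grrSeq_halve {t a b : ℝ} (ht : t ∈ Icc a b) (n : ℕ) :
    (grrSeq t a b (n + 1)).2 - (grrSeq t a b (n + 1)).1
      = ((grrSeq t a b n).2 - (grrSeq t a b n).1) / 2 := by
  obtain ⟨_, _, h3, _, _⟩ := grrSeq_prop ht n
  obtain ⟨_, _, h3', _, _⟩ := grrSeq_prop ht (n + 1)
  rw [h3, h3', pow_succ]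
  ring

lemma grrSeq_nested {t a b : ℝ} (ht : t ∈ Icc a b) (n : ℕ) :
    Icc (grrSeq t a b (n + 1)).1 (grrSeq t a b (n + 1)).2
      ⊆ Icc (grrSeq t a b n).1 (grrSeq t a b n).2 := by
  obtain ⟨h1, h2, _, _, _⟩ := grrSeq_prop ht n
  simp only [grrSeq]
  by_cases hc : t ≤ ((grrSeq t a b n).1 + (grrSeq t a b n).2) / 2
  · rw [if_pos hc]
    exact Icc_subset_Icc le_rfl (by linarith)
  · rw [if_neg hc]
    exact Icc_subset_Icc (by linarith) le_rfl

lemma grrSeq_sub {t a b : ℝ} (ht : t ∈ Icc a b) (n : ℕ) :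
    Icc (grrSeq t a b n).1 (grrSeq t a b n).2 ⊆ Icc a b := by
  obtain ⟨_, _, _, h4, h5⟩ := grrSeq_prop ht n
  exact Icc_subset_Icc h4 h5

lemma grr_chain {p₀ : ℕ} (hp₀ : 1 ≤ p₀) {γ₀ : ℝ} (hγ₀ : 4 < γ₀)
    {α β : ℝ} {f : ℝ → ℝ} (hf : ContinuousOn f (Icc α β))
    {B : ℝ≥0∞}
    (hBle : (∫⁻ z in Icc α β ×ˢ Icc α β, grrW f p₀ γ₀ z ∂(volume.prod volume)) ≤ B)
    (hB : B ≠ ⊤)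
    {a b : ℝ} (hab : a < b) (hS : Icc a b ⊆ Icc α β) {t : ℝ} (ht : t ∈ Icc a b) :
    |f t - grrAvg f a b| ≤
      2 * B.toReal ^ (1 / (2 * (p₀ : ℝ))) * (b - a) ^ ((γ₀ - 4) / (4 * (p₀ : ℝ)))
        * (1 - (1/2 : ℝ) ^ ((γ₀ - 4) / (4 * (p₀ : ℝ))))⁻¹ := by
  have hp₀R : (1:ℝ) ≤ (p₀:ℝ) := by exact_mod_cast hp₀
  have hba : (0:ℝ) < b - a := by linarith
  set θ : ℝ := (γ₀ - 4) / (4 * (p₀ : ℝ)) with hθdef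
  have hθ : 0 < θ := by
    rw [hθdef]; exact div_pos (by linarith) (by positivity)
  set r : ℝ := (1/2 : ℝ) ^ θ with hrdef
  have hr0 : 0 < r := Real.rpow_pos_of_pos (by norm_num) _
  have hr1 : r < 1 := Real.rpow_lt_one (by norm_num) (by norm_num) hθ
  have h1r : (0:ℝ) < 1 - r := by linarith
  set Br : ℝ := B.toReal with hBrdef
  have hBr : 0 ≤ Br := ENNReal.toReal_nonneg
  set A : ℕ → ℝ := fun n => grrAvg f (grrSeq t a b n).1 (grrSeq t a b n).2 with hAdef
  set K : ℝ := 2 * Br ^ (1 / (2 * (p₀ : ℝ))) * (b - a) ^ θ with hKdef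
  have hK : 0 ≤ K := by
    rw [hKdef]
    have h1 : (0:ℝ) ≤ (b - a) ^ θ := Real.rpow_nonneg (by linarith) _
    have h2 : (0:ℝ) ≤ Br ^ (1 / (2 * (p₀ : ℝ))) := Real.rpow_nonneg hBr _
    positivity
  -- step bound
  have hstep : ∀ n : ℕ, |A (n + 1) - A n| ≤ K * r ^ n := by
    intro n
    obtain ⟨h1, h2, h3, h4, h5⟩ := grrSeq_prop ht n
    have hlen : (0:ℝ) < (b - a) / 2 ^ n := by positivity
    have habn : (grrSeq t a b n).1 < (grrSeq t a b n).2 := by linarith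
    have hbound := grr_step hp₀ hγ₀ hf hBle hB habn
      ((grrSeq_sub ht n).trans hS) (grrSeq_nested ht n) (by rw [grrSeq_halve ht n])
    refine hbound.trans ?_
    rw [h3]
    have hpow : ((b - a) / 2 ^ n) ^ θ = (b - a) ^ θ * r ^ n := by
      rw [div_eq_mul_inv, ← inv_pow, Real.mul_rpow (by linarith) (by positivity),
        hrdef, ← Real.rpow_natCast ((2:ℝ)⁻¹) n, ← Real.rpow_natCast ((1/2:ℝ) ^ θ) n,
        ← Real.rpow_mul (by norm_num), ← Real.rpow_mul (by norm_num)]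
      norm_num [mul_comm]
    rw [hpow, hKdef]
    ring_nf
    exact le_of_eq (by rw [← hBrdef]; ring)
  -- partial sums bound
  have hsum : ∀ N : ℕ, |A N - A 0| ≤ K * (1 - r)⁻¹ := by
    intro N
    have htel : dist (A 0) (A N) ≤ ∑ i ∈ Finset.range N, dist (A i) (A (i + 1)) :=
      dist_le_range_sum_dist A N
    have hsum2 : ∑ i ∈ Finset.range N, dist (A i) (A (i + 1))
        ≤ ∑ i ∈ Finset.range N, K * r ^ i := by
      apply Finset.sum_le_sum
      intro i _
      rw [Real.dist_eq, abs_sub_comm]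
      exact hstep i
    have hgeom0 : ∑ i ∈ Finset.range N, r ^ i ≤ (1 - r)⁻¹ := by
      have heq : (r ^ N - 1) / (r - 1) = (1 - r ^ N) / (1 - r) := by
        rw [← neg_sub (1:ℝ) (r ^ N), ← neg_sub (1:ℝ) r, neg_div_neg_eq]
      rw [geom_sum_eq hr1.ne N, heq, div_le_iff₀ h1r, inv_mul_cancel₀ h1r.ne']
      have : (0:ℝ) < r ^ N := pow_pos hr0 N
      linarith
    have hgeom : ∑ i ∈ Finset.range N, K * r ^ i ≤ K * (1 - r)⁻¹ := by
      rw [← Finset.mul_sum]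
      exact mul_le_mul_of_nonneg_left hgeom0 hK
    rw [abs_sub_comm, ← Real.dist_eq]
    exact htel.trans (hsum2.trans hgeom)
  -- convergence of averages to f t
  have hconv : Filter.Tendsto A Filter.atTop (nhds (f t)) := by
    rw [Metric.tendsto_atTop]
    intro ε hε
    have hct : ContinuousWithinAt f (Icc α β) t := hf t (hS ht)
    rw [Metric.continuousWithinAt_iff] at hct
    obtain ⟨δ, hδ, hδ'⟩ := hct (ε/2) (by linarith)
    obtain ⟨N, hN⟩ := exists_pow_lt_of_lt_one (x := δ / (b - a)) (y := (1/2:ℝ))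
      (by positivity) (by norm_num)
    refine ⟨N, fun n hn => ?_⟩
    obtain ⟨h1, h2, h3, h4, h5⟩ := grrSeq_prop ht n
    have hlen : (0:ℝ) < (b - a) / 2 ^ n := by positivity
    have habn : (grrSeq t a b n).1 < (grrSeq t a b n).2 := by linarith
    have hlt : (b - a) / 2 ^ n < δ := by
      have h2n : ((1:ℝ)/2) ^ n ≤ ((1:ℝ)/2) ^ N :=
        pow_le_pow_of_le_one (by norm_num) (by norm_num) hn
      have hx : ((1:ℝ)/2) ^ n < δ / (b - a) := lt_of_le_of_lt h2n hN
      have heq : (b - a) / 2 ^ n = ((1:ℝ)/2) ^ n * (b - a) := by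
        rw [div_eq_mul_inv, ← inv_pow]
        ring
      rw [heq]
      calc ((1:ℝ)/2) ^ n * (b - a) < (δ / (b - a)) * (b - a) :=
            mul_lt_mul_of_pos_right hx hba
        _ = δ := by field_simp
    set a' := (grrSeq t a b n).1 with ha'def
    set b' := (grrSeq t a b n).2 with hb'def
    have hsubS : Icc a' b' ⊆ Icc α β := (grrSeq_sub ht n).trans hS
    have hbnd : ∀ v ∈ Icc a' b', |f v - f t| ≤ ε/2 := by
      intro v hv
      have hvS : v ∈ Icc α β := hsubS hv
      have hdist : dist v t < δ := by
        rw [Real.dist_eq]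
        have : |v - t| ≤ b' - a' := by
          rw [abs_sub_le_iff]
          constructor <;> linarith [hv.1, hv.2]
        calc |v - t| ≤ b' - a' := this
          _ = (b - a) / 2 ^ n := h3
          _ < δ := hlt
      have := hδ' hvS hdist
      rw [Real.dist_eq] at this
      exact this.le
    have hfI' : IntegrableOn f (Icc a' b') := (hf.mono hsubS).integrableOn_Icc
    have hconst_int : IntegrableOn (fun _ => f t) (Icc a' b') :=
      integrableOn_const measure_Icc_lt_top.ne
    have hconst : (∫ _ in Icc a' b', f t) = (b' - a') * f t := by
      rw [setIntegral_const, measureReal_def, Real.volume_Icc, smul_eq_mul,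
        ENNReal.toReal_ofReal (by linarith)]
    have hformula : A n - f t = (b' - a')⁻¹ * ∫ v in Icc a' b', (f v - f t) := by
      rw [integral_sub hfI' hconst_int, hconst, hAdef]
      show (b' - a')⁻¹ * (∫ x in Icc a' b', f x) - f t = _
      have hne : b' - a' ≠ 0 := by linarith
      field_simp
    have hconst2_int : IntegrableOn (fun _ => ε/2) (Icc a' b') :=
      integrableOn_const measure_Icc_lt_top.ne
    have habs : |A n - f t| ≤ (b' - a')⁻¹ * ((b' - a') * (ε/2)) := by
      rw [hformula, abs_mul, abs_of_pos (inv_pos.2 (by linarith : (0:ℝ) < b' - a'))]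
      apply mul_le_mul_of_nonneg_left _ (inv_pos.2 (by linarith : (0:ℝ) < b' - a')).le
      calc |∫ v in Icc a' b', (f v - f t)|
          ≤ ∫ v in Icc a' b', |f v - f t| := by
            simpa [Real.norm_eq_abs] using
              norm_integral_le_integral_norm (μ := volume.restrict (Icc a' b'))
                (fun v => f v - f t)
        _ ≤ ∫ _ in Icc a' b', (ε/2) := by
            apply integral_mono_of_nonneg
              (Filter.Eventually.of_forall fun v => abs_nonneg _) hconst2_int
            exact (ae_restrict_iff' measurableSet_Icc).2
              (Filter.Eventually.of_forall fun v hv => hbnd v hv)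
        _ = (b' - a') * (ε/2) := by
            rw [setIntegral_const, measureReal_def, Real.volume_Icc, smul_eq_mul,
              ENNReal.toReal_ofReal (by linarith)]
    have hne : b' - a' ≠ 0 := by linarith
    have : (b' - a')⁻¹ * ((b' - a') * (ε/2)) = ε/2 := by
      field_simp
    rw [Real.dist_eq]
    rw [this] at habs
    linarith
  -- conclude
  have htend : Filter.Tendsto (fun N => |A N - A 0|) Filter.atTop (nhds (|f t - A 0|)) :=
    ((hconv.sub_const (A 0)).abs)
  have hfinal : |f t - A 0| ≤ K * (1 - r)⁻¹ :=
    le_of_tendsto htend (Filter.Eventually.of_forall hsum)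
  have hA0 : A 0 = grrAvg f a b := by simp [hAdef, grrSeq]
  rw [hA0] at hfinal
  calc |f t - grrAvg f a b| ≤ K * (1 - r)⁻¹ := hfinal
    _ = 2 * Br ^ (1 / (2 * (p₀ : ℝ))) * (b - a) ^ θ * (1 - r)⁻¹ := by rw [hKdef]

/-- Garsia–Rodemich–Rumsey estimate with the parabolic metric `ρ(t,s) = |t-s|^{1/2}`:
for a positive integer `p₀` and `γ₀ > 4` there is a constant `c = c(p₀, γ₀) > 0` such that
for every compact interval `[α, β]`, every continuous `f` on it and all `t, s ∈ [α, β]`,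
`|f t - f s| ≤ c |t-s|^{(γ₀-4)/(4p₀)} (∫∫ |f u - f v|^{2p₀} / |u-v|^{γ₀/2})^{1/(2p₀)}`,
stated in `ℝ≥0∞` so that it is trivially true when the double integral is infinite. -/
theorem stmt5 (p₀ : ℕ) (hp₀ : 1 ≤ p₀) (γ₀ : ℝ) (hγ₀ : 4 < γ₀) :
    ∃ c : ℝ, 0 < c ∧ ∀ (α β : ℝ), α < β → ∀ f : ℝ → ℝ, ContinuousOn f (Icc α β) →
      ∀ t ∈ Icc α β, ∀ s ∈ Icc α β,
        ENNReal.ofReal (|f t - f s|) ≤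
          ENNReal.ofReal (c * |t - s| ^ ((γ₀ - 4) / (4 * (p₀ : ℝ)))) *
            (∫⁻ u in Icc α β, ∫⁻ v in Icc α β,
                ENNReal.ofReal (|f u - f v| ^ (2 * p₀) / |u - v| ^ (γ₀ / 2))) ^
              (1 / (2 * (p₀ : ℝ))) := by
  have hp₀R : (1:ℝ) ≤ (p₀:ℝ) := by exact_mod_cast hp₀
  set θ : ℝ := (γ₀ - 4) / (4 * (p₀ : ℝ)) with hθdef
  have hθ : 0 < θ := by
    rw [hθdef]; exact div_pos (by linarith) (by positivity)
  set r : ℝ := (1/2 : ℝ) ^ θ with hrdef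
  have hr0 : 0 < r := Real.rpow_pos_of_pos (by norm_num) _
  have hr1 : r < 1 := Real.rpow_lt_one (by norm_num) (by norm_num) hθ
  have h1r : (0:ℝ) < 1 - r := by linarith
  refine ⟨4 * (1 - r)⁻¹, by positivity, ?_⟩
  intro α β hαβ f hf t ht s hs
  set B : ℝ≥0∞ := ∫⁻ u in Icc α β, ∫⁻ v in Icc α β,
      ENNReal.ofReal (|f u - f v| ^ (2 * p₀) / |u - v| ^ (γ₀ / 2)) with hBdef
  rcases eq_or_ne t s with hts | hts
  · subst hts
    simp
  · set a : ℝ := min t s with hadef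
    set b : ℝ := max t s with hbdef
    have hab : a < b := min_lt_max.2 hts
    have hd : b - a = |t - s| := by rw [hadef, hbdef, max_sub_min_eq_abs t s, abs_sub_comm]
    have hd0 : 0 < |t - s| := abs_pos.2 (sub_ne_zero.2 hts)
    have hSsub : Icc a b ⊆ Icc α β :=
      Icc_subset_Icc (le_min ht.1 hs.1) (max_le ht.2 hs.2)
    have htI : t ∈ Icc a b := ⟨min_le_left t s, le_max_left t s⟩
    have hsI : s ∈ Icc a b := ⟨min_le_right t s, le_max_right t s⟩
    rcases eq_or_ne B ⊤ with hB | hB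
    · rw [hB, ENNReal.top_rpow_of_pos (by positivity), ENNReal.mul_top]
      · exact le_top
      · refine (ENNReal.ofReal_pos.2 ?_).ne'
        have : (0:ℝ) < |t - s| ^ θ := Real.rpow_pos_of_pos hd0 _
        positivity
    · have hBle : (∫⁻ z in Icc α β ×ˢ Icc α β, grrW f p₀ γ₀ z ∂(volume.prod volume)) ≤ B :=
        le_of_eq (grrB_eq hf p₀ (by linarith)).symm
      set Br : ℝ := B.toReal with hBrdef
      have hBr : 0 ≤ Br := ENNReal.toReal_nonneg
      have h1 := grr_chain hp₀ hγ₀ hf hBle hB hab hSsub htI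
      have h2 := grr_chain hp₀ hγ₀ hf hBle hB hab hSsub hsI
      have hreal : |f t - f s| ≤
          4 * (1 - r)⁻¹ * |t - s| ^ θ * Br ^ (1 / (2 * (p₀ : ℝ))) := by
        have htri : |f t - f s| ≤ |f t - grrAvg f a b| + |f s - grrAvg f a b| := by
          have := abs_sub_abs_le_abs_sub (f t - grrAvg f a b) (f s - grrAvg f a b)
          calc |f t - f s| = |(f t - grrAvg f a b) - (f s - grrAvg f a b)| := by ring_nf
            _ ≤ |f t - grrAvg f a b| + |f s - grrAvg f a b| := abs_sub _ _
        rw [← hd]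
        calc |f t - f s| ≤ |f t - grrAvg f a b| + |f s - grrAvg f a b| := htri
          _ ≤ 2 * (2 * Br ^ (1 / (2 * (p₀ : ℝ))) * (b - a) ^ θ * (1 - r)⁻¹) := by
              rw [two_mul]
              exact add_le_add h1 h2
          _ = 4 * (1 - r)⁻¹ * (b - a) ^ θ * Br ^ (1 / (2 * (p₀ : ℝ))) := by ring
      have hBrw : B ^ (1 / (2 * (p₀ : ℝ)))
          = ENNReal.ofReal (Br ^ (1 / (2 * (p₀ : ℝ)))) := by
        conv_lhs => rw [← ENNReal.ofReal_toReal hB]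
        rw [ENNReal.ofReal_rpow_of_nonneg hBr (by positivity)]
      rw [hBrw, ← ENNReal.ofReal_mul]
      · apply ENNReal.ofReal_le_ofReal
        calc |f t - f s| ≤ 4 * (1 - r)⁻¹ * |t - s| ^ θ * Br ^ (1 / (2 * (p₀ : ℝ))) := hreal
          _ = 4 * (1 - r)⁻¹ * |t - s| ^ θ * Br ^ (1 / (2 * (p₀ : ℝ))) := rfl
      · have : (0:ℝ) ≤ |t - s| ^ θ := Real.rpow_nonneg (abs_nonneg _) _
        positivity
end

section
/- Let p₀ be a positive integer and γ₀ ∈ ℝ with p₀ − 2 > γ₀ > 4. There exists a constant c > 0, depending only on p₀ and γ₀, such that for all s₀ ∈ ℝ, δ₁ > 0, a > 0, r ∈ [s₀, s₀ + δ₁], and every continuous function f : [s₀, r] → ℝ: if ∫_{s₀}^{r} ∫_{s₀}^{r} (f(t) − f(s))^{2p₀} / |t − s|^{γ₀/2} ds dt ≤ c a^{2p₀} δ₁^{−(γ₀ − 4)/2}, then sup_{t ∈ [s₀, r]} |f(t) − f(s₀)| ≤ a. -/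
open MeasureTheory Set Real
open scoped ENNReal

lemma grr_root {q : ℕ} (hq : q ≠ 0) {x E : ℝ} (hx : 0 ≤ x) (hE : 0 ≤ E)
    (h : x ^ q ≤ E) : x ≤ E ^ ((q : ℝ))⁻¹ := by
  have hq' : (q : ℝ) ≠ 0 := Nat.cast_ne_zero.2 hq
  have : (x ^ q : ℝ) ^ ((q : ℝ))⁻¹ ≤ E ^ ((q : ℝ))⁻¹ :=
    Real.rpow_le_rpow (pow_nonneg hx q) h (by positivity)
  calc x = (x ^ (q : ℝ)) ^ ((q : ℝ))⁻¹ := by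
            rw [← Real.rpow_natCast x q] at *
            rw [← Real.rpow_mul hx, mul_inv_cancel₀ hq', Real.rpow_one]
    _ = (x ^ q : ℝ) ^ ((q : ℝ))⁻¹ := by rw [Real.rpow_natCast]
    _ ≤ E ^ ((q : ℝ))⁻¹ := this

lemma grr_avg_abs_le {a b C : ℝ} (hab : a < b) {h : ℝ → ℝ}
    (hi : IntegrableOn h (Icc a b)) (hC : ∀ y ∈ Icc a b, |h y| ≤ C) :
    |⨍ y in Icc a b, h y| ≤ C := by
  have hm : (0:ℝ) < b - a := by linarith
  have hint : ‖∫ y in Icc a b, h y‖ ≤ C * (volume (Icc a b)).toReal := by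
    apply norm_setIntegral_le_of_norm_le_const (by simp [Real.volume_Icc])
    intro x hx; simpa using hC x hx
  rw [setAverage_eq, measureReal_def, Real.volume_Icc, ENNReal.toReal_ofReal hm.le] at *
  rw [smul_eq_mul, abs_mul, abs_inv, abs_of_pos hm]
  rw [Real.norm_eq_abs] at hint
  calc (b-a)⁻¹ * |∫ y in Icc a b, h y| ≤ (b-a)⁻¹ * (C * (b-a)) := by
        apply mul_le_mul_of_nonneg_left _ (by positivity); exact hint
    _ = C := by field_simp

lemma grr_avg_sub_const {a b : ℝ} (hab : a < b) {h : ℝ → ℝ}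
    (hi : IntegrableOn h (Icc a b)) (c : ℝ) :
    ⨍ y in Icc a b, (h y - c) = (⨍ y in Icc a b, h y) - c := by
  have hm : (0:ℝ) < b - a := by linarith
  rw [setAverage_eq, setAverage_eq, measureReal_def, Real.volume_Icc, ENNReal.toReal_ofReal hm.le]
  rw [integral_sub hi (integrableOn_const measure_Icc_lt_top.ne)]
  rw [setIntegral_const, measureReal_def, Real.volume_Icc, ENNReal.toReal_ofReal hm.le]
  simp only [smul_eq_mul]
  field_simp

lemma grr_const_sub_avg {a b : ℝ} (hab : a < b) {h : ℝ → ℝ}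
    (hi : IntegrableOn h (Icc a b)) (c : ℝ) :
    ⨍ y in Icc a b, (c - h y) = c - ⨍ y in Icc a b, h y := by
  have h1 : ⨍ y in Icc a b, (c - h y) = - ⨍ y in Icc a b, (h y - c) := by
    rw [← average_neg]; congr 1 with y; ring
  rw [h1, grr_avg_sub_const hab hi c]; ring

lemma grr_integrable_inner {a₁ b₁ a₂ b₂ C : ℝ} (h2 : a₂ ≤ b₂)
    {G : ℝ → ℝ → ℝ} (hG : Continuous fun p : ℝ × ℝ => G p.1 p.2)
    (hC : ∀ u ∈ Icc a₁ b₁, ∀ v ∈ Icc a₂ b₂, |G u v| ≤ C) :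
    IntegrableOn (fun u => ∫ v in Icc a₂ b₂, G u v) (Icc a₁ b₁) := by
  have hsm : StronglyMeasurable fun u => ∫ v in Icc a₂ b₂, G u v :=
    (hG.stronglyMeasurable).integral_prod_right'
  refine Integrable.mono' (integrable_const (C * (b₂ - a₂))) hsm.aestronglyMeasurable ?_
  rw [ae_restrict_iff' measurableSet_Icc]
  filter_upwards with u hu
  rw [Real.norm_eq_abs]
  have : ‖∫ v in Icc a₂ b₂, G u v‖ ≤ C * (volume (Icc a₂ b₂)).toReal :=
    norm_setIntegral_le_of_norm_le_const measure_Icc_lt_top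
      (fun v hv => by simpa using hC u hu v hv)
  rw [Real.norm_eq_abs, Real.volume_Icc, ENNReal.toReal_ofReal (by linarith)] at this
  exact this

lemma grr_lemB (F : ℝ → ℝ) (hF : Continuous F) (q : ℕ) (hqe : Even q) (e : ℝ) (he : 0 ≤ e)
    {s₀ r a₁ b₁ a₂ b₂ : ℝ} (h1 : a₂ ≤ a₁) (h2 : a₁ ≤ b₁) (h3 : b₁ ≤ b₂) (h4 : a₂ < b₂)
    (hs : s₀ ≤ a₂) (hr : b₂ ≤ r)
    (hfin : (∫⁻ u in Icc s₀ r, ∫⁻ v in Icc s₀ r,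
        ENNReal.ofReal ((F u - F v) ^ q / |u - v| ^ e)) ≠ ⊤) :
    ∫ u in Icc a₁ b₁, (∫ v in Icc a₂ b₂, (F u - F v) ^ q) ≤
      (b₂ - a₂) ^ e *
        (∫⁻ u in Icc s₀ r, ∫⁻ v in Icc s₀ r,
          ENNReal.ofReal ((F u - F v) ^ q / |u - v| ^ e)).toReal := by
  set Y : ℝ≥0∞ := ∫⁻ u in Icc s₀ r, ∫⁻ v in Icc s₀ r,
      ENNReal.ofReal ((F u - F v) ^ q / |u - v| ^ e) with hYdef
  set m : ℝ := b₂ - a₂ with hmdef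
  have hm : (0:ℝ) < m := by simp only [hmdef]; linarith
  have hme : (0:ℝ) < m ^ e := Real.rpow_pos_of_pos hm e
  have hg0 : ∀ u v : ℝ, (0:ℝ) ≤ (F u - F v) ^ q := fun u v => hqe.pow_nonneg _
  have hgc : Continuous fun p : ℝ × ℝ => (F p.1 - F p.2) ^ q := by fun_prop
  set G : ℝ → ℝ≥0∞ := fun u => ∫⁻ v in Icc a₂ b₂, ENNReal.ofReal ((F u - F v) ^ q) with hGdef
  set H : ℝ → ℝ≥0∞ := fun u => ∫⁻ v in Icc s₀ r,
      ENNReal.ofReal ((F u - F v) ^ q / |u - v| ^ e) with hHdef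
  have hmeas : Measurable fun p : ℝ × ℝ => ENNReal.ofReal ((F p.1 - F p.2) ^ q) :=
    ENNReal.measurable_ofReal.comp hgc.measurable
  have hGmeas : Measurable G := hmeas.lintegral_prod_right'
  -- G u is finite
  have hGfin : ∀ u, G u < ⊤ := by
    intro u
    obtain ⟨M, hM⟩ := isCompact_Icc.exists_bound_of_continuousOn
      (f := fun v => (F u - F v) ^ q) (by fun_prop)
    calc G u ≤ ∫⁻ _ in Icc a₂ b₂, ENNReal.ofReal M := by
          apply lintegral_mono_ae
          rw [ae_restrict_iff' measurableSet_Icc]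
          filter_upwards with v hv
          exact ENNReal.ofReal_le_ofReal ((le_abs_self _).trans (hM v hv))
      _ = ENNReal.ofReal M * volume (Icc a₂ b₂) := by rw [setLIntegral_const]
      _ < ⊤ := ENNReal.mul_lt_top ENNReal.ofReal_lt_top measure_Icc_lt_top
  -- rewrite the real double integral via lintegrals
  have hre : ∫ u in Icc a₁ b₁, (∫ v in Icc a₂ b₂, (F u - F v) ^ q) =
      (∫⁻ u in Icc a₁ b₁, G u).toReal := by
    have hinner : ∀ u : ℝ, (∫ v in Icc a₂ b₂, (F u - F v) ^ q) = (G u).toReal := by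
      intro u
      rw [hGdef]
      rw [integral_eq_lintegral_of_nonneg_ae (Filter.Eventually.of_forall fun v => hg0 u v)
        (Continuous.aestronglyMeasurable (by fun_prop))]
    simp_rw [hinner]
    rw [integral_toReal (hGmeas.aemeasurable) (Filter.Eventually.of_forall fun u => hGfin u)]
  rw [hre]
  -- core bound : ∫⁻ G over J' ≤ ofReal (m ^ e) * Y
  have hcore : (∫⁻ u in Icc a₁ b₁, G u) ≤ ENNReal.ofReal (m ^ e) * Y := by
    have hpt : ∀ u ∈ Icc a₁ b₁, G u ≤ ENNReal.ofReal (m ^ e) * H u := by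
      intro u hu
      have huJ : u ∈ Icc a₂ b₂ := ⟨h1.trans hu.1, hu.2.trans h3⟩
      have hstep : ∀ v ∈ Icc a₂ b₂, v ≠ u →
          ENNReal.ofReal ((F u - F v) ^ q) ≤
            ENNReal.ofReal (m ^ e) * ENNReal.ofReal ((F u - F v) ^ q / |u - v| ^ e) := by
        intro v hv hne
        rw [← ENNReal.ofReal_mul hme.le]
        apply ENNReal.ofReal_le_ofReal
        have habs : (0:ℝ) < |u - v| := abs_pos.2 (sub_ne_zero.2 (Ne.symm hne))
        have habsle : |u - v| ≤ m := by
          rw [abs_sub_le_iff]; constructor <;> [linarith [huJ.1, huJ.2, hv.1, hv.2];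
            linarith [huJ.1, huJ.2, hv.1, hv.2]]
        have h1e : (1:ℝ) ≤ m ^ e / |u - v| ^ e := by
          rw [one_le_div (Real.rpow_pos_of_pos habs e)]
          exact Real.rpow_le_rpow habs.le habsle he
        calc (F u - F v) ^ q = (F u - F v) ^ q * 1 := by ring
          _ ≤ (F u - F v) ^ q * (m ^ e / |u - v| ^ e) :=
              mul_le_mul_of_nonneg_left h1e (hg0 u v)
          _ = m ^ e * ((F u - F v) ^ q / |u - v| ^ e) := by ring
      calc G u ≤ ∫⁻ v in Icc a₂ b₂,
            ENNReal.ofReal (m ^ e) * ENNReal.ofReal ((F u - F v) ^ q / |u - v| ^ e) := by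
            apply lintegral_mono_ae
            have hne : ∀ᵐ v : ℝ ∂(volume.restrict (Icc a₂ b₂)), v ≠ u :=
              ae_restrict_of_ae (by
                have : volume ({u} : Set ℝ) = 0 := measure_singleton u
                rw [ae_iff]; convert this using 2; simp [Set.ext_iff])
            rw [ae_restrict_iff' measurableSet_Icc] at hne ⊢
            filter_upwards [hne] with v hv hvJ
            exact hstep v hvJ (hv hvJ)
        _ = ENNReal.ofReal (m ^ e) * ∫⁻ v in Icc a₂ b₂,
              ENNReal.ofReal ((F u - F v) ^ q / |u - v| ^ e) :=
            lintegral_const_mul' _ _ ENNReal.ofReal_ne_top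
        _ ≤ ENNReal.ofReal (m ^ e) * H u := by
            apply mul_le_mul_right
            exact lintegral_mono_set (Icc_subset_Icc hs hr)
    calc (∫⁻ u in Icc a₁ b₁, G u) ≤
        ∫⁻ u in Icc a₁ b₁, ENNReal.ofReal (m ^ e) * H u := by
          apply lintegral_mono_ae
          rw [ae_restrict_iff' measurableSet_Icc]
          filter_upwards with u hu using hpt u hu
      _ = ENNReal.ofReal (m ^ e) * ∫⁻ u in Icc a₁ b₁, H u :=
          lintegral_const_mul' _ _ ENNReal.ofReal_ne_top
      _ ≤ ENNReal.ofReal (m ^ e) * Y := by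
          apply mul_le_mul_right
          exact lintegral_mono_set (Icc_subset_Icc (hs.trans h1) (h3.trans hr))
  have hrhs : (ENNReal.ofReal (m ^ e) * Y).toReal = m ^ e * Y.toReal := by
    rw [ENNReal.toReal_mul, ENNReal.toReal_ofReal hme.le]
  rw [← hrhs]
  exact ENNReal.toReal_mono (ENNReal.mul_ne_top ENNReal.ofReal_ne_top hfin) hcore

set_option maxHeartbeats 2000000 in
lemma grr_lemC (F : ℝ → ℝ) (hF : Continuous F) (q : ℕ) (hq : 0 < q) (hqe : Even q)
    {a₁ b₁ a₂ b₂ : ℝ} (h1 : a₂ ≤ a₁) (h2 : a₁ < b₁) (h3 : b₁ ≤ b₂) :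
    |(⨍ x in Icc a₁ b₁, F x) - ⨍ x in Icc a₂ b₂, F x| ^ q ≤
      ((b₁ - a₁) * (b₂ - a₂))⁻¹ *
        ∫ u in Icc a₁ b₁, (∫ v in Icc a₂ b₂, (F u - F v) ^ q) := by
  have hm' : (0:ℝ) < b₁ - a₁ := by linarith
  have hm : (0:ℝ) < b₂ - a₂ := by linarith
  have hab2 : a₂ < b₂ := by linarith
  have hsub : Icc a₁ b₁ ⊆ Icc a₂ b₂ := Icc_subset_Icc h1 h3
  obtain ⟨M, hM⟩ := isCompact_Icc.exists_bound_of_continuousOn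
    (f := F) (s := Icc a₂ b₂) hF.continuousOn
  have hbnd : ∀ u ∈ Icc a₂ b₂, ∀ v ∈ Icc a₂ b₂, |F u - F v| ≤ 2 * M := by
    intro u hu v hv
    have := hM u hu; have := hM v hv
    rw [Real.norm_eq_abs] at *
    calc |F u - F v| ≤ |F u| + |F v| := abs_sub _ _
      _ ≤ 2 * M := by linarith
  set ψ : ℝ → ℝ := fun u => ⨍ v in Icc a₂ b₂, |F u - F v| with hψdef
  set χ : ℝ → ℝ := fun u => ⨍ v in Icc a₂ b₂, |F u - F v| ^ q with hχdef
  have hvol : (volume (Icc a₂ b₂)).toReal = b₂ - a₂ := by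
    rw [Real.volume_Icc, ENNReal.toReal_ofReal hm.le]
  have hvol' : (volume (Icc a₁ b₁)).toReal = b₁ - a₁ := by
    rw [Real.volume_Icc, ENNReal.toReal_ofReal hm'.le]
  have hiF : ∀ s t : ℝ, IntegrableOn F (Icc s t) := fun s t => hF.integrableOn_Icc
  have hψ_eq : ∀ u, ψ u = (b₂ - a₂)⁻¹ * ∫ v in Icc a₂ b₂, |F u - F v| := by
    intro u; simp only [hψdef]; rw [setAverage_eq, measureReal_def, hvol, smul_eq_mul]
  have hχ_eq : ∀ u, χ u = (b₂ - a₂)⁻¹ * ∫ v in Icc a₂ b₂, |F u - F v| ^ q := by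
    intro u; simp only [hχdef]; rw [setAverage_eq, measureReal_def, hvol, smul_eq_mul]
  have hcont1 : Continuous fun p : ℝ × ℝ => |F p.1 - F p.2| := by fun_prop
  have hcont2 : Continuous fun p : ℝ × ℝ => |F p.1 - F p.2| ^ q := by fun_prop
  have hii1 : IntegrableOn (fun u => ∫ v in Icc a₂ b₂, |F u - F v|) (Icc a₁ b₁) :=
    grr_integrable_inner (a₂ := a₂) (b₂ := b₂) (by linarith) hcont1 (fun u hu v hv => by
      rw [abs_abs]; exact hbnd u (hsub hu) v hv)
  have hii2 : IntegrableOn (fun u => ∫ v in Icc a₂ b₂, |F u - F v| ^ q) (Icc a₁ b₁) :=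
    grr_integrable_inner (a₂ := a₂) (b₂ := b₂) (by linarith) hcont2 (fun u hu v hv => by
      rw [abs_of_nonneg (pow_nonneg (abs_nonneg _) q)]
      exact pow_le_pow_left₀ (abs_nonneg _) (hbnd u (hsub hu) v hv) q)
  have hψint : IntegrableOn ψ (Icc a₁ b₁) := by
    have h := hii1.const_mul ((b₂ - a₂)⁻¹)
    have he : ψ = fun u => (b₂ - a₂)⁻¹ * ∫ v in Icc a₂ b₂, |F u - F v| := funext hψ_eq
    rw [he]; exact h
  have hχint : IntegrableOn χ (Icc a₁ b₁) := by
    have h := hii2.const_mul ((b₂ - a₂)⁻¹)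
    have he : χ = fun u => (b₂ - a₂)⁻¹ * ∫ v in Icc a₂ b₂, |F u - F v| ^ q := funext hχ_eq
    rw [he]; exact h
  have hψ0 : ∀ u, 0 ≤ ψ u := by
    intro u; rw [hψ_eq]
    have : 0 ≤ ∫ v in Icc a₂ b₂, |F u - F v| :=
      setIntegral_nonneg measurableSet_Icc (fun v _ => abs_nonneg _)
    positivity
  have hψle : ∀ u ∈ Icc a₂ b₂, ψ u ≤ 2 * M := by
    intro u hu
    refine (le_abs_self _).trans (grr_avg_abs_le hab2 ?_ ?_)
    · exact Continuous.integrableOn_Icc (by fun_prop)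
    · intro v hv; rw [abs_abs]; exact hbnd u hu v hv
  have hψsm : StronglyMeasurable ψ := by
    have hsm1 : StronglyMeasurable fun u => ∫ v in Icc a₂ b₂, |F u - F v| :=
      hcont1.stronglyMeasurable.integral_prod_right'
    have he : ψ = fun u => (b₂ - a₂)⁻¹ * ∫ v in Icc a₂ b₂, |F u - F v| := funext hψ_eq
    rw [he]; exact stronglyMeasurable_const.mul hsm1
  have hψqint : IntegrableOn (fun u => ψ u ^ q) (Icc a₁ b₁) := by
    refine Integrable.mono' (integrable_const ((2*M) ^ q))
      (hψsm.pow q).aestronglyMeasurable ?_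
    rw [ae_restrict_iff' measurableSet_Icc]
    filter_upwards with u hu
    rw [Real.norm_eq_abs, abs_of_nonneg (pow_nonneg (hψ0 u) q)]
    exact pow_le_pow_left₀ (hψ0 u) (hψle u (hsub hu)) q
  set Cv : ℝ := ⨍ x in Icc a₂ b₂, F x with hCdef
  have hS1 : (⨍ x in Icc a₁ b₁, F x) - Cv = ⨍ u in Icc a₁ b₁, (F u - Cv) :=
    (grr_avg_sub_const h2 (hiF _ _) Cv).symm
  have habs_avg : ∀ (x y : ℝ), x < y → ∀ (g : ℝ → ℝ), IntegrableOn g (Icc x y) →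
      |⨍ v in Icc x y, g v| ≤ ⨍ v in Icc x y, |g v| := by
    intro x y hxy g hg
    have hxy' : (0:ℝ) < y - x := by linarith
    rw [setAverage_eq, setAverage_eq, measureReal_def, Real.volume_Icc, ENNReal.toReal_ofReal hxy'.le,
      smul_eq_mul, smul_eq_mul, abs_mul, abs_inv, abs_of_pos hxy']
    refine mul_le_mul_of_nonneg_left ?_ (by positivity)
    have := norm_integral_le_integral_norm (μ := volume.restrict (Icc x y)) g
    simpa [Real.norm_eq_abs] using this
  have havg_mono : ∀ (g h : ℝ → ℝ), IntegrableOn g (Icc a₁ b₁) → IntegrableOn h (Icc a₁ b₁) →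
      (∀ u ∈ Icc a₁ b₁, g u ≤ h u) →
      ⨍ u in Icc a₁ b₁, g u ≤ ⨍ u in Icc a₁ b₁, h u := by
    intro g h hg hh hle
    rw [setAverage_eq, setAverage_eq, measureReal_def, hvol', smul_eq_mul, smul_eq_mul]
    exact mul_le_mul_of_nonneg_left
      (setIntegral_mono_on hg hh measurableSet_Icc hle) (by positivity)
  have hFC : ∀ u, |F u - Cv| ≤ ψ u := by
    intro u
    have h1 : ⨍ v in Icc a₂ b₂, (F u - F v) = F u - Cv :=
      grr_const_sub_avg hab2 (hiF _ _) (F u)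
    rw [← h1]
    exact habs_avg _ _ (by linarith) _ (Continuous.integrableOn_Icc (by fun_prop))
  have hmain : |(⨍ x in Icc a₁ b₁, F x) - Cv| ≤ ⨍ u in Icc a₁ b₁, ψ u := by
    rw [hS1]
    refine (habs_avg _ _ h2 _ ((hiF _ _).sub (integrableOn_const measure_Icc_lt_top.ne))).trans ?_
    refine havg_mono _ _ ((hiF _ _).sub (integrableOn_const measure_Icc_lt_top.ne)).abs hψint ?_
    intro u _; exact hFC u
  have hμ0 : volume (Icc a₁ b₁) ≠ 0 := by
    rw [Real.volume_Icc]; simp [ENNReal.ofReal_eq_zero]; linarith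
  have hμ0₂ : volume (Icc a₂ b₂) ≠ 0 := by
    rw [Real.volume_Icc]; simp [ENNReal.ofReal_eq_zero]; linarith
  have hJout : (⨍ u in Icc a₁ b₁, ψ u) ^ q ≤ ⨍ u in Icc a₁ b₁, ψ u ^ q :=
    (convexOn_pow q).map_set_average_le (continuous_pow q).continuousOn isClosed_Ici hμ0
      measure_Icc_lt_top.ne (Filter.Eventually.of_forall fun u => mem_Ici.2 (hψ0 u)) hψint hψqint
  have hJin : ∀ u, ψ u ^ q ≤ χ u := by
    intro u
    exact (convexOn_pow q).map_set_average_le (continuous_pow q).continuousOn isClosed_Ici hμ0₂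
      measure_Icc_lt_top.ne (Filter.Eventually.of_forall fun v => mem_Ici.2 (abs_nonneg _))
      (Continuous.integrableOn_Icc (by fun_prop))
      (Continuous.integrableOn_Icc (by fun_prop))
  have hst : ⨍ u in Icc a₁ b₁, ψ u ^ q ≤ ⨍ u in Icc a₁ b₁, χ u :=
    havg_mono _ _ hψqint hχint (fun u _ => hJin u)
  have hlast : ⨍ u in Icc a₁ b₁, χ u =
      ((b₁ - a₁) * (b₂ - a₂))⁻¹ * ∫ u in Icc a₁ b₁, (∫ v in Icc a₂ b₂, (F u - F v) ^ q) := by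
    rw [setAverage_eq, measureReal_def, hvol', smul_eq_mul]
    have he : ∀ u, χ u = (b₂ - a₂)⁻¹ * ∫ v in Icc a₂ b₂, (F u - F v) ^ q := by
      intro u; rw [hχ_eq]; congr 1; refine setIntegral_congr_fun measurableSet_Icc ?_
      intro v _; exact hqe.pow_abs _
    simp_rw [he]
    rw [integral_const_mul, mul_inv]
    ring
  calc |(⨍ x in Icc a₁ b₁, F x) - Cv| ^ q ≤ (⨍ u in Icc a₁ b₁, ψ u) ^ q :=
        pow_le_pow_left₀ (abs_nonneg _) hmain q
    _ ≤ ⨍ u in Icc a₁ b₁, ψ u ^ q := hJout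
    _ ≤ ⨍ u in Icc a₁ b₁, χ u := hst
    _ = _ := hlast

lemma grr_root2 {q : ℕ} (hq : q ≠ 0) {x W : ℝ} (hx : 0 ≤ x) (hW : 0 ≤ W)
    (h : x ≤ W ^ q) : x ^ ((q : ℝ))⁻¹ ≤ W := by
  have hq' : (q : ℝ) ≠ 0 := Nat.cast_ne_zero.2 hq
  have h1 : x ^ ((q:ℝ))⁻¹ ≤ (W ^ q : ℝ) ^ ((q:ℝ))⁻¹ :=
    Real.rpow_le_rpow hx h (by positivity)
  calc x ^ ((q:ℝ))⁻¹ ≤ (W ^ q : ℝ) ^ ((q:ℝ))⁻¹ := h1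
    _ = W := by
      rw [← Real.rpow_natCast W q, ← Real.rpow_mul hW, mul_inv_cancel₀ hq', Real.rpow_one]

lemma grr_step_s6 (F : ℝ → ℝ) (hF : Continuous F) (q : ℕ) (hq : 0 < q) (hqe : Even q)
    (e : ℝ) (he : 0 ≤ e) {s₀ r a₁ b₁ a₂ b₂ : ℝ}
    (h1 : a₂ ≤ a₁) (h2 : a₁ < b₁) (h3 : b₁ ≤ b₂) (hs : s₀ ≤ a₂) (hr : b₂ ≤ r)
    (hfin : (∫⁻ u in Icc s₀ r, ∫⁻ v in Icc s₀ r,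
        ENNReal.ofReal ((F u - F v) ^ q / |u - v| ^ e)) ≠ ⊤) :
    |(⨍ x in Icc a₁ b₁, F x) - ⨍ x in Icc a₂ b₂, F x| ^ q ≤
      ((b₁ - a₁) * (b₂ - a₂))⁻¹ * ((b₂ - a₂) ^ e *
        (∫⁻ u in Icc s₀ r, ∫⁻ v in Icc s₀ r,
          ENNReal.ofReal ((F u - F v) ^ q / |u - v| ^ e)).toReal) := by
  refine (grr_lemC F hF q hq hqe h1 h2 h3).trans ?_
  have hinv : (0:ℝ) ≤ ((b₁ - a₁) * (b₂ - a₂))⁻¹ := by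
    have : (0:ℝ) < b₁ - a₁ := by linarith
    have : (0:ℝ) < b₂ - a₂ := by linarith
    positivity
  exact mul_le_mul_of_nonneg_left
    (grr_lemB F hF q hqe e he h1 h2.le h3 (by linarith) hs hr hfin) hinv

set_option maxHeartbeats 1000000 in
/-- Pathwise content of Lemma 3.6(a) of the paper: there is a constant `c = c(p₀, γ₀) > 0`
such that if the double integral `Y_r` of the normalized `2p₀`-th powers of the increments of
a continuous path `f` on `[s₀, r]` is at most `c a^{2p₀} δ₁^{-(γ₀-4)/2}`, then the supremum of
`|f t - f s₀|` over `[s₀, r]` is at most `a`. -/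
theorem stmt6 (p₀ : ℕ) (hp₀ : 0 < p₀) (γ₀ : ℝ) (h4 : 4 < γ₀) (hγ : γ₀ < (p₀ : ℝ) - 2) :
    ∃ c : ℝ, 0 < c ∧ ∀ (s₀ δ₁ a r : ℝ), 0 < δ₁ → 0 < a → r ∈ Icc s₀ (s₀ + δ₁) →
      ∀ f : ℝ → ℝ, ContinuousOn f (Icc s₀ r) →
        (∫⁻ t in Icc s₀ r, ∫⁻ s in Icc s₀ r,
            ENNReal.ofReal ((f t - f s) ^ (2 * p₀) / |t - s| ^ (γ₀ / 2))) ≤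
          ENNReal.ofReal (c * a ^ (2 * p₀) * δ₁ ^ (-(γ₀ - 4) / 2)) →
        ∀ t ∈ Icc s₀ r, |f t - f s₀| ≤ a := by
  set q : ℕ := 2 * p₀ with hqdef
  have hq0 : 0 < q := by positivity
  have hqe : Even q := even_two_mul p₀
  have hqne : q ≠ 0 := hq0.ne'
  have hqR : (0:ℝ) < (q:ℝ) := by exact_mod_cast hq0
  set β : ℝ := (γ₀ - 4) / (2 * q) with hβdef
  have hβpos : 0 < β := by
    apply div_pos (by linarith) (by positivity)
  set ρ : ℝ := (2:ℝ) ^ (-β) with hρdef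
  have hρpos : 0 < ρ := Real.rpow_pos_of_pos two_pos _
  have hρlt : ρ < 1 := Real.rpow_lt_one_of_one_lt_of_neg one_lt_two (by linarith)
  have h1ρ : 0 < 1 - ρ := by linarith
  refine ⟨((1 - ρ)/2) ^ q / 2, by positivity, ?_⟩
  set c : ℝ := ((1 - ρ)/2) ^ q / 2 with hcdef
  intro s₀ δ₁ a r hδ ha hr f hf hY t ht
  have hs₀r : s₀ ≤ r := hr.1
  -- continuous extension of f
  set F : ℝ → ℝ := IccExtend hs₀r ((Icc s₀ r).restrict f) with hFdef
  have hFc : Continuous F :=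
    Continuous.Icc_extend' (continuousOn_iff_continuous_restrict.mp hf)
  have hFeq : ∀ x ∈ Icc s₀ r, F x = f x := by
    intro x hx; rw [hFdef, IccExtend_of_mem _ _ hx]; rfl
  -- the lintegral with F equals that with f
  have hYF : (∫⁻ u in Icc s₀ r, ∫⁻ v in Icc s₀ r,
        ENNReal.ofReal ((F u - F v) ^ q / |u - v| ^ (γ₀ / 2))) =
      (∫⁻ u in Icc s₀ r, ∫⁻ v in Icc s₀ r,
        ENNReal.ofReal ((f u - f v) ^ q / |u - v| ^ (γ₀ / 2))) := by
    apply setLIntegral_congr_fun measurableSet_Icc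
    intro u hu
    apply setLIntegral_congr_fun measurableSet_Icc
    intro v hv
    simp only [hFeq u hu, hFeq v hv]
  set Yenn : ℝ≥0∞ := ∫⁻ u in Icc s₀ r, ∫⁻ v in Icc s₀ r,
      ENNReal.ofReal ((F u - F v) ^ q / |u - v| ^ (γ₀ / 2)) with hYenndef
  have hYenn_le : Yenn ≤ ENNReal.ofReal (c * a ^ q * δ₁ ^ (-(γ₀ - 4) / 2)) := by
    exact hYF.trans_le hY
  have hfin : Yenn ≠ ⊤ := (hYenn_le.trans_lt ENNReal.ofReal_lt_top).ne
  set Y : ℝ := Yenn.toReal with hYdef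
  have hY0 : 0 ≤ Y := ENNReal.toReal_nonneg
  have hYle : Y ≤ c * a ^ q * δ₁ ^ (-(γ₀ - 4) / 2) := by
    have h := ENNReal.toReal_mono ENNReal.ofReal_ne_top hYenn_le
    rwa [ENNReal.toReal_ofReal (by positivity)] at h
  -- dispose of the trivial case t = s₀
  rcases eq_or_lt_of_le ht.1 with heq | hlt
  · rw [← heq]; simp [abs_nonneg]; linarith
  set L : ℝ := t - s₀ with hLdef
  have hL : 0 < L := by simp only [hLdef]; linarith
  have hLδ : L ≤ δ₁ := by
    have := ht.2; have := hr.2; simp only [hLdef]; linarith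
  -- dyadic lengths
  set ℓ : ℕ → ℝ := fun n => L / 2 ^ n with hℓdef
  have hℓpos : ∀ n, 0 < ℓ n := fun n => by positivity
  have hℓ0 : ℓ 0 = L := by simp [hℓdef]
  have hℓsucc : ∀ n, ℓ (n + 1) = ℓ n / 2 := by
    intro n; simp only [hℓdef, pow_succ]; field_simp
  have hℓle : ∀ n, ℓ n ≤ L := by
    intro n
    simp only [hℓdef]
    apply div_le_self hL.le (one_le_pow₀ one_le_two)
  have hℓmono : ∀ n, ℓ (n + 1) ≤ ℓ n := fun n => by
    rw [hℓsucc n]; linarith [hℓpos n]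
  -- the two average sequences
  set A : ℕ → ℝ := fun n => ⨍ x in Icc s₀ (s₀ + ℓ n), F x with hAdef
  set B : ℕ → ℝ := fun n => ⨍ x in Icc (t - ℓ n) t, F x with hBdef
  have hA0B0 : A 0 = B 0 := by
    simp only [hAdef, hBdef, hℓ0, hLdef]; norm_num
  have hρ2β : ρ * (2:ℝ) ^ β = 1 := by
    rw [hρdef, ← Real.rpow_add two_pos]; simp
  have h2βne : ((2:ℝ) ^ β) ≠ 0 := (Real.rpow_pos_of_pos two_pos β).ne'
  -- ℓ n ^ β = L ^ β * ρ ^ n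
  have hℓβ : ∀ n, (ℓ n) ^ β = L ^ β * ρ ^ n := by
    intro n
    induction n with
    | zero => simp [hℓ0]
    | succ k ih =>
        rw [hℓsucc k, Real.div_rpow (hℓpos k).le (by norm_num : (0:ℝ) ≤ 2), ih, pow_succ]
        rw [div_eq_iff h2βne]
        linear_combination (-(L ^ β * ρ ^ k)) * hρ2β
  -- the per-step bound
  have hstep : ∀ (a₁ b₁ a₂ b₂ : ℝ) (n : ℕ), a₂ ≤ a₁ → a₁ < b₁ → b₁ ≤ b₂ →
      s₀ ≤ a₂ → b₂ ≤ r → b₁ - a₁ = ℓ (n+1) → b₂ - a₂ = ℓ n →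
      |(⨍ x in Icc a₁ b₁, F x) - ⨍ x in Icc a₂ b₂, F x| ≤
        (2 * Y) ^ ((q:ℝ))⁻¹ * (L ^ β * ρ ^ n) := by
    intro a₁ b₁ a₂ b₂ n ha1 ha2 ha3 ha4 ha5 hb1 hb2
    have key : |(⨍ x in Icc a₁ b₁, F x) - ⨍ x in Icc a₂ b₂, F x| ^ q ≤
        (2 * Y) * (ℓ n) ^ (γ₀ / 2 - 2) := by
      have h := grr_step_s6 F hFc q hq0 hqe (γ₀ / 2) (by linarith) ha1 ha2 ha3 ha4 ha5
        (by rw [← hYenndef]; exact hfin)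
      rw [← hYenndef, ← hYdef, hb1, hb2] at h
      refine h.trans (le_of_eq ?_)
      have hne : ℓ n ≠ 0 := (hℓpos n).ne'
      have hne1 : ℓ (n+1) ≠ 0 := (hℓpos (n+1)).ne'
      rw [Real.rpow_sub (hℓpos n), Real.rpow_two, hℓsucc n]
      field_simp
    have hE : (0:ℝ) ≤ (2 * Y) * (ℓ n) ^ (γ₀ / 2 - 2) := by positivity
    have h2 := grr_root hqne (abs_nonneg _) hE key
    refine h2.trans (le_of_eq ?_)
    rw [Real.mul_rpow (by positivity) (Real.rpow_nonneg (hℓpos n).le _),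
      ← Real.rpow_mul (hℓpos n).le]
    have hexp : (γ₀ / 2 - 2) * ((q:ℝ))⁻¹ = β := by
      rw [hβdef]; field_simp; ring
    rw [hexp, hℓβ n]
  -- per-step bounds for the two chains
  have hsub_r : s₀ + L ≤ r := by simp only [hLdef]; linarith [ht.2]
  have hstepA : ∀ n, dist (A n) (A (n+1)) ≤ (2 * Y) ^ ((q:ℝ))⁻¹ * (L ^ β * ρ ^ n) := by
    intro n
    rw [Real.dist_eq, abs_sub_comm]
    have h := hstep s₀ (s₀ + ℓ (n+1)) s₀ (s₀ + ℓ n) n le_rfl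
      (by linarith [hℓpos (n+1)]) (by linarith [hℓmono n]) le_rfl
      (by linarith [hℓle n]) (by ring) (by ring)
    exact h
  have hstepB : ∀ n, dist (B n) (B (n+1)) ≤ (2 * Y) ^ ((q:ℝ))⁻¹ * (L ^ β * ρ ^ n) := by
    intro n
    rw [Real.dist_eq, abs_sub_comm]
    have h := hstep (t - ℓ (n+1)) t (t - ℓ n) t n (by linarith [hℓmono n])
      (by linarith [hℓpos (n+1)]) le_rfl (by linarith [hℓle n]) ht.2
      (by ring) (by ring)
    exact h
  -- geometric sum bound
  have hgeom : ∀ N : ℕ, ∑ n ∈ Finset.range N, ρ ^ n ≤ (1 - ρ)⁻¹ := by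
    intro N
    rw [geom_sum_eq hρlt.ne N]
    have heq : (ρ ^ N - 1) / (ρ - 1) = (1 - ρ ^ N) / (1 - ρ) := by
      rw [div_eq_div_iff (by linarith) (by linarith)]; ring
    rw [heq, inv_eq_one_div]
    have hN1 : 1 - ρ ^ N ≤ 1 := by nlinarith [pow_nonneg hρpos.le N]
    gcongr
  -- telescoping
  set K : ℝ := (2 * Y) ^ ((q:ℝ))⁻¹ * L ^ β * (1 - ρ)⁻¹ with hKdef
  have hK0 : 0 ≤ K := by
    have : (0:ℝ) ≤ (2 * Y) ^ ((q:ℝ))⁻¹ := Real.rpow_nonneg (by linarith) _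
    have : (0:ℝ) ≤ L ^ β := Real.rpow_nonneg hL.le _
    positivity
  have htel : ∀ (C : ℕ → ℝ), (∀ n, dist (C n) (C (n+1)) ≤
      (2 * Y) ^ ((q:ℝ))⁻¹ * (L ^ β * ρ ^ n)) → ∀ N, dist (C 0) (C N) ≤ K := by
    intro C hC N
    calc dist (C 0) (C N) ≤ ∑ n ∈ Finset.range N, dist (C n) (C (n+1)) :=
          dist_le_range_sum_dist C N
      _ ≤ ∑ n ∈ Finset.range N, (2 * Y) ^ ((q:ℝ))⁻¹ * (L ^ β * ρ ^ n) :=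
          Finset.sum_le_sum fun n _ => hC n
      _ = (2 * Y) ^ ((q:ℝ))⁻¹ * L ^ β * ∑ n ∈ Finset.range N, ρ ^ n := by
          rw [Finset.mul_sum]
          exact Finset.sum_congr rfl fun n _ => by ring
      _ ≤ K := by
          rw [hKdef]
          apply mul_le_mul_of_nonneg_left (hgeom N)
          have : (0:ℝ) ≤ (2 * Y) ^ ((q:ℝ))⁻¹ := Real.rpow_nonneg (by linarith) _
          have : (0:ℝ) ≤ L ^ β := Real.rpow_nonneg hL.le _
          positivity
  -- endpoint approximation and conclusion for F
  have hfinal : |F t - F s₀| ≤ 2 * K := by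
    by_contra hcon
    push_neg at hcon
    set ε : ℝ := (|F t - F s₀| - 2 * K) / 4 with hεdef
    have hε : 0 < ε := by simp only [hεdef]; linarith
    obtain ⟨δ₂, hδ₂, hc₂⟩ := Metric.continuous_iff.mp hFc s₀ ε hε
    obtain ⟨δ₃, hδ₃, hc₃⟩ := Metric.continuous_iff.mp hFc t ε hε
    set δm : ℝ := min δ₂ δ₃ with hδmdef
    have hδm : 0 < δm := lt_min hδ₂ hδ₃
    obtain ⟨N, hN⟩ := pow_unbounded_of_one_lt (L / δm) (one_lt_two (α := ℝ))
    have hℓN : ℓ N < δm := by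
      rw [hℓdef]
      rw [div_lt_iff₀ (by positivity)]
      rw [div_lt_iff₀ hδm] at hN
      linarith [hN]
    have hAN : |A N - F s₀| ≤ ε := by
      have heq : A N - F s₀ = ⨍ x in Icc s₀ (s₀ + ℓ N), (F x - F s₀) :=
        (grr_avg_sub_const (by linarith [hℓpos N]) hFc.integrableOn_Icc (F s₀)).symm
      rw [heq]
      apply grr_avg_abs_le (by linarith [hℓpos N])
        (Continuous.integrableOn_Icc (by fun_prop))
      intro y hy
      have hdy : dist y s₀ < δ₂ := by
        rw [Real.dist_eq, abs_of_nonneg (by linarith [hy.1])]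
        have := hy.2
        have h5 : δm ≤ δ₂ := min_le_left _ _
        linarith
      exact (le_of_lt (by simpa [Real.dist_eq] using hc₂ y hdy))
    have hBN : |B N - F t| ≤ ε := by
      have heq : B N - F t = ⨍ x in Icc (t - ℓ N) t, (F x - F t) :=
        (grr_avg_sub_const (by linarith [hℓpos N]) hFc.integrableOn_Icc (F t)).symm
      rw [heq]
      apply grr_avg_abs_le (by linarith [hℓpos N])
        (Continuous.integrableOn_Icc (by fun_prop))
      intro y hy
      have hdy : dist y t < δ₃ := by
        rw [Real.dist_eq, abs_of_nonpos (by linarith [hy.2]), neg_sub]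
        have := hy.1
        have h5 : δm ≤ δ₃ := min_le_right _ _
        linarith
      exact (le_of_lt (by simpa [Real.dist_eq] using hc₃ y hdy))
    have hdec : F t - F s₀ = (F t - B N) + ((B N - B 0) - (A N - A 0)) + (A N - F s₀) := by
      rw [hA0B0]; ring
    have hAA : |A N - A 0| ≤ K := by
      rw [abs_sub_comm, ← Real.dist_eq]; exact htel A hstepA N
    have hBB : |B N - B 0| ≤ K := by
      rw [abs_sub_comm, ← Real.dist_eq]; exact htel B hstepB N
    have habs : |F t - F s₀| ≤ |F t - B N| + (|B N - B 0| + |A N - A 0|) + |A N - F s₀| := by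
      rw [hdec]
      refine (abs_add_three _ _ _).trans ?_
      have h6 := abs_sub (B N - B 0) (A N - A 0)
      linarith
    have hFB : |F t - B N| ≤ ε := by rw [abs_sub_comm]; exact hBN
    have : |F t - F s₀| ≤ 2 * ε + 2 * K := by
      calc |F t - F s₀| ≤ |F t - B N| + (|B N - B 0| + |A N - A 0|) + |A N - F s₀| := habs
        _ ≤ ε + (K + K) + ε := by
              have h7 := hFB; have h8 := hBB; have h9 := hAA; have h10 := hAN
              linarith
        _ = 2 * ε + 2 * K := by ring
    simp only [hεdef] at this
    linarith
  -- final numeric bound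
  have hW : (2 * Y) ^ ((q:ℝ))⁻¹ ≤ ((1 - ρ)/2) * (a * δ₁ ^ (-β)) := by
    have hWpos : (0:ℝ) < ((1 - ρ)/2) * (a * δ₁ ^ (-β)) := by
      have := Real.rpow_pos_of_pos hδ (-β); positivity
    apply grr_root2 hqne (by linarith) hWpos.le
    calc 2 * Y ≤ 2 * (c * a ^ q * δ₁ ^ (-(γ₀ - 4) / 2)) := by
          have := Real.rpow_pos_of_pos hδ (-(γ₀ - 4) / 2)
          nlinarith [hYle]
      _ = (((1 - ρ)/2) * (a * δ₁ ^ (-β))) ^ q := by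
          rw [hcdef, mul_pow, mul_pow,
            ← Real.rpow_natCast (δ₁ ^ (-β)) q, ← Real.rpow_mul hδ.le]
          have hexp2 : -β * (q:ℝ) = -(γ₀ - 4) / 2 := by
            rw [hβdef]; field_simp
          rw [hexp2]; ring
  have hLβ : L ^ β ≤ δ₁ ^ β := Real.rpow_le_rpow hL.le hLδ hβpos.le
  have hδβ : δ₁ ^ (-β) * δ₁ ^ β = 1 := by
    rw [← Real.rpow_add hδ]; simp
  have hfe : |f t - f s₀| = |F t - F s₀| := by
    rw [hFeq t ht, hFeq s₀ (left_mem_Icc.mpr hs₀r)]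
  rw [hfe]
  refine hfinal.trans ?_
  have hKbound : K ≤ a / 2 := by
    have h1 : (2 * Y) ^ ((q:ℝ))⁻¹ * L ^ β ≤ (((1 - ρ)/2) * (a * δ₁ ^ (-β))) * δ₁ ^ β := by
      apply mul_le_mul hW hLβ (Real.rpow_nonneg hL.le _)
      have := Real.rpow_pos_of_pos hδ (-β); positivity
    have h2 : (((1 - ρ)/2) * (a * δ₁ ^ (-β))) * δ₁ ^ β = (1 - ρ) * (a / 2) := by
      calc (((1 - ρ)/2) * (a * δ₁ ^ (-β))) * δ₁ ^ β
          = ((1 - ρ)) * (a / 2) * (δ₁ ^ (-β) * δ₁ ^ β) := by ring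
        _ = (1 - ρ) * (a / 2) := by rw [hδβ]; ring
    rw [hKdef]
    calc (2 * Y) ^ ((q:ℝ))⁻¹ * L ^ β * (1 - ρ)⁻¹ ≤ ((1 - ρ) * (a / 2)) * (1 - ρ)⁻¹ := by
          apply mul_le_mul_of_nonneg_right (h1.trans_eq h2) (by positivity)
      _ = a / 2 := by field_simp
  linarith
end

section
/- Let θ ∈ (0, 1/2) and set θ₁ := 1/2 − θ, θ₂ := 2θ. Let p₀ be a positive integer and γ₀, γ₁, γ₂ reals with p₀ − 2 > γ₀ > 4, 1/(2p₀) < γ₁ < θ₁/2 − 1/(2p₀), 1/(2p₀) < γ₂ < θ₂/2 − 1/(2p₀), and 2γ₁ + γ₂ = (γ₀ − 1)/(2p₀). There exists a constant c > 0, depending only on these parameters, such that: for all y₀ ∈ [0,1], δ₁, δ₂ > 0 with y₀ + δ₂ ≤ 1, setting δ := δ₁^{1/2} + δ₂, Δ• := δ², Δ* := min(δ, 1 − y₀), for all ā > 0, r ∈ [0, Δ•], and every continuous function g : [0, Δ•] × [y₀, y₀ + Δ*] → ℝ with g(0, x) = 0 for all x ∈ [y₀, y₀ + Δ*]: if ∫_{[0,r]²}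 (g(t,y₀) − g(s,y₀))^{2p₀} / |t − s|^{γ₀/2} dt ds + ∫_{[0,r]²} ∫_{[y₀, y₀+Δ*]²} (g(t,x) + g(s,y) − g(t,y) − g(s,x))^{2p₀} / (|t − s|^{1 + 2p₀γ₁} |x − y|^{1 + 2p₀γ₂}) dx dy dt ds ≤ c ā^{2p₀} δ^{4 − γ₀}, then sup_{(t,x) ∈ [0,r] × [y₀, y₀ + δ₂]} |g(t,x)| ≤ ā. -/
open MeasureTheory Set Real
open scoped ENNReal

lemma avg_jensen (p : ℕ) (f : ℝ → ℝ) (hf : Continuous f) {c d : ℝ} (hcd : c < d) :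
    ((d-c)⁻¹ * ∫ x in Set.Icc c d, f x) ^ (2*p) ≤ (d-c)⁻¹ * ∫ x in Set.Icc c d, (f x)^(2*p) := by
  set μ := volume.restrict (Icc c d) with hμ
  have hμu : μ Set.univ = ENNReal.ofReal (d - c) := by
    rw [hμ, Measure.restrict_apply_univ, Real.volume_Icc]
  haveI : IsFiniteMeasure μ := ⟨by rw [hμu]; exact ENNReal.ofReal_lt_top⟩
  haveI : NeZero μ := by
    refine ⟨fun h0 => ?_⟩
    rw [h0] at hμu
    simp only [Measure.coe_zero, Pi.zero_apply] at hμu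
    have := ENNReal.ofReal_pos.mpr (sub_pos.mpr hcd)
    rw [← hμu] at this; exact lt_irrefl _ this
  have hconv : ConvexOn ℝ Set.univ (fun x : ℝ => x ^ (2*p)) := Even.convexOn_pow (even_two_mul p)
  have hint : Integrable f μ := (hf.continuousOn).integrableOn_compact isCompact_Icc
  have hint2 : Integrable (fun x => (f x) ^ (2*p)) μ :=
    ((hf.pow _).continuousOn).integrableOn_compact isCompact_Icc
  have h := hconv.map_average_le ((continuous_pow (2*p)).continuousOn) isClosed_univ
    (Filter.Eventually.of_forall (fun _ => Set.mem_univ _)) hint hint2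
  have havg : ∀ F : ℝ → ℝ, (⨍ x, F x ∂μ) = (d-c)⁻¹ * ∫ x in Set.Icc c d, F x := by
    intro F
    rw [average_eq, measureReal_def, hμu, ENNReal.toReal_ofReal (sub_pos.mpr hcd).le, smul_eq_mul]
  rwa [havg f, havg (fun x => (f x)^(2*p))] at h

lemma grr_cont (a : ℝ) (ha : 2 < a) (p : ℕ) (hp : 0 < p) :
    ∃ C : ℝ, 0 < C ∧ ∀ u v : ℝ, u < v → ∀ f : ℝ → ℝ, Continuous f →
    ∀ t ∈ Set.Icc u v, ∀ s ∈ Set.Icc u v,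
    ENNReal.ofReal ((f t - f s) ^ (2*p)) ≤
      ENNReal.ofReal C *
        (∫⁻ t' in Set.Icc u v, ∫⁻ s' in Set.Icc u v,
          ENNReal.ofReal ((f t' - f s') ^ (2*p) / |t' - s'| ^ a)) *
        ENNReal.ofReal ((v - u) ^ (a - 2)) := by
  have hpR : (0:ℝ) < 2*p := by positivity
  have hpne : ((2*p : ℕ) : ℝ) ≠ 0 := by push_cast; positivity
  set e : ℝ := a - 2 with he
  have hepos : 0 < e := by simp [he]; linarith
  set q0 : ℝ := (2:ℝ)⁻¹ ^ e with hq0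
  have hq0pos : 0 < q0 := Real.rpow_pos_of_pos (by norm_num) _
  have hq0lt : q0 < 1 := Real.rpow_lt_one (by norm_num) (by norm_num) hepos
  set σ : ℝ := q0 ^ (1/(2*(p:ℝ))) with hσ
  have hσpos : 0 < σ := Real.rpow_pos_of_pos hq0pos _
  have hσlt : σ < 1 := Real.rpow_lt_one hq0pos.le hq0lt (by positivity)
  have h1σ : 0 < 1 - σ := by linarith
  refine ⟨(2 * (1-σ)⁻¹)^(2*p) * (2:ℝ)^(a+1),
    mul_pos (pow_pos (mul_pos two_pos (inv_pos.mpr h1σ)) _)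
      (Real.rpow_pos_of_pos two_pos _), ?_⟩
  intro u v huv f hf t ht s hs
  set L : ℝ := v - u with hL
  have hLpos : 0 < L := sub_pos.mpr huv
  set B : ℝ≥0∞ := ∫⁻ t' in Set.Icc u v, ∫⁻ s' in Set.Icc u v,
          ENNReal.ofReal ((f t' - f s') ^ (2*p) / |t' - s'| ^ a) with hB
  by_cases hBtop : B = ⊤
  · rw [hBtop, ENNReal.mul_top (by positivity), ENNReal.top_mul
      (by simp [ENNReal.ofReal_pos]; positivity)]
    exact le_top
  -- real versions
  set bR : ℝ := B.toReal with hbR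
  have hbR0 : 0 ≤ bR := ENNReal.toReal_nonneg
  -- the average
  set m : ℝ → ℝ → ℝ := fun c d => (d - c)⁻¹ * ∫ x in Set.Icc c d, f x with hm

  have hfint : ∀ c d : ℝ, IntegrableOn f (Set.Icc c d) := fun c d =>
    (hf.continuousOn).integrableOn_compact isCompact_Icc
  have hconst_int : ∀ (k c d : ℝ), IntegrableOn (fun _ : ℝ => k) (Set.Icc c d) :=
    fun k c d => (continuous_const.continuousOn).integrableOn_compact isCompact_Icc
  have hvol : ∀ c d : ℝ, c < d → volume (Set.Icc c d) = ENNReal.ofReal (d - c) := by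
    intro c d _; rw [Real.volume_Icc]
  have hEnonneg : ∀ z : ℝ, 0 ≤ z ^ (2*p) := fun z => Even.pow_nonneg (even_two_mul p) z
  have h2pne : 2*p ≠ 0 := by positivity
  have havg_sub : ∀ (k c₁ d₁ : ℝ), c₁ < d₁ →
      (d₁-c₁)⁻¹ * ∫ x in Set.Icc c₁ d₁, (f x - k) = m c₁ d₁ - k := by
    intro k c₁ d₁ h₁
    rw [integral_sub (hfint c₁ d₁) (hconst_int k c₁ d₁), setIntegral_const,
      measureReal_def, hvol c₁ d₁ h₁, ENNReal.toReal_ofReal (sub_pos.mpr h₁).le, smul_eq_mul, hm]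
    have : (d₁ - c₁) ≠ 0 := (sub_pos.mpr h₁).ne'
    field_simp
    try ring
  have havg_sub2 : ∀ (k c₁ d₁ : ℝ), c₁ < d₁ →
      (d₁-c₁)⁻¹ * ∫ x in Set.Icc c₁ d₁, (k - f x) = k - m c₁ d₁ := by
    intro k c₁ d₁ h₁
    rw [integral_sub (hconst_int k c₁ d₁) (hfint c₁ d₁), setIntegral_const,
      measureReal_def, hvol c₁ d₁ h₁, ENNReal.toReal_ofReal (sub_pos.mpr h₁).le, smul_eq_mul, hm]
    have : (d₁ - c₁) ≠ 0 := (sub_pos.mpr h₁).ne'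
    field_simp
    try ring
  obtain ⟨M, hM⟩ : ∃ M : ℝ, ∀ x ∈ Set.Icc u v, |f x| ≤ M := by
    obtain ⟨M, hM⟩ := isCompact_Icc.exists_bound_of_continuousOn (hf.continuousOn (s := Set.Icc u v))
    exact ⟨M, fun x hx => by simpa [Real.norm_eq_abs] using hM x hx⟩
  have key : ∀ c d c' d' : ℝ, c' ≤ c → c < d → d ≤ d' → u ≤ c' → d' ≤ v →
      (m c d - m c' d')^(2*p) ≤ bR * (d'-c')^a / ((d-c)*(d'-c')) := by
    intro c d c' d' h1 h2 h3 h4 h5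
    have hcd' : c' < d' := lt_of_le_of_lt h1 (lt_of_lt_of_le h2 h3)
    have hlen : (0:ℝ) < d - c := sub_pos.mpr h2
    have hlen' : (0:ℝ) < d' - c' := sub_pos.mpr hcd'
    have hIsub : Set.Icc c d ⊆ Set.Icc c' d' := Set.Icc_subset_Icc h1 h3
    have hI'sub : Set.Icc c' d' ⊆ Set.Icc u v := Set.Icc_subset_Icc h4 h5
    set m' : ℝ := m c' d' with hm'
    set H : ℝ → ℝ := fun x => ∫ s' in Set.Icc c' d', (f x - f s')^(2*p) with hH
    have hHnn : ∀ x, 0 ≤ H x := fun x => integral_nonneg (fun s' => hEnonneg _)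
    have hGint : ∀ x : ℝ, IntegrableOn (fun s' => (f x - f s')^(2*p)) (Set.Icc c' d') :=
      fun x => (((continuous_const.sub hf).pow _).continuousOn).integrableOn_compact isCompact_Icc
    have inner_jensen : ∀ x : ℝ, (f x - m')^(2*p) ≤ (d'-c')⁻¹ * H x := by
      intro x
      have h := avg_jensen p (fun s' => f x - f s') (continuous_const.sub hf) hcd'
      rwa [havg_sub2 (f x) c' d' hcd'] at h
    have outer : (m c d - m')^(2*p) ≤ (d-c)⁻¹ * ∫ x in Set.Icc c d, (f x - m')^(2*p) := by
      have h := avg_jensen p (fun x => f x - m') (hf.sub continuous_const) h2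
      rwa [havg_sub m' c d h2] at h
    have Hmeas : StronglyMeasurable H := by
      apply StronglyMeasurable.integral_prod_right' (f := fun z : ℝ × ℝ => (f z.1 - f z.2)^(2*p))
      exact Continuous.stronglyMeasurable (by fun_prop)
    have Hint : IntegrableOn H (Set.Icc c d) := by
      refine Integrable.mono' (hconst_int ((2*M)^(2*p) * (d'-c')) c d)
        Hmeas.aestronglyMeasurable.restrict ?_
      filter_upwards [ae_restrict_mem measurableSet_Icc] with x hx
      rw [Real.norm_eq_abs, abs_of_nonneg (hHnn x)]
      have : H x ≤ (2*M)^(2*p) * (volume (Set.Icc c' d')).toReal := by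
        have key0 : ∀ s' ∈ Set.Icc c' d', ‖(f x - f s')^(2*p)‖ ≤ (2*M)^(2*p) := by
          intro s' hs'
          rw [Real.norm_eq_abs, abs_of_nonneg (hEnonneg _), ← Even.pow_abs (even_two_mul p)]
          refine pow_le_pow_left₀ (abs_nonneg _) ?_ _
          have h1' := hM x (hI'sub (hIsub hx))
          have h2' := hM s' (hI'sub hs')
          calc |f x - f s'| ≤ |f x| + |f s'| := abs_sub _ _
            _ ≤ 2*M := by linarith
        have := norm_setIntegral_le_of_norm_le_const (C := (2*M)^(2*p))
          (by rw [hvol c' d' hcd']; exact ENNReal.ofReal_lt_top)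
          (f := fun s' => (f x - f s')^(2*p)) key0
        rw [Real.norm_eq_abs, abs_of_nonneg (hHnn x)] at this; exact this
      rw [hvol c' d' hcd', ENNReal.toReal_ofReal hlen'.le] at this
      exact this
    have mono1 : ∫ x in Set.Icc c d, (f x - m')^(2*p) ≤ (d'-c')⁻¹ * ∫ x in Set.Icc c d, H x := by
      rw [← integral_const_mul]
      refine setIntegral_mono_on ?_ (Hint.const_mul _) measurableSet_Icc
        (fun x _ => inner_jensen x)
      exact (((hf.sub continuous_const).pow _).continuousOn).integrableOn_compact isCompact_Icc
    have core : ∫ x in Set.Icc c d, H x ≤ bR * (d'-c')^a := by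
      have hann : (0:ℝ) ≤ a := by linarith
      have hpt : ∀ x ∈ Set.Icc c' d', ∀ s' ∈ Set.Icc c' d',
          ENNReal.ofReal ((f x - f s')^(2*p)) ≤
          ENNReal.ofReal ((f x - f s')^(2*p) / |x - s'|^a) * ENNReal.ofReal ((d'-c')^a) := by
        intro x hx s' hs'
        rcases eq_or_ne x s' with rfl | hne
        · simp [sub_self, zero_pow h2pne]
        · have habs : 0 < |x - s'| := abs_pos.mpr (sub_ne_zero.mpr hne)
          have habs' : |x - s'| ≤ d' - c' :=
            abs_le.mpr ⟨by linarith [hx.1, hx.2, hs'.1, hs'.2], by linarith [hx.1, hx.2, hs'.1, hs'.2]⟩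
          have hqnn : (0:ℝ) ≤ (f x - f s')^(2*p) / |x-s'|^a :=
            div_nonneg (hEnonneg _) (Real.rpow_nonneg (abs_nonneg _) a)
          rw [← ENNReal.ofReal_mul hqnn]
          apply ENNReal.ofReal_le_ofReal
          have h2' : |x-s'|^a ≤ (d'-c')^a := Real.rpow_le_rpow habs.le habs' hann
          have hpowpos : (0:ℝ) < |x-s'|^a := Real.rpow_pos_of_pos habs a
          calc (f x - f s')^(2*p) = (f x - f s')^(2*p) / |x-s'|^a * |x-s'|^a :=
                (div_mul_cancel₀ _ hpowpos.ne').symm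
            _ ≤ (f x - f s')^(2*p) / |x-s'|^a * (d'-c')^a := by
                refine mul_le_mul_of_nonneg_left h2' hqnn
      have e2 : ∀ x : ℝ, ENNReal.ofReal (H x) =
          ∫⁻ s' in Set.Icc c' d', ENNReal.ofReal ((f x - f s')^(2*p)) := fun x =>
        ofReal_integral_eq_lintegral_ofReal (hGint x)
          (Filter.Eventually.of_forall (fun s' => hEnonneg _))
      have e1 : ENNReal.ofReal (∫ x in Set.Icc c d, H x) =
          ∫⁻ x in Set.Icc c d, ∫⁻ s' in Set.Icc c' d', ENNReal.ofReal ((f x - f s')^(2*p)) := by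
        rw [ofReal_integral_eq_lintegral_ofReal Hint
          (Filter.Eventually.of_forall (fun x => hHnn x))]
        exact lintegral_congr (fun x => e2 x)
      have e3 : (∫⁻ x in Set.Icc c d, ∫⁻ s' in Set.Icc c' d', ENNReal.ofReal ((f x - f s')^(2*p))) ≤
          (∫⁻ x in Set.Icc c d, ∫⁻ s' in Set.Icc c' d',
            ENNReal.ofReal ((f x - f s')^(2*p) / |x - s'|^a)) * ENNReal.ofReal ((d'-c')^a) := by
        rw [← lintegral_mul_const' _ _ ENNReal.ofReal_ne_top]
        apply lintegral_mono_ae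
        filter_upwards [ae_restrict_mem measurableSet_Icc] with x hx
        rw [← lintegral_mul_const' _ _ ENNReal.ofReal_ne_top]
        apply lintegral_mono_ae
        filter_upwards [ae_restrict_mem measurableSet_Icc] with s' hs'
        exact hpt x (hIsub hx) s' hs'
      have e4 : (∫⁻ x in Set.Icc c d, ∫⁻ s' in Set.Icc c' d',
          ENNReal.ofReal ((f x - f s')^(2*p) / |x - s'|^a)) ≤ B := by
        rw [hB]
        refine lintegral_mono' (Measure.restrict_mono (hIsub.trans hI'sub) le_rfl) (fun x => ?_)
        exact lintegral_mono' (Measure.restrict_mono hI'sub le_rfl) le_rfl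
      have hcomb : ENNReal.ofReal (∫ x in Set.Icc c d, H x) ≤ B * ENNReal.ofReal ((d'-c')^a) := by
        rw [e1]
        exact le_trans e3 (mul_le_mul_left e4 _)
      have hfin : B * ENNReal.ofReal ((d'-c')^a) ≠ ⊤ := ENNReal.mul_ne_top hBtop ENNReal.ofReal_ne_top
      have := ENNReal.toReal_mono hfin hcomb
      rwa [ENNReal.toReal_ofReal (integral_nonneg (fun x => hHnn x)), ENNReal.toReal_mul,
        ENNReal.toReal_ofReal (Real.rpow_nonneg hlen'.le a), ← hbR] at this
    have final : (m c d - m')^(2*p) ≤ (d-c)⁻¹ * ((d'-c')⁻¹ * (bR * (d'-c')^a)) := by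
      calc (m c d - m')^(2*p) ≤ (d-c)⁻¹ * ∫ x in Set.Icc c d, (f x - m')^(2*p) := outer
        _ ≤ (d-c)⁻¹ * ((d'-c')⁻¹ * ∫ x in Set.Icc c d, H x) :=
            mul_le_mul_of_nonneg_left mono1 (by positivity)
        _ ≤ (d-c)⁻¹ * ((d'-c')⁻¹ * (bR * (d'-c')^a)) := by
            refine mul_le_mul_of_nonneg_left (mul_le_mul_of_nonneg_left core (by positivity))
              (by positivity)
    have heq : (d-c)⁻¹ * ((d'-c')⁻¹ * (bR * (d'-c')^a)) = bR * (d'-c')^a / ((d-c)*(d'-c')) := by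
      field_simp
      try ring
    rwa [heq] at final

  have pow_rpow : ∀ (x : ℝ), 0 ≤ x → ∀ (n : ℕ) (y : ℝ), (x^n)^y = (x^y)^n := by
    intro x hx n y
    rw [← Real.rpow_natCast x n, ← Real.rpow_mul hx, mul_comm, Real.rpow_mul hx,
      Real.rpow_natCast]
  set KK : ℝ := (bR * 2^(a+1) * L^e)^(1/(2*(p:ℝ))) with hKK
  have hXnn : (0:ℝ) ≤ bR * 2^(a+1) * L^e :=
    mul_nonneg (mul_nonneg hbR0 (Real.rpow_nonneg (by norm_num) _))
      (Real.rpow_nonneg hLpos.le _)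
  have hKnn : 0 ≤ KK := Real.rpow_nonneg hXnn _
  have chain : ∀ t₀ ∈ Set.Icc u v, |f t₀ - m u v| ≤ KK * (1-σ)⁻¹ := by
    intro t₀ ht₀
    set rad : ℕ → ℝ := fun n => L * (2⁻¹:ℝ)^n with hrad
    have hradpos : ∀ n, 0 < rad n := fun n => by
      have : (0:ℝ) < (2⁻¹:ℝ)^n := by positivity
      simp only [hrad]; positivity
    have hradle : ∀ n, rad n ≤ L := by
      intro n
      have h1 : (2⁻¹:ℝ)^n ≤ 1 := pow_le_one₀ (by norm_num) (by norm_num)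
      calc L * (2⁻¹:ℝ)^n ≤ L * 1 := mul_le_mul_of_nonneg_left h1 hLpos.le
        _ = L := mul_one L
    have hradsucc : ∀ n, rad (n+1) = rad n / 2 := by
      intro n; simp only [hrad, pow_succ]; ring
    have hradmono : ∀ n, rad (n+1) ≤ rad n := by
      intro n; rw [hradsucc n]; linarith [hradpos n]
    set cc : ℕ → ℝ := fun n => max u (t₀ - rad n) with hcc
    set dd : ℕ → ℝ := fun n => min v (t₀ + rad n) with hdd
    have hccle : ∀ n, cc n ≤ t₀ := fun n => max_le ht₀.1 (by linarith [hradpos n])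
    have hddge : ∀ n, t₀ ≤ dd n := fun n => le_min ht₀.2 (by linarith [hradpos n])
    have hucc : ∀ n, u ≤ cc n := fun n => le_max_left _ _
    have hddv : ∀ n, dd n ≤ v := fun n => min_le_left _ _
    have hcclb : ∀ n, t₀ - rad n ≤ cc n := fun n => le_max_right _ _
    have hddub : ∀ n, dd n ≤ t₀ + rad n := fun n => min_le_right _ _
    have hlen_lower : ∀ n, rad n ≤ dd n - cc n := by
      intro n
      rcases le_or_gt u (t₀ - rad n) with h | h
      · have hc : cc n = t₀ - rad n := max_eq_right h
        have := hddge n; rw [hc]; linarith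
      · have hc : cc n = u := max_eq_left h.le
        rcases le_or_gt (t₀ + rad n) v with h' | h'
        · have hd : dd n = t₀ + rad n := min_eq_right h'
          rw [hc, hd]; linarith [ht₀.1]
        · have hd : dd n = v := min_eq_left h'.le
          rw [hc, hd]; linarith [hradle n]
    have hlen_upper : ∀ n, dd n - cc n ≤ 2 * rad n := by
      intro n; linarith [hcclb n, hddub n]
    have hlt : ∀ n, cc n < dd n := fun n => by linarith [hlen_lower n, hradpos n]
    have hccmono : ∀ n, cc n ≤ cc (n+1) :=
      fun n => max_le_max le_rfl (by linarith [hradmono n])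
    have hddmono : ∀ n, dd (n+1) ≤ dd n :=
      fun n => min_le_min le_rfl (by linarith [hradmono n])
    have hradpow : ∀ n, (rad n)^e = L^e * q0^n := by
      intro n
      simp only [hrad]
      rw [Real.mul_rpow hLpos.le (by positivity), pow_rpow (2⁻¹:ℝ) (by norm_num) n e]
    have hstep : ∀ n : ℕ, |m (cc (n+1)) (dd (n+1)) - m (cc n) (dd n)| ≤ KK * σ^n := by
      intro n
      have hk := key (cc (n+1)) (dd (n+1)) (cc n) (dd n) (hccmono n) (hlt (n+1)) (hddmono n)
        (hucc n) (hddv n)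
      have hnum : bR * (dd n - cc n)^a ≤ bR * (2 * rad n)^a := by
        refine mul_le_mul_of_nonneg_left ?_ hbR0
        exact Real.rpow_le_rpow (by linarith [hlt n]) (hlen_upper n) (by linarith)
      have hden : rad (n+1) * rad n ≤ (dd (n+1) - cc (n+1)) * (dd n - cc n) := by
        have := hlen_lower (n+1); have := hlen_lower n
        have := hradpos (n+1); have := hradpos n
        nlinarith
      have hb2 : (m (cc (n+1)) (dd (n+1)) - m (cc n) (dd n))^(2*p) ≤
          bR * (2 * rad n)^a / (rad (n+1) * rad n) := by
        refine le_trans hk ?_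
        refine div_le_div₀ ?_ hnum (by have h1 := hradpos n; have h2 := hradpos (n+1); positivity) hden
        have : (0:ℝ) ≤ (2*rad n)^a := Real.rpow_nonneg (by linarith [hradpos n]) a
        positivity
      have hQ : bR * (2 * rad n)^a / (rad (n+1) * rad n) = (bR * 2^(a+1) * L^e) * q0^n := by
        have h2r : (2*rad n)^a = (2:ℝ)^a * (rad n)^a :=
          Real.mul_rpow (by norm_num) (hradpos n).le
        have hsplit : (rad n)^a = (rad n)^e * (rad n * rad n) := by
          have h2 : (rad n) * (rad n) = (rad n)^((2:ℕ):ℝ) := by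
            rw [Real.rpow_natCast]; ring
          rw [h2, ← Real.rpow_add (hradpos n)]
          norm_num [he]
        have h2a : (2:ℝ)^(a+1) = (2:ℝ)^a * 2 := by
          rw [Real.rpow_add (by norm_num), Real.rpow_one]
        rw [hradsucc n, h2r, hsplit, hradpow n, h2a]
        have hrne : rad n ≠ 0 := (hradpos n).ne'
        field_simp
      rw [hQ] at hb2
      -- take 2p-th roots
      set md : ℝ := m (cc (n+1)) (dd (n+1)) - m (cc n) (dd n) with hmd
      have habs : |md| = (md^(2*p))^(1/(2*(p:ℝ))) := by
        rw [← Even.pow_abs (even_two_mul p), ← Real.rpow_natCast |md| (2*p),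
          ← Real.rpow_mul (abs_nonneg _)]
        push_cast
        rw [mul_one_div, div_self (by positivity : (2:ℝ)*(p:ℝ) ≠ 0), Real.rpow_one]
      rw [habs]
      calc (md^(2*p))^(1/(2*(p:ℝ))) ≤ ((bR * 2^(a+1) * L^e) * q0^n)^(1/(2*(p:ℝ))) :=
            Real.rpow_le_rpow (hEnonneg md) hb2 (by positivity)
        _ = KK * σ^n := by
            rw [Real.mul_rpow hXnn (by positivity), hKK, hσ,
              pow_rpow q0 hq0pos.le n (1/(2*(p:ℝ)))]
    have hc0 : cc 0 = u := by
      simp only [hcc, hrad, pow_zero, mul_one]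
      exact max_eq_left (by linarith [ht₀.2])
    have hd0 : dd 0 = v := by
      simp only [hdd, hrad, pow_zero, mul_one]
      exact min_eq_left (by linarith [ht₀.1])
    have hsum : ∀ N : ℕ, |m (cc N) (dd N) - m u v| ≤ KK * (1-σ)⁻¹ := by
      intro N
      have htel : m (cc N) (dd N) - m (cc 0) (dd 0) =
          ∑ n ∈ Finset.range N, (m (cc (n+1)) (dd (n+1)) - m (cc n) (dd n)) :=
        (Finset.sum_range_sub (fun n => m (cc n) (dd n)) N).symm
      rw [← hc0, ← hd0, htel]
      calc |∑ n ∈ Finset.range N, (m (cc (n+1)) (dd (n+1)) - m (cc n) (dd n))|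
          ≤ ∑ n ∈ Finset.range N, |m (cc (n+1)) (dd (n+1)) - m (cc n) (dd n)| :=
            Finset.abs_sum_le_sum_abs _ _
        _ ≤ ∑ n ∈ Finset.range N, KK * σ^n := Finset.sum_le_sum (fun n _ => hstep n)
        _ = KK * ∑ n ∈ Finset.range N, σ^n := by rw [Finset.mul_sum]
        _ ≤ KK * (1-σ)⁻¹ := by
            refine mul_le_mul_of_nonneg_left ?_ hKnn
            calc ∑ n ∈ Finset.range N, σ^n ≤ ∑' n : ℕ, σ^n :=
                  Summable.sum_le_tsum _ (fun i _ => by positivity)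
                    (summable_geometric_of_lt_one hσpos.le hσlt)
              _ = (1-σ)⁻¹ := tsum_geometric_of_lt_one hσpos.le hσlt
    have hlim : Filter.Tendsto (fun N => m (cc N) (dd N)) Filter.atTop (nhds (f t₀)) := by
      rw [Metric.tendsto_atTop]
      intro ε hε
      obtain ⟨ηd, hηd, hη⟩ := Metric.continuous_iff.mp hf t₀ (ε/2) (half_pos hε)
      obtain ⟨N, hN⟩ : ∃ N : ℕ, rad N < ηd := by
        obtain ⟨N, hN⟩ := exists_pow_lt_of_lt_one (x := ηd / L) (y := (2⁻¹:ℝ))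
          (by positivity) (by norm_num)
        refine ⟨N, ?_⟩
        have := (div_lt_div_iff_of_pos_left hηd hLpos hLpos).symm
        calc rad N = L * (2⁻¹:ℝ)^N := rfl
          _ < L * (ηd / L) := by
              exact mul_lt_mul_of_pos_left hN hLpos
          _ = ηd := by field_simp
      refine ⟨N, fun n hn => ?_⟩
      have hrmono : rad n ≤ rad N := by
        have h1 : (2⁻¹:ℝ)^n ≤ (2⁻¹:ℝ)^N :=
          pow_le_pow_of_le_one (by norm_num) (by norm_num) hn
        exact mul_le_mul_of_nonneg_left h1 hLpos.le
      rw [Real.dist_eq]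
      have hcn := hlt n
      have heqm : m (cc n) (dd n) - f t₀ =
          (dd n - cc n)⁻¹ * ∫ x in Set.Icc (cc n) (dd n), (f x - f t₀) :=
        (havg_sub (f t₀) (cc n) (dd n) hcn).symm
      have hbound : ∀ x ∈ Set.Icc (cc n) (dd n), ‖f x - f t₀‖ ≤ ε/2 := by
        intro x hx
        rw [Real.norm_eq_abs]
        refine (hη x ?_).le
        rw [Real.dist_eq]
        have h1 := hcclb n; have h2 := hddub n
        have : |x - t₀| ≤ rad n := abs_le.mpr ⟨by linarith [hx.1], by linarith [hx.2]⟩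
        linarith
      have hni := norm_setIntegral_le_of_norm_le_const (μ := volume)
        (s := Set.Icc (cc n) (dd n)) (C := ε/2)
        (by rw [hvol _ _ hcn]; exact ENNReal.ofReal_lt_top) hbound
      rw [Real.norm_eq_abs, measureReal_def, hvol _ _ hcn, ENNReal.toReal_ofReal (by linarith [hcn])] at hni
      have hlenpos : (0:ℝ) < dd n - cc n := by linarith [hcn]
      calc |m (cc n) (dd n) - f t₀| =
            (dd n - cc n)⁻¹ * |∫ x in Set.Icc (cc n) (dd n), (f x - f t₀)| := by
              rw [heqm, abs_mul, abs_of_nonneg (inv_nonneg.mpr hlenpos.le)]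
        _ ≤ (dd n - cc n)⁻¹ * (ε/2 * (dd n - cc n)) :=
              mul_le_mul_of_nonneg_left hni (inv_nonneg.mpr hlenpos.le)
        _ = ε/2 := by field_simp
        _ < ε := half_lt_self hε
    have htendabs : Filter.Tendsto (fun N => |m (cc N) (dd N) - m u v|) Filter.atTop
        (nhds (|f t₀ - m u v|)) := (hlim.sub tendsto_const_nhds).abs
    exact le_of_tendsto' htendabs hsum
  -- conclude
  have ht2 := chain t ht
  have hs2 := chain s hs
  have habs2 : |f t - f s| ≤ 2 * (KK * (1-σ)⁻¹) := by
    calc |f t - f s| ≤ |f t - m u v| + |m u v - f s| := abs_sub_le _ _ _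
      _ ≤ KK * (1-σ)⁻¹ + KK * (1-σ)⁻¹ := by
          rw [abs_sub_comm (m u v) (f s)]; exact add_le_add ht2 hs2
      _ = 2 * (KK * (1-σ)⁻¹) := by ring
  have hKpow : KK^(2*p) = bR * 2^(a+1) * L^e := by
    rw [hKK, ← Real.rpow_natCast ((bR * 2^(a+1) * L^e)^(1/(2*(p:ℝ)))) (2*p),
      ← Real.rpow_mul hXnn]
    push_cast
    rw [one_div, inv_mul_cancel₀ (by positivity : (2:ℝ)*(p:ℝ) ≠ 0), Real.rpow_one]
  have hfs_pow : (f t - f s)^(2*p) ≤ (2*(1-σ)⁻¹)^(2*p) * 2^(a+1) * bR * L^e := by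
    calc (f t - f s)^(2*p) = |f t - f s|^(2*p) := (Even.pow_abs (even_two_mul p) _).symm
      _ ≤ (2*(KK * (1-σ)⁻¹))^(2*p) := pow_le_pow_left₀ (abs_nonneg _) habs2 _
      _ = (2*(1-σ)⁻¹)^(2*p) * KK^(2*p) := by ring
      _ = (2*(1-σ)⁻¹)^(2*p) * 2^(a+1) * bR * L^e := by rw [hKpow]; ring
  have hC'nn : (0:ℝ) ≤ (2*(1-σ)⁻¹)^(2*p) * 2^(a+1) := by
    have := Real.rpow_nonneg (le_of_lt (by norm_num : (0:ℝ)<2)) (a+1); positivity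
  have hBof : B = ENNReal.ofReal bR := (ENNReal.ofReal_toReal hBtop).symm
  calc ENNReal.ofReal ((f t - f s)^(2*p))
      ≤ ENNReal.ofReal ((2*(1-σ)⁻¹)^(2*p) * 2^(a+1) * bR * L^e) :=
        ENNReal.ofReal_le_ofReal hfs_pow
    _ = ENNReal.ofReal ((2*(1-σ)⁻¹)^(2*p) * 2^(a+1)) * ENNReal.ofReal bR *
        ENNReal.ofReal (L^e) := by
        rw [← ENNReal.ofReal_mul hC'nn, ← ENNReal.ofReal_mul (by positivity)]
    _ = ENNReal.ofReal ((2*(1-σ)⁻¹)^(2*p) * 2^(a+1)) * B * ENNReal.ofReal (L^e) := by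
        rw [hBof]

lemma grr (a : ℝ) (ha : 2 < a) (p : ℕ) (hp : 0 < p) :
    ∃ C : ℝ, 0 < C ∧ ∀ u v : ℝ, u < v → ∀ f : ℝ → ℝ, ContinuousOn f (Set.Icc u v) →
    ∀ t ∈ Set.Icc u v, ∀ s ∈ Set.Icc u v,
    ENNReal.ofReal ((f t - f s) ^ (2*p)) ≤
      ENNReal.ofReal C *
        (∫⁻ t' in Set.Icc u v, ∫⁻ s' in Set.Icc u v,
          ENNReal.ofReal ((f t' - f s') ^ (2*p) / |t' - s'| ^ a)) *
        ENNReal.ofReal ((v - u) ^ (a - 2)) := by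
  obtain ⟨C, hC, hmain⟩ := grr_cont a ha p hp
  refine ⟨C, hC, ?_⟩
  intro u v huv f hf t ht s hs
  set F : ℝ → ℝ := Set.IccExtend huv.le ((Set.Icc u v).restrict f) with hFd
  have hFc : Continuous F := (hf.restrict).Icc_extend'
  have hFeq : ∀ x ∈ Set.Icc u v, F x = f x := by
    intro x hx
    rw [hFd, Set.IccExtend_of_mem huv.le _ hx]
    rfl
  have hBeq : (∫⁻ t' in Set.Icc u v, ∫⁻ s' in Set.Icc u v,
      ENNReal.ofReal ((f t' - f s') ^ (2*p) / |t' - s'| ^ a)) =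
      ∫⁻ t' in Set.Icc u v, ∫⁻ s' in Set.Icc u v,
      ENNReal.ofReal ((F t' - F s') ^ (2*p) / |t' - s'| ^ a) := by
    refine setLIntegral_congr_fun measurableSet_Icc ?_
    intro t' ht'
    refine setLIntegral_congr_fun measurableSet_Icc ?_
    intro s' hs'
    beta_reduce
    rw [hFeq t' ht', hFeq s' hs']
  rw [hBeq, ← hFeq t ht, ← hFeq s hs]
  exact hmain u v huv F hFc t ht s hs

/-- Pathwise content of Lemma 3.6(b) of the paper: there is a constant `c > 0`, depending only
on the parameters `θ, p₀, γ₀, γ₁, γ₂`, such that if the quantity `Ȳ_r = Y₀(r) + Y₁(r)`, built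
from temporal increments at `y₀` and rectangular increments of a continuous function `g`
vanishing at time `0`, is at most `c ā^{2p₀} δ^{4-γ₀}`, then `sup |g| ≤ ā` on
`[0, r] × [y₀, y₀ + δ₂]`. -/
theorem stmt7 (θ : ℝ) (hθ1 : 0 < θ) (hθ2 : θ < 1/2)
    (p₀ : ℕ) (γ₀ γ₁ γ₂ : ℝ) (hp₀ : 0 < p₀)
    (h1 : 4 < γ₀) (h2 : γ₀ < (p₀ : ℝ) - 2)
    (h3 : 1 / (2 * (p₀ : ℝ)) < γ₁) (h4 : γ₁ < (1/2 - θ) / 2 - 1 / (2 * (p₀ : ℝ)))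
    (h5 : 1 / (2 * (p₀ : ℝ)) < γ₂) (h6 : γ₂ < (2 * θ) / 2 - 1 / (2 * (p₀ : ℝ)))
    (h7 : 2 * γ₁ + γ₂ = (γ₀ - 1) / (2 * (p₀ : ℝ))) :
    ∃ c : ℝ, 0 < c ∧
      ∀ (y₀ δ₁ δ₂ : ℝ), y₀ ∈ Icc (0:ℝ) 1 → 0 < δ₁ → 0 < δ₂ → y₀ + δ₂ ≤ 1 →
      let δ : ℝ := δ₁ ^ (1/2 : ℝ) + δ₂
      let Δb : ℝ := δ ^ 2
      let Δs : ℝ := min δ (1 - y₀)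
      ∀ (abar r : ℝ), 0 < abar → r ∈ Icc (0:ℝ) Δb →
      ∀ g : ℝ → ℝ → ℝ,
        ContinuousOn (fun q : ℝ × ℝ => g q.1 q.2) (Icc 0 Δb ×ˢ Icc y₀ (y₀ + Δs)) →
        (∀ x ∈ Icc y₀ (y₀ + Δs), g 0 x = 0) →
        ((∫⁻ t in Icc (0:ℝ) r, ∫⁻ s in Icc (0:ℝ) r,
            ENNReal.ofReal ((g t y₀ - g s y₀) ^ (2 * p₀) / |t - s| ^ (γ₀ / 2))) +
          (∫⁻ t in Icc (0:ℝ) r, ∫⁻ s in Icc (0:ℝ) r,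
            ∫⁻ x in Icc y₀ (y₀ + Δs), ∫⁻ y in Icc y₀ (y₀ + Δs),
            ENNReal.ofReal ((g t x + g s y - g t y - g s x) ^ (2 * p₀) /
              (|t - s| ^ (1 + 2 * (p₀ : ℝ) * γ₁) * |x - y| ^ (1 + 2 * (p₀ : ℝ) * γ₂)))) ≤
          ENNReal.ofReal (c * abar ^ (2 * p₀) * δ ^ (4 - γ₀))) →
        ∀ t ∈ Icc (0:ℝ) r, ∀ x ∈ Icc y₀ (y₀ + δ₂), |g t x| ≤ abar := by
  have hp2 : (0:ℝ) < (p₀:ℝ) := Nat.cast_pos.mpr hp₀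
  have h2pne : 2 * p₀ ≠ 0 := by positivity
  have hg1 : 1 < 2*(p₀:ℝ)*γ₁ := by
    have := (div_lt_iff₀ (by positivity : (0:ℝ) < 2*(p₀:ℝ))).mp h3
    linarith
  have hg2 : 1 < 2*(p₀:ℝ)*γ₂ := by
    have := (div_lt_iff₀ (by positivity : (0:ℝ) < 2*(p₀:ℝ))).mp h5
    linarith
  have ha₀ : 2 < γ₀/2 := by linarith
  have ha₁ : 2 < 1 + 2*(p₀:ℝ)*γ₁ := by linarith
  have ha₂ : 2 < 1 + 2*(p₀:ℝ)*γ₂ := by linarith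
  obtain ⟨C₀, hC₀, H₀⟩ := grr (γ₀/2) ha₀ p₀ hp₀
  obtain ⟨C₁, hC₁, H₁⟩ := grr (1 + 2*(p₀:ℝ)*γ₁) ha₁ p₀ hp₀
  obtain ⟨C₂, hC₂, H₂⟩ := grr (1 + 2*(p₀:ℝ)*γ₂) ha₂ p₀ hp₀
  have hpow2 : (0:ℝ) < 2^(2*p₀) := by positivity
  refine ⟨min (1/(C₀ * 2^(2*p₀))) (1/(C₁*C₂*2^(2*p₀))),
    lt_min (by positivity) (by positivity), ?_⟩
  set cfin : ℝ := min (1/(C₀ * 2^(2*p₀))) (1/(C₁*C₂*2^(2*p₀))) with hcfin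
  intro y₀ δ₁ δ₂ hy₀ hδ₁ hδ₂ hsum δ Δb Δs abar r habar hr g hg hg0 hY t ht x hx
  have hδdef : δ = δ₁ ^ ((1:ℝ)/2) + δ₂ := rfl
  have hΔbdef : Δb = δ^2 := rfl
  have hΔsdef : Δs = min δ (1 - y₀) := rfl
  have hδpos : 0 < δ := by
    rw [hδdef]
    exact add_pos (Real.rpow_pos_of_pos hδ₁ _) hδ₂
  have hy₀lt : y₀ < 1 := by linarith
  have hΔspos : 0 < Δs := lt_min hδpos (by linarith)
  have hΔsleδ : Δs ≤ δ := min_le_left _ _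
  have hδ₂Δs : δ₂ ≤ Δs := by
    refine le_min ?_ (by linarith)
    rw [hδdef]
    have := Real.rpow_nonneg hδ₁.le ((1:ℝ)/2)
    linarith
  have hr0 : 0 ≤ r := hr.1
  have hrΔb : r ≤ Δb := hr.2
  have hxX : x ∈ Icc y₀ (y₀ + Δs) := Icc_subset_Icc le_rfl (by linarith) hx
  have hy₀X : y₀ ∈ Icc y₀ (y₀ + Δs) := ⟨le_rfl, by linarith⟩
  rcases eq_or_lt_of_le hr0 with hre | hrpos
  · -- r = 0
    have ht0 : t = 0 := le_antisymm (by simpa [← hre] using ht.2) ht.1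
    rw [ht0, hg0 x hxX, abs_zero]
    exact habar.le
  -- r > 0
  have hTsub : Icc (0:ℝ) r ⊆ Icc 0 Δb := Icc_subset_Icc le_rfl hrΔb
  have hcont_t : ∀ z ∈ Icc y₀ (y₀ + Δs), ContinuousOn (fun τ => g τ z) (Icc (0:ℝ) r) := by
    intro z hz
    have hmap : ∀ τ ∈ Icc (0:ℝ) r, ((τ, z) : ℝ × ℝ) ∈ Icc (0:ℝ) Δb ×ˢ Icc y₀ (y₀ + Δs) :=
      fun τ hτ => ⟨hTsub hτ, hz⟩
    exact hg.comp ((continuous_id.prodMk continuous_const).continuousOn) hmap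
  have hcont_x : ∀ τ ∈ Icc (0:ℝ) r, ContinuousOn (fun z => g τ z) (Icc y₀ (y₀ + Δs)) := by
    intro τ hτ
    have hmap : ∀ z ∈ Icc y₀ (y₀ + Δs), ((τ, z) : ℝ × ℝ) ∈ Icc (0:ℝ) Δb ×ˢ Icc y₀ (y₀ + Δs) :=
      fun z hz => ⟨hTsub hτ, hz⟩
    exact hg.comp ((continuous_const.prodMk continuous_id).continuousOn) hmap
  set Aen : ℝ≥0∞ := ENNReal.ofReal (cfin * abar ^ (2 * p₀) * δ ^ (4 - γ₀)) with hAen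
  have hY₀ : (∫⁻ t in Icc (0:ℝ) r, ∫⁻ s in Icc (0:ℝ) r,
      ENNReal.ofReal ((g t y₀ - g s y₀) ^ (2 * p₀) / |t - s| ^ (γ₀ / 2))) ≤ Aen :=
    le_trans le_self_add hY
  have hY₁ : (∫⁻ t in Icc (0:ℝ) r, ∫⁻ s in Icc (0:ℝ) r,
      ∫⁻ x in Icc y₀ (y₀ + Δs), ∫⁻ y in Icc y₀ (y₀ + Δs),
      ENNReal.ofReal ((g t x + g s y - g t y - g s x) ^ (2 * p₀) /
        (|t - s| ^ (1 + 2 * (p₀ : ℝ) * γ₁) * |x - y| ^ (1 + 2 * (p₀ : ℝ) * γ₂)))) ≤ Aen :=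
    le_trans le_add_self hY
  have hEnn : ∀ z : ℝ, 0 ≤ z ^ (2*p₀) := fun z => Even.pow_nonneg (even_two_mul p₀) z
  have habarpow : (0:ℝ) ≤ abar ^ (2*p₀) := hEnn abar
  have hcpos : 0 < cfin := lt_min (by positivity) (by positivity)
  have hδrpow : ∀ y : ℝ, (0:ℝ) ≤ δ ^ y := fun y => (Real.rpow_pos_of_pos hδpos y).le
  -- Part A : temporal increments at y₀
  have hgty₀ : |g t y₀| ≤ abar / 2 := by
    have hA := H₀ 0 r hrpos (fun τ => g τ y₀) (hcont_t y₀ hy₀X) t ht 0 ⟨le_rfl, hr0⟩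
    simp only [hg0 y₀ hy₀X, sub_zero] at hA
    have hsum0 : (4 - γ₀) + 2*(γ₀/2 - 2) = 0 := by ring
    have hδid : δ^(4-γ₀) * (δ^2)^(γ₀/2 - 2) = 1 := by
      have h1 : δ^(4-γ₀) * (δ^2)^(γ₀/2 - 2) = δ^((4-γ₀) + 2*(γ₀/2 - 2)) := by
        rw [← Real.rpow_natCast δ 2, ← Real.rpow_mul hδpos.le, ← Real.rpow_add hδpos]
        try congr 1
        try push_cast
        try ring
      rw [h1, hsum0, Real.rpow_zero]
    have hreal : C₀ * (cfin * abar ^ (2*p₀) * δ^(4-γ₀)) * r^(γ₀/2 - 2) ≤ (abar/2)^(2*p₀) := by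
      have he₀ : (0:ℝ) ≤ γ₀/2 - 2 := by linarith
      have hrle : r^(γ₀/2-2) ≤ (δ^2)^(γ₀/2-2) :=
        Real.rpow_le_rpow hr0 (by rw [← hΔbdef]; exact hrΔb) he₀
      have hcc : C₀ * cfin ≤ 1/2^(2*p₀) := by
        have h := min_le_left (1/(C₀ * 2^(2*p₀))) (1/(C₁*C₂*2^(2*p₀)))
        calc C₀ * cfin ≤ C₀ * (1/(C₀*2^(2*p₀))) := mul_le_mul_of_nonneg_left h hC₀.le
          _ = 1/2^(2*p₀) := by field_simp
      calc C₀ * (cfin * abar ^ (2*p₀) * δ^(4-γ₀)) * r^(γ₀/2 - 2)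
          ≤ C₀ * (cfin * abar ^ (2*p₀) * δ^(4-γ₀)) * (δ^2)^(γ₀/2 - 2) := by
            refine mul_le_mul_of_nonneg_left hrle (by positivity)
        _ = (C₀ * cfin) * abar ^ (2*p₀) * (δ^(4-γ₀) * (δ^2)^(γ₀/2 - 2)) := by ring
        _ = (C₀ * cfin) * abar ^ (2*p₀) := by rw [hδid, mul_one]
        _ ≤ (1/2^(2*p₀)) * abar ^ (2*p₀) := mul_le_mul_of_nonneg_right hcc habarpow
        _ = (abar/2)^(2*p₀) := by rw [div_pow]; ring
    have hchain : ENNReal.ofReal ((g t y₀)^(2*p₀)) ≤ ENNReal.ofReal ((abar/2)^(2*p₀)) := by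
      refine le_trans hA (le_trans (mul_le_mul_left (mul_le_mul_right hY₀ _) _) ?_)
      rw [hAen, ← ENNReal.ofReal_mul hC₀.le,
        ← ENNReal.ofReal_mul (by positivity)]
      exact ENNReal.ofReal_le_ofReal hreal
    rw [ENNReal.ofReal_le_ofReal_iff (by positivity)] at hchain
    have habs : |g t y₀|^(2*p₀) ≤ (abar/2)^(2*p₀) := by
      rw [Even.pow_abs (even_two_mul p₀)]; exact hchain
    exact le_of_pow_le_pow_left₀ h2pne (by positivity) habs
  -- Part B : rectangular increments
  set G : ℝ → ℝ → ℝ≥0∞ := fun τ σ' => ∫⁻ z in Icc y₀ (y₀+Δs), ∫⁻ w in Icc y₀ (y₀+Δs),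
    ENNReal.ofReal ((g τ z + g σ' w - g τ w - g σ' z) ^ (2 * p₀) /
      |z - w| ^ (1 + 2*(p₀:ℝ)*γ₂)) with hG
  have stage1 : ∀ τ ∈ Icc (0:ℝ) r, ∀ σ' ∈ Icc (0:ℝ) r,
      ENNReal.ofReal (((g τ x - g τ y₀) - (g σ' x - g σ' y₀)) ^ (2*p₀)) ≤
      ENNReal.ofReal C₂ * G τ σ' * ENNReal.ofReal (Δs ^ ((1 + 2*(p₀:ℝ)*γ₂) - 2)) := by
    intro τ hτ σ' hσ'
    have hψc : ContinuousOn (fun w => g τ w - g σ' w) (Icc y₀ (y₀+Δs)) :=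
      (hcont_x τ hτ).sub (hcont_x σ' hσ')
    have h := H₂ y₀ (y₀+Δs) (by linarith) (fun w => g τ w - g σ' w) hψc x hxX y₀ hy₀X
    rw [add_sub_cancel_left] at h
    have hBeq : (∫⁻ z in Icc y₀ (y₀+Δs), ∫⁻ w in Icc y₀ (y₀+Δs),
        ENNReal.ofReal (((g τ z - g σ' z) - (g τ w - g σ' w)) ^ (2*p₀) /
          |z - w| ^ (1 + 2*(p₀:ℝ)*γ₂))) = G τ σ' := by
      rw [hG]
      refine lintegral_congr fun z => lintegral_congr fun w => ?_
      have hb : (g τ z - g σ' z) - (g τ w - g σ' w) = g τ z + g σ' w - g τ w - g σ' z := by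
        ring
      rw [hb]
    calc ENNReal.ofReal (((g τ x - g τ y₀) - (g σ' x - g σ' y₀)) ^ (2*p₀))
        = ENNReal.ofReal (((g τ x - g σ' x) - (g τ y₀ - g σ' y₀)) ^ (2*p₀)) := by
          congr 2; ring
      _ ≤ ENNReal.ofReal C₂ * (∫⁻ z in Icc y₀ (y₀+Δs), ∫⁻ w in Icc y₀ (y₀+Δs),
            ENNReal.ofReal (((g τ z - g σ' z) - (g τ w - g σ' w)) ^ (2*p₀) /
              |z - w| ^ (1 + 2*(p₀:ℝ)*γ₂))) *
            ENNReal.ofReal (Δs ^ ((1 + 2*(p₀:ℝ)*γ₂) - 2)) := h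
      _ = ENNReal.ofReal C₂ * G τ σ' * ENNReal.ofReal (Δs ^ ((1 + 2*(p₀:ℝ)*γ₂) - 2)) := by
          rw [hBeq]
  set fx : ℝ → ℝ := fun τ => g τ x - g τ y₀ with hfx
  set W : ℝ≥0∞ := ∫⁻ τ in Icc (0:ℝ) r, ∫⁻ σ' in Icc (0:ℝ) r,
    ENNReal.ofReal ((fx τ - fx σ') ^ (2*p₀) / |τ - σ'| ^ (1 + 2*(p₀:ℝ)*γ₁)) with hW
  have hane : ∀ τ : ℝ, ∀ᵐ σ' ∂(volume.restrict (Icc (0:ℝ) r)), σ' ≠ τ := by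
    intro τ
    refine Filter.Eventually.filter_mono (MeasureTheory.ae_mono Measure.restrict_le_self) ?_
    refine ae_iff.mpr ?_
    have hset : {σ' : ℝ | ¬ σ' ≠ τ} = {τ} := by ext z; simp
    rw [hset]
    exact Real.volume_singleton
  set Cfac : ℝ≥0∞ := ENNReal.ofReal C₂ * ENNReal.ofReal (Δs ^ ((1 + 2*(p₀:ℝ)*γ₂) - 2))
    with hCfac
  have hCfacne : Cfac ≠ ⊤ := ENNReal.mul_ne_top ENNReal.ofReal_ne_top ENNReal.ofReal_ne_top
  have hWle : W ≤ Cfac * (∫⁻ t in Icc (0:ℝ) r, ∫⁻ s in Icc (0:ℝ) r,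
      ∫⁻ x in Icc y₀ (y₀ + Δs), ∫⁻ y in Icc y₀ (y₀ + Δs),
      ENNReal.ofReal ((g t x + g s y - g t y - g s x) ^ (2 * p₀) /
        (|t - s| ^ (1 + 2 * (p₀ : ℝ) * γ₁) * |x - y| ^ (1 + 2 * (p₀ : ℝ) * γ₂)))) := by
    have step1 : W ≤ ∫⁻ τ in Icc (0:ℝ) r, ∫⁻ σ' in Icc (0:ℝ) r,
        Cfac * (G τ σ' * ENNReal.ofReal ((|τ - σ'| ^ (1 + 2*(p₀:ℝ)*γ₁))⁻¹)) := by
      rw [hW]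
      refine lintegral_mono_ae ?_
      filter_upwards [ae_restrict_mem measurableSet_Icc] with τ hτ
      refine lintegral_mono_ae ?_
      filter_upwards [hane τ, ae_restrict_mem measurableSet_Icc] with σ' hne hσ'
      calc ENNReal.ofReal ((fx τ - fx σ') ^ (2*p₀) / |τ - σ'| ^ (1 + 2*(p₀:ℝ)*γ₁))
          = ENNReal.ofReal ((fx τ - fx σ') ^ (2*p₀)) *
            ENNReal.ofReal ((|τ - σ'| ^ (1 + 2*(p₀:ℝ)*γ₁))⁻¹) := by
            rw [div_eq_mul_inv, ENNReal.ofReal_mul (hEnn _)]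
        _ ≤ (ENNReal.ofReal C₂ * G τ σ' *
              ENNReal.ofReal (Δs ^ ((1 + 2*(p₀:ℝ)*γ₂) - 2))) *
            ENNReal.ofReal ((|τ - σ'| ^ (1 + 2*(p₀:ℝ)*γ₁))⁻¹) :=
            mul_le_mul_left (stage1 τ hτ σ' hσ') _
        _ = Cfac * (G τ σ' * ENNReal.ofReal ((|τ - σ'| ^ (1 + 2*(p₀:ℝ)*γ₁))⁻¹)) := by
            rw [hCfac]; ring
    refine le_trans step1 ?_
    have step2 : (∫⁻ τ in Icc (0:ℝ) r, ∫⁻ σ' in Icc (0:ℝ) r,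
        Cfac * (G τ σ' * ENNReal.ofReal ((|τ - σ'| ^ (1 + 2*(p₀:ℝ)*γ₁))⁻¹))) =
        Cfac * ∫⁻ τ in Icc (0:ℝ) r, ∫⁻ σ' in Icc (0:ℝ) r,
        G τ σ' * ENNReal.ofReal ((|τ - σ'| ^ (1 + 2*(p₀:ℝ)*γ₁))⁻¹) := by
      rw [← lintegral_const_mul' _ _ hCfacne]
      exact lintegral_congr fun τ => lintegral_const_mul' _ _ hCfacne
    rw [step2]
    refine mul_le_mul_right (le_of_eq ?_) _
    refine lintegral_congr fun τ => ?_
    refine lintegral_congr_ae ?_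
    filter_upwards [hane τ] with σ' hne
    have hKnn : ∀ z w : ℝ, (0:ℝ) ≤ (g τ z + g σ' w - g τ w - g σ' z) ^ (2 * p₀) /
        |z - w| ^ (1 + 2*(p₀:ℝ)*γ₂) :=
      fun z w => div_nonneg (hEnn _) (Real.rpow_nonneg (abs_nonneg _) _)
    rw [hG]
    rw [← lintegral_mul_const' _ _ ENNReal.ofReal_ne_top]
    refine lintegral_congr fun z => ?_
    rw [← lintegral_mul_const' _ _ ENNReal.ofReal_ne_top]
    refine lintegral_congr fun w => ?_
    rw [← ENNReal.ofReal_mul (hKnn z w)]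
    congr 1
    rw [div_eq_mul_inv, div_eq_mul_inv, mul_inv]
    ring
  -- stage 2
  have hfx0 : fx 0 = 0 := by
    show g 0 x - g 0 y₀ = 0
    rw [hg0 x hxX, hg0 y₀ hy₀X, sub_zero]
  have hfxc : ContinuousOn fx (Icc (0:ℝ) r) := (hcont_t x hxX).sub (hcont_t y₀ hy₀X)
  have hB := H₁ 0 r hrpos fx hfxc t ht 0 ⟨le_rfl, hr0⟩
  rw [hfx0, sub_zero, sub_zero, ← hW] at hB
  have hfxt : |fx t| ≤ abar / 2 := by
    have hsum0 : (4 - γ₀) + ((1 + 2*(p₀:ℝ)*γ₂) - 2) + 2*((1 + 2*(p₀:ℝ)*γ₁) - 2) = 0 := by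
      have h7' : (2*γ₁ + γ₂) * (2*(p₀:ℝ)) = γ₀ - 1 := by
        rw [h7]; field_simp
      linear_combination h7'
    have hδid2 : δ^(4-γ₀) * Δs^((1 + 2*(p₀:ℝ)*γ₂) - 2) * r^((1 + 2*(p₀:ℝ)*γ₁) - 2) ≤ 1 := by
      have hb1 : Δs^((1 + 2*(p₀:ℝ)*γ₂) - 2) ≤ δ^((1 + 2*(p₀:ℝ)*γ₂) - 2) :=
        Real.rpow_le_rpow hΔspos.le hΔsleδ (by linarith)
      have hb2 : r^((1 + 2*(p₀:ℝ)*γ₁) - 2) ≤ (δ^2)^((1 + 2*(p₀:ℝ)*γ₁) - 2) :=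
        Real.rpow_le_rpow hr0 (by rw [← hΔbdef]; exact hrΔb) (by linarith)
      have heq1 : δ^(4-γ₀) * δ^((1 + 2*(p₀:ℝ)*γ₂) - 2) * (δ^2)^((1 + 2*(p₀:ℝ)*γ₁) - 2)
          = 1 := by
        have h1 : δ^(4-γ₀) * δ^((1 + 2*(p₀:ℝ)*γ₂) - 2) * (δ^2)^((1 + 2*(p₀:ℝ)*γ₁) - 2) =
            δ^((4 - γ₀) + ((1 + 2*(p₀:ℝ)*γ₂) - 2) + 2*((1 + 2*(p₀:ℝ)*γ₁) - 2)) := by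
          rw [← Real.rpow_natCast δ 2, ← Real.rpow_mul hδpos.le, ← Real.rpow_add hδpos,
            ← Real.rpow_add hδpos]
          try congr 1
          try push_cast
          try ring
        rw [h1, hsum0, Real.rpow_zero]
      calc δ^(4-γ₀) * Δs^((1 + 2*(p₀:ℝ)*γ₂) - 2) * r^((1 + 2*(p₀:ℝ)*γ₁) - 2)
          ≤ δ^(4-γ₀) * δ^((1 + 2*(p₀:ℝ)*γ₂) - 2) * (δ^2)^((1 + 2*(p₀:ℝ)*γ₁) - 2) := by
            refine mul_le_mul (mul_le_mul_of_nonneg_left hb1 (hδrpow _)) hb2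
              (Real.rpow_nonneg hr0 _) (by positivity)
        _ = 1 := heq1
    have hreal2 : C₁ * (C₂ * Δs^((1 + 2*(p₀:ℝ)*γ₂) - 2) *
        (cfin * abar ^ (2*p₀) * δ^(4-γ₀))) * r^((1 + 2*(p₀:ℝ)*γ₁) - 2) ≤
        (abar/2)^(2*p₀) := by
      have hcc : C₁ * C₂ * cfin ≤ 1/2^(2*p₀) := by
        have h := min_le_right (1/(C₀ * 2^(2*p₀))) (1/(C₁*C₂*2^(2*p₀)))
        calc C₁ * C₂ * cfin ≤ C₁ * C₂ * (1/(C₁*C₂*2^(2*p₀))) :=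
              mul_le_mul_of_nonneg_left h (by positivity)
          _ = 1/2^(2*p₀) := by field_simp
      have hΔsnn : (0:ℝ) ≤ Δs^((1 + 2*(p₀:ℝ)*γ₂) - 2) := Real.rpow_nonneg hΔspos.le _
      have hrnn : (0:ℝ) ≤ r^((1 + 2*(p₀:ℝ)*γ₁) - 2) := Real.rpow_nonneg hr0 _
      calc C₁ * (C₂ * Δs^((1 + 2*(p₀:ℝ)*γ₂) - 2) * (cfin * abar ^ (2*p₀) * δ^(4-γ₀))) *
            r^((1 + 2*(p₀:ℝ)*γ₁) - 2)
          = (C₁ * C₂ * cfin) * abar ^ (2*p₀) *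
            (δ^(4-γ₀) * Δs^((1 + 2*(p₀:ℝ)*γ₂) - 2) * r^((1 + 2*(p₀:ℝ)*γ₁) - 2)) := by ring
        _ ≤ (C₁ * C₂ * cfin) * abar ^ (2*p₀) * 1 := by
            refine mul_le_mul_of_nonneg_left hδid2 (by positivity)
        _ = (C₁ * C₂ * cfin) * abar ^ (2*p₀) := by rw [mul_one]
        _ ≤ (1/2^(2*p₀)) * abar ^ (2*p₀) := mul_le_mul_of_nonneg_right hcc habarpow
        _ = (abar/2)^(2*p₀) := by rw [div_pow]; ring
    have hchain2 : ENNReal.ofReal ((fx t)^(2*p₀)) ≤ ENNReal.ofReal ((abar/2)^(2*p₀)) := by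
      refine le_trans hB ?_
      have s1 : ENNReal.ofReal C₁ * W * ENNReal.ofReal (r^((1 + 2*(p₀:ℝ)*γ₁) - 2)) ≤
          ENNReal.ofReal C₁ * (Cfac * Aen) * ENNReal.ofReal (r^((1 + 2*(p₀:ℝ)*γ₁) - 2)) :=
        mul_le_mul_left (mul_le_mul_right
          (le_trans hWle (mul_le_mul_right hY₁ _)) _) _
      refine le_trans s1 ?_
      rw [hCfac, hAen, ← ENNReal.ofReal_mul hC₂.le,
        ← ENNReal.ofReal_mul (by positivity),
        ← ENNReal.ofReal_mul hC₁.le,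
        ← ENNReal.ofReal_mul (by positivity)]
      exact ENNReal.ofReal_le_ofReal hreal2
    rw [ENNReal.ofReal_le_ofReal_iff (by positivity)] at hchain2
    have habs : |fx t|^(2*p₀) ≤ (abar/2)^(2*p₀) := by
      rw [Even.pow_abs (even_two_mul p₀)]; exact hchain2
    exact le_of_pow_le_pow_left₀ h2pne (by positivity) habs
  have hdecomp : g t x = g t y₀ + fx t := by
    show g t x = g t y₀ + (g t x - g t y₀)
    ring
  calc |g t x| = |g t y₀ + fx t| := by rw [hdecomp]
    _ ≤ |g t y₀| + |fx t| := abs_add_le _ _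
    _ ≤ abar/2 + abar/2 := add_le_add hgty₀ hfxt
    _ = abar := by ring
end
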